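/- arXiv:2602.24093 — 10 statements merged into one kernel-verified Lean document; each statement's English description precedes it below -/
import Mathlib

section
/- Let Ω be an open bounded convex subset of ℝⁿ, u its first Dirichlet Laplacian eigenfunction normalized so that max_{cl Ω} u = 1. For every κ ∈ (0,1) let w_κ := (−log(κu))^{1/2} on Ω and let (w_κ)** denote its convex envelope in Ω. Then there exists ū_κ ∈ (0,1), with ū_κ → 1 as κ → 1⁻, such that the set Ω_κ := {x ∈ Ω : u(x) > ū_κ} is a nonempty convex subset of Ω on which w_κ = (w_κ)**. In particular, L_{1/2}(κ·u((1−t)x + t y)) ≥ (1−t)·L_{1/2}(κ·u(x)) + t·L_{1/2}(κ·u(y)) for all x, y ∈ Ω_κ and t ∈ [0,1], where L_{1/2}(s) := −(−log s)^{1/2}. -/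
open Real Set Metric Filter Matrix

/-- The Laplacian of a function `f : ℝⁿ → ℝ` at a point `x`. -/
noncomputable def lap {n : ℕ} (f : EuclideanSpace ℝ (Fin n) → ℝ)
    (x : EuclideanSpace ℝ (Fin n)) : ℝ :=
  ∑ i, fderiv ℝ (fun y => fderiv ℝ f y (EuclideanSpace.single i 1)) x (EuclideanSpace.single i 1)

/-- The convex envelope of `w` in `Ω`:
`w**(x) = inf { Σ tᵢ w(xᵢ) : tᵢ ≥ 0, xᵢ ∈ Ω, Σ tᵢ = 1, Σ tᵢ xᵢ = x }`. -/
noncomputable def convEnv {n : ℕ} (Ω : Set (EuclideanSpace ℝ (Fin n)))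
    (w : EuclideanSpace ℝ (Fin n) → ℝ) (x : EuclideanSpace ℝ (Fin n)) : ℝ :=
  sInf {r : ℝ | ∃ (m : ℕ) (t : Fin m → ℝ) (q : Fin m → EuclideanSpace ℝ (Fin n)),
    (∀ i, 0 ≤ t i) ∧ (∀ i, q i ∈ Ω) ∧ ∑ i, t i = 1 ∧ ∑ i, t i • q i = x ∧
    r = ∑ i, t i * w (q i)}

/-- The Hessian matrix of `f : ℝⁿ → ℝ` at `x`. -/
noncomputable def hessianMatrix {n : ℕ} (f : EuclideanSpace ℝ (Fin n) → ℝ)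
    (x : EuclideanSpace ℝ (Fin n)) : Matrix (Fin n) (Fin n) ℝ :=
  Matrix.of fun i j =>
    fderiv ℝ (fun y => fderiv ℝ f y (EuclideanSpace.single j 1)) x (EuclideanSpace.single i 1)

/-- `(p, A)` belongs to the second-order subjet `J^{2,-} v (x)` (relative to `Ω`):
there is a smooth `φ` on `ℝⁿ` such that `v - φ` has a local minimum at `x` in `Ω` and
`(p, A) = (∇φ(x), ∇²φ(x))`. -/
def InSubjet {n : ℕ} (Ω : Set (EuclideanSpace ℝ (Fin n))) (v : EuclideanSpace ℝ (Fin n) → ℝ)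
    (x : EuclideanSpace ℝ (Fin n)) (p : EuclideanSpace ℝ (Fin n))
    (A : Matrix (Fin n) (Fin n) ℝ) : Prop :=
  ∃ φ : EuclideanSpace ℝ (Fin n) → ℝ, ContDiff ℝ (⊤ : ℕ∞) φ ∧
    (∃ ε > 0, ∀ y ∈ Ω, ‖y - x‖ < ε → v x - φ x ≤ v y - φ y) ∧
    p = gradient φ x ∧ A = hessianMatrix φ x

set_option maxHeartbeats 2000000 in
/-- **Theorem 1.2 (local (1/2)-logconcavity near the maximum point).**
Let `Ω ⊂ ℝⁿ` be open bounded convex, `u` its first Dirichlet eigenfunction normalized so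
that `max_{cl Ω} u = 1` (positive, vanishing on `∂Ω`, eigenvalue `lam > 0`, logconcave by
Brascamp–Lieb, and satisfying the Andrews–Clutterbuck inequality). For `κ ∈ (0,1)` set
`w_κ := (-log(κu))^{1/2}` with convex envelope `(w_κ)**` in `Ω`. Then there exists
`ū_κ ∈ (0,1)` with `ū_κ → 1` as `κ → 1⁻` such that `Ω_κ := {x ∈ Ω : u(x) > ū_κ}` is a
nonempty convex set on which `w_κ = (w_κ)**`; in particular the `(1/2)`-logconcavity
inequality holds for all `x, y ∈ Ω_κ` and `t ∈ [0,1]`. -/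
theorem ground_state_local_half_logconcave {n : ℕ}
    (Ω : Set (EuclideanSpace ℝ (Fin n))) (u : EuclideanSpace ℝ (Fin n) → ℝ) (lam : ℝ)
    (hΩo : IsOpen Ω) (hΩb : Bornology.IsBounded Ω) (hΩc : Convex ℝ Ω) (hΩne : Ω.Nonempty)
    (hu2 : ContDiffOn ℝ 2 u Ω) (huc : ContinuousOn u (closure Ω))
    (hupos : ∀ x ∈ Ω, 0 < u x) (hubd : ∀ x ∈ frontier Ω, u x = 0)
    (hlam : 0 < lam) (heig : ∀ x ∈ Ω, -lap u x = lam * u x)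
    (humax : ∀ x ∈ closure Ω, u x ≤ 1) (huone : ∃ x ∈ closure Ω, u x = 1)
    (hlogconc : ConvexOn ℝ Ω (fun x => -Real.log (u x)))
    (hAC : ∀ z ∈ Ω, ∀ y ∈ Ω, z ≠ y →
      (inner ℝ (gradient (fun p => -Real.log (u p)) z - gradient (fun p => -Real.log (u p)) y)
          (‖z - y‖⁻¹ • (z - y)) : ℝ) ≥
        (2 * Real.pi / Metric.diam Ω) *
          Real.tan (Real.pi * ‖z - y‖ / (2 * Metric.diam Ω))) :
    ∃ ubar : ℝ → ℝ,
      (∀ κ ∈ Set.Ioo (0 : ℝ) 1, ubar κ ∈ Set.Ioo (0 : ℝ) 1) ∧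
      Filter.Tendsto ubar (nhdsWithin 1 (Set.Iio 1)) (nhds 1) ∧
      ∀ κ ∈ Set.Ioo (0 : ℝ) 1,
        ({x ∈ Ω | u x > ubar κ}).Nonempty ∧
        Convex ℝ {x ∈ Ω | u x > ubar κ} ∧
        (∀ x ∈ {x ∈ Ω | u x > ubar κ},
          Real.sqrt (-Real.log (κ * u x)) =
            convEnv Ω (fun z => Real.sqrt (-Real.log (κ * u z))) x) ∧
        ∀ x ∈ {x ∈ Ω | u x > ubar κ}, ∀ y ∈ {x ∈ Ω | u x > ubar κ},
          ∀ t ∈ Set.Icc (0 : ℝ) 1,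
            -Real.sqrt (-Real.log (κ * u ((1 - t) • x + t • y))) ≥
              (1 - t) * (-Real.sqrt (-Real.log (κ * u x))) +
                t * (-Real.sqrt (-Real.log (κ * u y))) := by
  classical
  set v : EuclideanSpace ℝ (Fin n) → ℝ := fun p => -Real.log (u p) with hvdef
  -- the maximum point lies in Ω
  obtain ⟨x₀, hx₀c, hx₀1⟩ := huone
  have hx₀ : x₀ ∈ Ω := by
    by_contra hn
    have hfr : x₀ ∈ frontier Ω := by
      rw [frontier_eq_closure_inter_closure]
      refine ⟨hx₀c, ?_⟩
      rw [← hΩo.interior_eq] at hn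
      rw [closure_compl]
      exact hn
    have := hubd x₀ hfr
    rw [this] at hx₀1
    norm_num at hx₀1
  have hvx₀ : v x₀ = 0 := by simp [hvdef, hx₀1]
  have hvnonneg : ∀ x ∈ Ω, 0 ≤ v x := by
    intro x hx
    have h1 := humax x (subset_closure hx)
    have h2 := hupos x hx
    have := Real.log_nonpos h2.le h1
    simp only [hvdef]
    linarith
  -- differentiability of v on Ω
  have hdiffv : ∀ x ∈ Ω, DifferentiableAt ℝ v x := by
    intro x hx
    have hu' : DifferentiableAt ℝ u x :=
      ((hu2.contDiffAt (hΩo.mem_nhds hx)).differentiableAt two_ne_zero)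
    exact (hu'.log (hupos x hx).ne').neg
  have hgrad : ∀ (f : EuclideanSpace ℝ (Fin n) → ℝ) (x w : EuclideanSpace ℝ (Fin n)), (inner ℝ (gradient f x) w : ℝ) = fderiv ℝ f x w := by
    intro f x w
    have : gradient f x = (InnerProductSpace.toDual ℝ _).symm (fderiv ℝ f x) := rfl
    rw [this]
    exact InnerProductSpace.toDual_symm_apply
  -- diameter facts: case split on Ω being a single point
  rcases Set.subsingleton_or_nontrivial Ω with hsing | hnontriv
  · -- degenerate case: Ω is a singleton
    refine ⟨fun κ => Real.exp (κ - 1), ?_, ?_, ?_⟩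
    · intro κ hκ
      exact ⟨Real.exp_pos _, Real.exp_lt_one_iff.mpr (by linarith [hκ.2])⟩
    · have hcont : Continuous (fun κ : ℝ => Real.exp (κ - 1)) := by continuity
      have : Filter.Tendsto (fun κ : ℝ => Real.exp (κ - 1)) (nhds 1) (nhds 1) := by
        simpa using hcont.tendsto (1 : ℝ)
      exact this.mono_left nhdsWithin_le_nhds
    · intro κ hκ
      have hΩeq : Ω = {x₀} := hsing.eq_singleton_of_mem hx₀
      have hub : Real.exp (κ - 1) < 1 := Real.exp_lt_one_iff.mpr (by linarith [hκ.2])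
      have hmemset : ∀ x, x ∈ {x ∈ Ω | u x > Real.exp (κ - 1)} ↔ x = x₀ := by
        intro x
        constructor
        · intro hx; exact hsing hx.1 hx₀
        · rintro rfl; exact ⟨hx₀, by rw [hx₀1]; exact hub⟩
      refine ⟨⟨x₀, (hmemset x₀).mpr rfl⟩, ?_, ?_, ?_⟩
      · intro a ha b hb s t hs ht hst
        rw [hmemset] at ha hb ⊢
        rw [ha, hb]
        rw [← add_smul, hst, one_smul]
      · intro x hx
        rw [hmemset] at hx
        rw [hx]
        set w : EuclideanSpace ℝ (Fin n) → ℝ := fun z => Real.sqrt (-Real.log (κ * u z)) with hwdef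
        have hS : {r : ℝ | ∃ (m : ℕ) (t : Fin m → ℝ) (q : Fin m → EuclideanSpace ℝ (Fin n)),
            (∀ i, 0 ≤ t i) ∧ (∀ i, q i ∈ Ω) ∧ ∑ i, t i = 1 ∧ ∑ i, t i • q i = x₀ ∧
            r = ∑ i, t i * w (q i)} = {w x₀} := by
          apply Set.eq_singleton_iff_unique_mem.mpr
          constructor
          · exact ⟨1, fun _ => 1, fun _ => x₀, fun _ => zero_le_one, fun _ => hx₀,
              by simp, by simp, by simp⟩
          · rintro r ⟨m, t, q, htn, hqΩ, hts, hqs, rfl⟩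
            have hq : ∀ i, q i = x₀ := fun i => hsing (hqΩ i) hx₀
            calc ∑ i, t i * w (q i) = ∑ i, t i * w x₀ := by
                  apply Finset.sum_congr rfl; intro i _; rw [hq i]
              _ = (∑ i, t i) * w x₀ := by rw [Finset.sum_mul]
              _ = w x₀ := by rw [hts, one_mul]
        rw [convEnv, hS, csInf_singleton]
      · intro x hx y hy t ht
        rw [hmemset] at hx hy
        rw [hx, hy]
        have : (1 - t) • x₀ + t • x₀ = x₀ := by rw [← add_smul]; ring_nf; rw [one_smul]
        rw [this]
        have : (1 - t) * -Real.sqrt (-Real.log (κ * u x₀)) + t * -Real.sqrt (-Real.log (κ * u x₀))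
            = -Real.sqrt (-Real.log (κ * u x₀)) := by ring
        rw [this]
  -- main case: Ω has at least two points
  have hD : 0 < diam Ω := by
    obtain ⟨a, ha, b, hb, hab⟩ := hnontriv
    have := dist_le_diam_of_mem hΩb ha hb
    have h2 : 0 < dist a b := dist_pos.mpr hab
    linarith
  set c : ℝ := π ^ 2 / diam Ω ^ 2 with hcdef
  have hc : 0 < c := by positivity
  -- strict diameter bound for points of the open set
  have hdistlt : ∀ z ∈ Ω, ∀ y ∈ Ω, z ≠ y → ‖z - y‖ < diam Ω := by
    intro z hz y hy hne
    obtain ⟨r, hr, hball⟩ := Metric.isOpen_iff.1 hΩo z hz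
    have hzy : z - y ≠ 0 := sub_ne_zero.mpr hne
    have hd0 : 0 < ‖z - y‖ := norm_pos_iff.mpr hzy
    set e1 : EuclideanSpace ℝ (Fin n) := ‖z - y‖⁻¹ • (z - y) with he1def
    have he1 : ‖e1‖ = 1 := norm_smul_inv_norm hzy
    set z' : EuclideanSpace ℝ (Fin n) := z + (r / 2) • e1 with hz'def
    have hz' : z' ∈ Ω := by
      apply hball
      rw [mem_ball, dist_eq_norm]
      have : z' - z = (r / 2) • e1 := by rw [hz'def]; abel
      rw [this, norm_smul, Real.norm_eq_abs, abs_of_pos (by linarith), he1]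
      linarith
    have hd2 : ‖z' - y‖ = ‖z - y‖ + r / 2 := by
      have h1 : z' - y = (1 + (r / 2) * ‖z - y‖⁻¹) • (z - y) := by
        rw [hz'def, he1def, smul_smul, add_smul, one_smul]
        abel
      rw [h1, norm_smul, Real.norm_eq_abs, abs_of_pos (by positivity)]
      field_simp
    have := dist_le_diam_of_mem hΩb hz' hy
    rw [dist_eq_norm, hd2] at this
    linarith
  -- strong monotonicity of the gradient
  have hSC : ∀ z ∈ Ω, ∀ y ∈ Ω,
      c * ‖z - y‖ ^ 2 ≤ (inner ℝ (gradient v z - gradient v y) (z - y) : ℝ) := by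
    intro z hz y hy
    rcases eq_or_ne z y with rfl | hne
    · simp
    · have hd0 : 0 < ‖z - y‖ := norm_pos_iff.mpr (sub_ne_zero.mpr hne)
      have hdD := hdistlt z hz y hy hne
      have hAC' := hAC z hz y hy hne
      rw [real_inner_smul_right] at hAC'
      set I : ℝ := (inner ℝ (gradient v z - gradient v y) (z - y) : ℝ) with hIdef
      have htan : π * ‖z - y‖ / (2 * diam Ω) ≤ Real.tan (π * ‖z - y‖ / (2 * diam Ω)) := by
        apply le_of_lt
        apply Real.lt_tan (by positivity)
        rw [div_lt_iff₀ (by positivity)]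
        have := Real.pi_pos
        nlinarith
      have h3 : π ^ 2 * ‖z - y‖ / diam Ω ^ 2 ≤ ‖z - y‖⁻¹ * I := by
        calc π ^ 2 * ‖z - y‖ / diam Ω ^ 2
            = (2 * π / diam Ω) * (π * ‖z - y‖ / (2 * diam Ω)) := by
              field_simp
          _ ≤ (2 * π / diam Ω) * Real.tan (π * ‖z - y‖ / (2 * diam Ω)) := by
              apply mul_le_mul_of_nonneg_left htan
              positivity
          _ ≤ ‖z - y‖⁻¹ * I := hAC'
      have h4 := mul_le_mul_of_nonneg_left h3 hd0.le
      have h5 : ‖z - y‖ * (‖z - y‖⁻¹ * I) = I := by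
        field_simp
      rw [h5] at h4
      calc c * ‖z - y‖ ^ 2 = ‖z - y‖ * (π ^ 2 * ‖z - y‖ / diam Ω ^ 2) := by
            rw [hcdef]; field_simp
        _ ≤ I := h4
  -- quadratic lower bound (strong convexity inequality)
  have hB : ∀ y ∈ Ω, ∀ z ∈ Ω,
      v y + (inner ℝ (gradient v y) (z - y) : ℝ) + c / 2 * ‖z - y‖ ^ 2 ≤ v z := by
    intro y hy z hz
    set ι : ℝ := (inner ℝ (gradient v y) (z - y) : ℝ) with hιdef
    set d2 : ℝ := ‖z - y‖ ^ 2 with hd2def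
    set γ : ℝ → EuclideanSpace ℝ (Fin n) := fun s => y + s • (z - y) with hγdef
    have hγmem : ∀ s ∈ Icc (0:ℝ) 1, γ s ∈ Ω := by
      intro s hs
      have h1 : γ s = (1 - s) • y + s • z := by
        simp only [hγdef]
        module
      rw [h1]
      exact hΩc hy hz (by linarith [hs.2]) hs.1 (by ring)
    have hder : ∀ s ∈ Icc (0:ℝ) 1,
        HasDerivAt (fun r => v (γ r)) (fderiv ℝ v (γ s) (z - y)) s := by
      intro s hs
      have hpath : HasDerivAt γ (z - y) s := by
        have := ((hasDerivAt_id s).smul_const (z - y)).const_add y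
        rw [one_smul] at this
        exact this
      exact ((hdiffv (γ s) (hγmem s hs)).hasFDerivAt).comp_hasDerivAt s hpath
    set φ : ℝ → ℝ := fun s => v (γ s) - s * ι - c / 2 * (s ^ 2 * d2) with hφdef
    have hφder : ∀ s ∈ Icc (0:ℝ) 1,
        HasDerivAt φ (fderiv ℝ v (γ s) (z - y) - ι - c / 2 * (2 * s * d2)) s := by
      intro s hs
      have h1 := hder s hs
      have h2 : HasDerivAt (fun r : ℝ => r * ι) ι s := by
        simpa using (hasDerivAt_id s).mul_const ι
      have h3 : HasDerivAt (fun r : ℝ => c / 2 * (r ^ 2 * d2)) (c / 2 * (2 * s * d2)) s := by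
        have h4 := ((hasDerivAt_pow 2 s).mul_const d2).const_mul (c / 2)
        simpa [pow_one, mul_assoc, mul_comm, mul_left_comm] using h4
      exact (h1.sub h2).sub h3
    have hmono : MonotoneOn φ (Icc 0 1) := by
      apply monotoneOn_of_deriv_nonneg (convex_Icc 0 1)
      · intro s hs
        exact (hφder s hs).continuousAt.continuousWithinAt
      · rw [interior_Icc]
        intro s hs
        exact (hφder s (Ioo_subset_Icc_self hs)).differentiableAt.differentiableWithinAt
      · rw [interior_Icc]
        intro s hs
        rw [(hφder s (Ioo_subset_Icc_self hs)).deriv]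
        have hs0 := hs.1
        have hmem := hγmem s (Ioo_subset_Icc_self hs)
        have hsc := hSC (γ s) hmem y hy
        have hγy : γ s - y = s • (z - y) := by
          simp only [hγdef]
          module
        rw [hγy, real_inner_smul_right, inner_sub_left] at hsc
        have hnrm : ‖s • (z - y)‖ ^ 2 = s ^ 2 * d2 := by
          rw [norm_smul, Real.norm_eq_abs, mul_pow, sq_abs, hd2def]
        rw [hnrm] at hsc
        have hfg : (inner ℝ (gradient v (γ s)) (z - y) : ℝ) = fderiv ℝ v (γ s) (z - y) :=
          hgrad v _ _
        rw [hfg] at hsc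
        -- hsc : c * (s ^ 2 * d2) ≤ s * (fderiv v (γ s) (z - y) - ι)
        have key : c * s * d2 ≤ fderiv ℝ v (γ s) (z - y) - ι := by
          have h' : s * (c * s * d2) ≤ s * (fderiv ℝ v (γ s) (z - y) - ι) := by
            calc s * (c * s * d2) = c * (s ^ 2 * d2) := by ring
              _ ≤ _ := hsc
          exact le_of_mul_le_mul_left h' hs0
        linarith
    have h01 : φ 0 ≤ φ 1 :=
      hmono (left_mem_Icc.mpr zero_le_one) (right_mem_Icc.mpr zero_le_one) zero_le_one
    have hφ0 : φ 0 = v y := by simp [hφdef, hγdef]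
    have hφ1 : φ 1 = v z - ι - c / 2 * d2 := by simp [hφdef, hγdef]
    rw [hφ0, hφ1] at h01
    linarith
  -- the supporting-hyperplane inequality at points with small gradient
  have hC : ∀ (κ : ℝ), 0 < κ → κ < 1 → ∀ x ∈ Ω,
      ‖gradient v x‖ ^ 2 ≤ 2 * c * (-Real.log κ) → ∀ y ∈ Ω,
      Real.sqrt (v x - Real.log κ) +
          (inner ℝ (gradient v x) (y - x) : ℝ) / (2 * Real.sqrt (v x - Real.log κ)) ≤
        Real.sqrt (v y - Real.log κ) := by
    intro κ hκ0 hκ1 x hx hgx y hy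
    have hlogκ : Real.log κ < 0 := Real.log_neg hκ0 hκ1
    set a : ℝ := v x - Real.log κ with hadef
    have ha : 0 < a := by
      have := hvnonneg x hx
      simp only [hadef]; linarith
    have hsa : 0 < Real.sqrt a := Real.sqrt_pos.mpr ha
    set h : ℝ := (inner ℝ (gradient v x) (y - x) : ℝ) with hhdef
    set s : ℝ := v y - Real.log κ with hsdef
    have hs0 : 0 ≤ s := by
      have := hvnonneg y hy
      simp only [hsdef]; linarith
    have hBs : a + h + c / 2 * ‖y - x‖ ^ 2 ≤ s := by
      have := hB x hx y hy
      simp only [hadef, hsdef, hhdef]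
      linarith
    by_cases hneg : Real.sqrt a + h / (2 * Real.sqrt a) ≤ 0
    · exact le_trans hneg (Real.sqrt_nonneg s)
    · push_neg at hneg
      have hCS : h ^ 2 ≤ ‖gradient v x‖ ^ 2 * ‖y - x‖ ^ 2 := by
        have h1 := abs_real_inner_le_norm (gradient v x) (y - x)
        calc h ^ 2 = |h| ^ 2 := (sq_abs h).symm
          _ ≤ (‖gradient v x‖ * ‖y - x‖) ^ 2 := by
              apply pow_le_pow_left₀ (abs_nonneg _) h1
          _ = _ := by ring
      have hh2 : h ^ 2 ≤ 2 * c * a * ‖y - x‖ ^ 2 := by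
        have h2 : ‖gradient v x‖ ^ 2 * ‖y - x‖ ^ 2 ≤ (2 * c * (-Real.log κ)) * ‖y - x‖ ^ 2 :=
          mul_le_mul_of_nonneg_right hgx (by positivity)
        have h3 : (2 * c * (-Real.log κ)) * ‖y - x‖ ^ 2 ≤ 2 * c * a * ‖y - x‖ ^ 2 := by
          apply mul_le_mul_of_nonneg_right _ (by positivity)
          have := hvnonneg x hx
          nlinarith
        linarith
      have hsq : Real.sqrt a ^ 2 = a := Real.sq_sqrt ha.le
      have hcancel : 2 * Real.sqrt a * (h / (2 * Real.sqrt a)) = h := by field_simp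
      have hsquare : (h / (2 * Real.sqrt a)) ^ 2 = h ^ 2 / (4 * a) := by
        rw [div_pow, mul_pow, hsq]
        norm_num
      have hfrac : h ^ 2 / (4 * a) ≤ c / 2 * ‖y - x‖ ^ 2 := by
        calc h ^ 2 / (4 * a) ≤ (2 * c * a * ‖y - x‖ ^ 2) / (4 * a) := by gcongr
          _ = c / 2 * ‖y - x‖ ^ 2 := by field_simp; ring
      have hR2 : (Real.sqrt a + h / (2 * Real.sqrt a)) ^ 2 ≤ s := by
        rw [add_sq, hcancel, hsquare, hsq]
        linarith [hfrac, hBs]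
      calc Real.sqrt a + h / (2 * Real.sqrt a)
          = Real.sqrt ((Real.sqrt a + h / (2 * Real.sqrt a)) ^ 2) :=
            (Real.sqrt_sq hneg.le).symm
        _ ≤ Real.sqrt s := Real.sqrt_le_sqrt hR2
  -- continuity of ‖∇v‖² on Ω and vanishing at x₀
  have hgradcont : ContinuousOn (fun x => ‖gradient v x‖ ^ 2) Ω := by
    have h1 : ContDiffOn ℝ 1 v Ω := by
      have := ((hu2.of_le one_le_two).log (fun x hx => (hupos x hx).ne')).neg
      exact this
    have h2 : ContinuousOn (fderiv ℝ v) Ω := h1.continuousOn_fderiv_of_isOpen hΩo le_rfl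
    have h3 : ContinuousOn (gradient v) Ω := by
      have heq : gradient v = fun x => (InnerProductSpace.toDual ℝ (EuclideanSpace ℝ (Fin n))).symm (fderiv ℝ v x) := rfl
      rw [heq]
      exact (InnerProductSpace.toDual ℝ (EuclideanSpace ℝ (Fin n))).symm.continuous.comp_continuousOn h2
    exact (h3.norm).pow 2
  have hgradx₀ : gradient v x₀ = 0 := by
    have hmin : IsLocalMin v x₀ := by
      apply Filter.eventually_of_mem (hΩo.mem_nhds hx₀)
      intro y hy
      rw [hvx₀]
      exact hvnonneg y hy
    have h0 : fderiv ℝ v x₀ = 0 := hmin.fderiv_eq_zero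
    have : gradient v x₀ = (InnerProductSpace.toDual ℝ (EuclideanSpace ℝ (Fin n))).symm (fderiv ℝ v x₀) := rfl
    rw [this, h0, map_zero]
  -- choice of the level for each κ
  have hEx : ∀ κ : ℝ, ∃ e : ℝ, κ ∈ Set.Ioo (0:ℝ) 1 →
      (0 < e ∧ e ≤ 1 - κ ∧
        ∀ x ∈ Ω, v x < e → ‖gradient v x‖ ^ 2 ≤ 2 * c * (-Real.log κ)) := by
    intro κ
    by_cases hκ : κ ∈ Set.Ioo (0:ℝ) 1
    swap
    · exact ⟨1, fun h => absurd h hκ⟩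
    have hlogκ : Real.log κ < 0 := Real.log_neg hκ.1 hκ.2
    have hM2 : 0 < 2 * c * (-Real.log κ) := by
      have : 0 < -Real.log κ := by linarith
      positivity
    have hcw : ContinuousWithinAt (fun x => ‖gradient v x‖ ^ 2) Ω x₀ := hgradcont x₀ hx₀
    have hval : ‖gradient v x₀‖ ^ 2 = 0 := by rw [hgradx₀]; simp
    have hpre : (fun x => ‖gradient v x‖ ^ 2) ⁻¹' (Set.Iio (2 * c * (-Real.log κ)))
        ∈ nhdsWithin x₀ Ω := by
      apply hcw
      apply Iio_mem_nhds
      have hval' : (fun x => ‖gradient v x‖ ^ 2) x₀ = 0 := hval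
      rw [hval']
      exact hM2
    rw [Metric.mem_nhdsWithin_iff] at hpre
    obtain ⟨δ, hδ, hsub⟩ := hpre
    refine ⟨min (c * δ ^ 2 / 2) (1 - κ), fun _ => ⟨?_, min_le_right _ _, ?_⟩⟩
    · exact lt_min (div_pos (mul_pos hc (pow_pos hδ 2)) two_pos) (by linarith [hκ.2])
    · intro x hx hvx
      have hvx' : v x < c * δ ^ 2 / 2 := lt_of_lt_of_le hvx (min_le_left _ _)
      have hq := hB x₀ hx₀ x hx
      rw [hvx₀, hgradx₀] at hq
      simp only [inner_zero_left] at hq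
      have hn2 : c / 2 * ‖x - x₀‖ ^ 2 ≤ v x := by linarith
      have hlt : ‖x - x₀‖ < δ := by
        by_contra hge
        push_neg at hge
        have h6 : δ ^ 2 ≤ ‖x - x₀‖ ^ 2 := pow_le_pow_left₀ hδ.le hge 2
        nlinarith [mul_le_mul_of_nonneg_left h6 hc.le]
      have hxball : x ∈ Metric.ball x₀ δ ∩ Ω := by
        refine ⟨?_, hx⟩
        rw [mem_ball, dist_eq_norm]
        exact hlt
      exact (hsub hxball).le
  choose ε hε using hEx
  set ubar : ℝ → ℝ := fun κ =>
    if κ ∈ Set.Ioo (0:ℝ) 1 then Real.exp (-ε κ) else Real.exp (κ - 1) with hubardef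
  refine ⟨ubar, ?_, ?_, ?_⟩
  · intro κ hκ
    obtain ⟨he0, _, _⟩ := hε κ hκ
    have : ubar κ = Real.exp (-ε κ) := if_pos hκ
    rw [this]
    exact ⟨Real.exp_pos _, Real.exp_lt_one_iff.mpr (by linarith)⟩
  · -- Tendsto
    have hlow : ∀ᶠ κ in nhdsWithin 1 (Set.Iio 1), Real.exp (κ - 1) ≤ ubar κ := by
      apply eventually_nhdsWithin_of_forall
      intro κ hκ'
      by_cases hκ : κ ∈ Set.Ioo (0:ℝ) 1
      · obtain ⟨he0, hele, _⟩ := hε κ hκ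
        have : ubar κ = Real.exp (-ε κ) := if_pos hκ
        rw [this]
        exact Real.exp_le_exp.mpr (by linarith)
      · have : ubar κ = Real.exp (κ - 1) := if_neg hκ
        rw [this]
    have hhigh : ∀ᶠ κ in nhdsWithin 1 (Set.Iio 1), ubar κ ≤ 1 := by
      apply eventually_nhdsWithin_of_forall
      intro κ hκ'
      by_cases hκ : κ ∈ Set.Ioo (0:ℝ) 1
      · obtain ⟨he0, _, _⟩ := hε κ hκ
        have : ubar κ = Real.exp (-ε κ) := if_pos hκ
        rw [this]
        exact (Real.exp_lt_one_iff.mpr (by linarith)).le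
      · have : ubar κ = Real.exp (κ - 1) := if_neg hκ
        rw [this]
        have : κ - 1 < 0 := by simpa using sub_neg.mpr (mem_Iio.mp hκ')
        exact (Real.exp_lt_one_iff.mpr this).le
    have hlowt : Filter.Tendsto (fun κ : ℝ => Real.exp (κ - 1))
        (nhdsWithin 1 (Set.Iio 1)) (nhds 1) := by
      have hcont : Continuous (fun κ : ℝ => Real.exp (κ - 1)) := by continuity
      have h1 : Filter.Tendsto (fun κ : ℝ => Real.exp (κ - 1)) (nhds 1) (nhds 1) := by
        simpa using hcont.tendsto (1 : ℝ)
      exact h1.mono_left nhdsWithin_le_nhds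
    exact tendsto_of_tendsto_of_tendsto_of_le_of_le' hlowt tendsto_const_nhds hlow hhigh
  · -- main statement for each κ
    intro κ hκ
    obtain ⟨he0, hele, hegrad⟩ := hε κ hκ
    have hubar : ubar κ = Real.exp (-ε κ) := if_pos hκ
    have hubar1 : ubar κ < 1 := by
      rw [hubar]; exact Real.exp_lt_one_iff.mpr (by linarith)
    -- characterization of the level set
    have hmemiff : ∀ x, x ∈ {x ∈ Ω | u x > ubar κ} ↔ x ∈ Ω ∧ v x < ε κ := by
      intro x
      simp only [Set.mem_setOf_eq, gt_iff_lt]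
      constructor
      · rintro ⟨hx, hux⟩
        refine ⟨hx, ?_⟩
        rw [hubar] at hux
        have := (Real.lt_log_iff_exp_lt (hupos x hx)).mpr hux
        simp only [hvdef]
        linarith
      · rintro ⟨hx, hvx⟩
        refine ⟨hx, ?_⟩
        rw [hubar]
        apply (Real.lt_log_iff_exp_lt (hupos x hx)).mp
        simp only [hvdef] at hvx
        linarith
    have hwg : ∀ z ∈ Ω, -Real.log (κ * u z) = v z - Real.log κ := by
      intro z hz
      rw [Real.log_mul hκ.1.ne' (hupos z hz).ne']
      simp only [hvdef]
      ring
    -- points of the level set have small gradient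
    have hkey : ∀ x, x ∈ Ω ∧ v x < ε κ → ∀ y ∈ Ω,
        Real.sqrt (v x - Real.log κ) +
            (inner ℝ (gradient v x) (y - x) : ℝ) / (2 * Real.sqrt (v x - Real.log κ)) ≤
          Real.sqrt (v y - Real.log κ) := by
      rintro x ⟨hx, hvx⟩ y hy
      exact hC κ hκ.1 hκ.2 x hx (hegrad x hx hvx) y hy
    have hconv : Convex ℝ {x ∈ Ω | u x > ubar κ} := by
      intro x hx y hy s t hs ht hst
      rw [hmemiff] at hx hy ⊢
      obtain ⟨hxΩ, hvx⟩ := hx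
      obtain ⟨hyΩ, hvy⟩ := hy
      refine ⟨hΩc hxΩ hyΩ hs ht hst, ?_⟩
      have hcc := hlogconc.2 hxΩ hyΩ hs ht hst
      have : s • v x + t • v y < ε κ := by
        simp only [smul_eq_mul]
        rcases eq_or_lt_of_le hs with hs0 | hs0
        · rw [← hs0] at hst ⊢
          simp only [zero_mul, zero_add] at hst ⊢
          rw [hst] at *
          linarith
        · nlinarith
      calc v (s • x + t • y) ≤ s • v x + t • v y := hcc
        _ < ε κ := this
    refine ⟨⟨x₀, ?_⟩, hconv, ?_, ?_⟩
    · rw [hmemiff]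
      exact ⟨hx₀, by rw [hvx₀]; exact he0⟩
    · -- convex envelope equality
      intro x hx
      rw [hmemiff] at hx
      obtain ⟨hxΩ, hvx⟩ := hx
      set w : EuclideanSpace ℝ (Fin n) → ℝ := fun z => Real.sqrt (-Real.log (κ * u z)) with hwdef
      have hwx : ∀ z ∈ Ω, w z = Real.sqrt (v z - Real.log κ) := by
        intro z hz
        simp only [hwdef]
        rw [hwg z hz]
      set p : EuclideanSpace ℝ (Fin n) := gradient v x with hpdef
      set sa : ℝ := Real.sqrt (v x - Real.log κ) with hsadef
      have hbound : ∀ r ∈ {r : ℝ | ∃ (m : ℕ) (t : Fin m → ℝ) (q : Fin m → EuclideanSpace ℝ (Fin n)),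
          (∀ i, 0 ≤ t i) ∧ (∀ i, q i ∈ Ω) ∧ ∑ i, t i = 1 ∧ ∑ i, t i • q i = x ∧
          r = ∑ i, t i * w (q i)}, w x ≤ r := by
        rintro r ⟨m, t, q, htn, hqΩ, hts, hqs, rfl⟩
        have hkey' : ∀ i, t i * (sa + (inner ℝ p (q i - x) : ℝ) / (2 * sa)) ≤ t i * w (q i) := by
          intro i
          apply mul_le_mul_of_nonneg_left _ (htn i)
          rw [hwx (q i) (hqΩ i)]
          exact hkey x ⟨hxΩ, hvx⟩ (q i) (hqΩ i)
        have h0 : ∑ i, t i * (inner ℝ p (q i - x) : ℝ) = 0 := by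
          have h1 : ∀ i ∈ Finset.univ, t i * (inner ℝ p (q i - x) : ℝ)
              = (inner ℝ p (t i • (q i - x)) : ℝ) := by
            intro i _
            rw [real_inner_smul_right]
          rw [Finset.sum_congr rfl h1, ← inner_sum]
          have h2 : ∑ i, t i • (q i - x) = 0 := by
            simp only [smul_sub]
            rw [Finset.sum_sub_distrib, ← Finset.sum_smul, hts, hqs, one_smul, sub_self]
          rw [h2, inner_zero_right]
        have hsum : w x = ∑ i, t i * (sa + (inner ℝ p (q i - x) : ℝ) / (2 * sa)) := by
          have h3 : ∀ i ∈ Finset.univ, t i * (sa + (inner ℝ p (q i - x) : ℝ) / (2 * sa))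
              = t i * sa + (t i * (inner ℝ p (q i - x) : ℝ)) / (2 * sa) := by
            intro i _
            ring
          rw [Finset.sum_congr rfl h3, Finset.sum_add_distrib, ← Finset.sum_mul, hts,
            ← Finset.sum_div, h0, one_mul]
          rw [hwx x hxΩ, ← hsadef]
          norm_num
        calc w x = ∑ i, t i * (sa + (inner ℝ p (q i - x) : ℝ) / (2 * sa)) := hsum
          _ ≤ ∑ i, t i * w (q i) := Finset.sum_le_sum (fun i _ => hkey' i)
      have hmem : w x ∈ {r : ℝ | ∃ (m : ℕ) (t : Fin m → ℝ) (q : Fin m → EuclideanSpace ℝ (Fin n)),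
          (∀ i, 0 ≤ t i) ∧ (∀ i, q i ∈ Ω) ∧ ∑ i, t i = 1 ∧ ∑ i, t i • q i = x ∧
          r = ∑ i, t i * w (q i)} :=
        ⟨1, fun _ => 1, fun _ => x, fun _ => zero_le_one, fun _ => hxΩ, by simp, by simp, by simp⟩
      show w x = convEnv Ω w x
      rw [convEnv]
      exact le_antisymm (le_csInf ⟨w x, hmem⟩ hbound) (csInf_le ⟨w x, hbound⟩ hmem)
    · -- the half-logconcavity inequality
      intro x hx y hy t ht
      set z : EuclideanSpace ℝ (Fin n) := (1 - t) • x + t • y with hzdef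
      have hzset : z ∈ {x ∈ Ω | u x > ubar κ} := by
        apply hconv hx hy (by linarith [ht.2]) ht.1 (by ring)
      rw [hmemiff] at hx hy hzset
      obtain ⟨hxΩ, hvx⟩ := hx
      obtain ⟨hyΩ, hvy⟩ := hy
      obtain ⟨hzΩ, hvz⟩ := hzset
      set az : ℝ := v z - Real.log κ with hazdef
      have hlogκ : Real.log κ < 0 := Real.log_neg hκ.1 hκ.2
      have haz : 0 < az := by
        have := hvnonneg z hzΩ
        simp only [hazdef]; linarith
      have hsaz : 0 < Real.sqrt az := Real.sqrt_pos.mpr haz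
      set I1 : ℝ := (inner ℝ (gradient v z) (x - z) : ℝ) with hI1def
      set I2 : ℝ := (inner ℝ (gradient v z) (y - z) : ℝ) with hI2def
      have h1 := hkey z ⟨hzΩ, hvz⟩ x hxΩ
      have h2 := hkey z ⟨hzΩ, hvz⟩ y hyΩ
      have hvec : (1 - t) • (x - z) + t • (y - z) = 0 := by
        simp only [hzdef]
        module
      have hI : (1 - t) * I1 + t * I2 = 0 := by
        have h3 : (1 - t) * I1 + t * I2
            = (inner ℝ (gradient v z) ((1 - t) • (x - z) + t • (y - z)) : ℝ) := by
          rw [inner_add_right, real_inner_smul_right, real_inner_smul_right]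
        rw [h3, hvec, inner_zero_right]
      have h1' : (1 - t) * (Real.sqrt az + I1 / (2 * Real.sqrt az))
          ≤ (1 - t) * Real.sqrt (v x - Real.log κ) :=
        mul_le_mul_of_nonneg_left h1 (by linarith [ht.2])
      have h2' : t * (Real.sqrt az + I2 / (2 * Real.sqrt az))
          ≤ t * Real.sqrt (v y - Real.log κ) :=
        mul_le_mul_of_nonneg_left h2 ht.1
      have hexp : (1 - t) * (Real.sqrt az + I1 / (2 * Real.sqrt az))
          + t * (Real.sqrt az + I2 / (2 * Real.sqrt az)) = Real.sqrt az := by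
        have h4 : (1 - t) * (Real.sqrt az + I1 / (2 * Real.sqrt az))
            + t * (Real.sqrt az + I2 / (2 * Real.sqrt az))
            = Real.sqrt az + ((1 - t) * I1 + t * I2) / (2 * Real.sqrt az) := by
          ring
        rw [h4, hI, zero_div, add_zero]
      have hsum : Real.sqrt az
          ≤ (1 - t) * Real.sqrt (v x - Real.log κ) + t * Real.sqrt (v y - Real.log κ) := by
        rw [← hexp]
        exact add_le_add h1' h2'
      rw [ge_iff_le]
      rw [hwg x hxΩ, hwg y hyΩ, hwg ((1 - t) • x + t • y) hzΩ]
      have : v ((1 - t) • x + t • y) - Real.log κ = az := rfl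
      rw [this]
      linarith
end

section
/- Let Ω be an open bounded convex subset of ℝⁿ and let w : Ω → ℝ be a lower semicontinuous function such that w(x) → +∞ as dist(x, ∂Ω) → 0. Then the convex envelope w** also satisfies w**(x) → +∞ as dist(x, ∂Ω) → 0. -/
open Real Set Metric Filter

/-- A lower semicontinuous function on a compact set is bounded below there. -/
private lemma exists_forall_le_of_lsc {X : Type*} [TopologicalSpace X] {K : Set X}
    {f : X → ℝ} (hK : IsCompact K) (hf : LowerSemicontinuousOn f K) :
    ∃ c : ℝ, ∀ x ∈ K, c ≤ f x := by
  rcases K.eq_empty_or_nonempty with rfl | hne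
  · exact ⟨0, by simp⟩
  have h : ∀ x (_ : x ∈ K), ∃ u : Set X, IsOpen u ∧ x ∈ u ∧ ∀ y ∈ u ∩ K, f x - 1 < f y := by
    intro x hx
    have := hf x hx (f x - 1) (by linarith)
    rw [eventually_iff, mem_nhdsWithin] at this
    obtain ⟨u, hu, hxu, hsub⟩ := this
    exact ⟨u, hu, hxu, fun y hy => hsub ⟨hy.1, hy.2⟩⟩
  choose u hu hxu hlt using h
  obtain ⟨t, ht⟩ := hK.elim_nhds_subcover' u (fun x hx => (hu x hx).mem_nhds (hxu x hx))
  have htne : t.Nonempty := by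
    rcases hne with ⟨x, hx⟩
    have := ht hx
    simp only [Set.mem_iUnion] at this
    obtain ⟨i, hi, _⟩ := this
    exact ⟨i, hi⟩
  refine ⟨t.inf' htne (fun i => f i - 1), fun y hy => ?_⟩
  have := ht hy
  simp only [Set.mem_iUnion] at this
  obtain ⟨i, hi, hyu⟩ := this
  calc t.inf' htne (fun i => f i - 1) ≤ f i - 1 := Finset.inf'_le _ hi
    _ ≤ f y := le_of_lt (hlt i i.2 y ⟨hyu, hy⟩)

/-- For a point of an open set, distance to the frontier equals distance to the complement. -/
private lemma infDist_frontier_eq {n : ℕ} {Ω : Set (EuclideanSpace ℝ (Fin n))}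
    (hΩo : IsOpen Ω) (hc : Ωᶜ.Nonempty) {x : EuclideanSpace ℝ (Fin n)} (hx : x ∈ Ω) :
    Metric.infDist x (frontier Ω) = Metric.infDist x Ωᶜ := by
  have hsub : frontier Ω ⊆ Ωᶜ := by
    rw [hΩo.frontier_eq]; intro z hz; exact hz.2
  obtain ⟨y, hyf, hyd⟩ := exists_mem_frontier_infDist_compl_eq_dist hx (by
    intro h
    rcases hc with ⟨z, hz⟩
    exact hz (h ▸ Set.mem_univ z))
  refine le_antisymm ?_ (Metric.infDist_le_infDist_of_subset hsub ⟨y, hyf⟩)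
  rw [hyd]
  exact Metric.infDist_le_dist_of_mem hyf

/-- Concavity of the distance to the complement along convex combinations. -/
private lemma sum_dist_le {n : ℕ} {Ω : Set (EuclideanSpace ℝ (Fin n))}
    (hΩc : Convex ℝ Ω) (hc : Ωᶜ.Nonempty)
    {m : ℕ} {t : Fin m → ℝ} {q : Fin m → EuclideanSpace ℝ (Fin n)}
    {x : EuclideanSpace ℝ (Fin n)}
    (ht : ∀ i, 0 ≤ t i) (hq : ∀ i, q i ∈ Ω) (h1 : ∑ i, t i = 1)
    (hx : ∑ i, t i • q i = x) :
    ∑ i, t i * Metric.infDist (q i) Ωᶜ ≤ Metric.infDist x Ωᶜ := by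
  set R := ∑ i, t i * Metric.infDist (q i) Ωᶜ with hR
  have hR0 : 0 ≤ R := Finset.sum_nonneg fun i _ => mul_nonneg (ht i) Metric.infDist_nonneg
  rcases eq_or_lt_of_le hR0 with h0 | hRpos
  · rw [← h0]; exact Metric.infDist_nonneg
  by_contra hlt
  push_neg at hlt
  obtain ⟨z, hz, hdz⟩ := (Metric.infDist_lt_iff hc).mp hlt
  apply hz
  have hRne : R ≠ 0 := ne_of_gt hRpos
  have hmem : ∀ i : Fin m, q i + (Metric.infDist (q i) Ωᶜ / R) • (z - x) ∈ Ω := by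
    intro i
    rcases eq_or_lt_of_le (Metric.infDist_nonneg (x := q i) (s := Ωᶜ)) with hdi | hdi
    · rw [← hdi]; simpa using hq i
    · have hvn : ‖z - x‖ < R := by
        rw [← dist_eq_norm, dist_comm]
        exact hdz
      have hball : q i + (Metric.infDist (q i) Ωᶜ / R) • (z - x)
          ∈ Metric.ball (q i) (Metric.infDist (q i) Ωᶜ) := by
        rw [Metric.mem_ball, dist_self_add_left, norm_smul, Real.norm_of_nonneg
          (div_nonneg (le_of_lt hdi) (le_of_lt hRpos))]
        calc Metric.infDist (q i) Ωᶜ / R * ‖z - x‖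
            < Metric.infDist (q i) Ωᶜ / R * R :=
              mul_lt_mul_of_pos_left hvn (div_pos hdi hRpos)
          _ = Metric.infDist (q i) Ωᶜ := div_mul_cancel₀ _ hRne
      exact Metric.ball_infDist_compl_subset hball
  have hz' : (∑ i, t i • (q i + (Metric.infDist (q i) Ωᶜ / R) • (z - x))) = z := by
    have h2 : ∀ i : Fin m, t i • (q i + (Metric.infDist (q i) Ωᶜ / R) • (z - x))
        = t i • q i + ((t i * Metric.infDist (q i) Ωᶜ) / R) • (z - x) := by
      intro i; rw [smul_add, smul_smul, mul_div_assoc]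
    rw [Finset.sum_congr rfl (fun i _ => h2 i), Finset.sum_add_distrib, hx, ← Finset.sum_smul,
      ← Finset.sum_div, ← hR, div_self hRne, one_smul]
    abel
  rw [← hz']
  exact hΩc.sum_mem (fun i _ => ht i) h1 (fun i _ => hmem i)

/-- **Lemma 2.2, first part.** Let `Ω ⊂ ℝⁿ` be an open bounded convex set and
`w : Ω → ℝ` a lower semicontinuous function with `w(x) → +∞` as `dist(x, ∂Ω) → 0`.
Then the convex envelope `w**` also satisfies `w**(x) → +∞` as `dist(x, ∂Ω) → 0`. -/
theorem convEnv_blowup_at_boundary {n : ℕ}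
    (Ω : Set (EuclideanSpace ℝ (Fin n))) (w : EuclideanSpace ℝ (Fin n) → ℝ)
    (hΩo : IsOpen Ω) (hΩb : Bornology.IsBounded Ω) (hΩc : Convex ℝ Ω) (hΩne : Ω.Nonempty)
    (hlsc : LowerSemicontinuousOn w Ω)
    (hblow : ∀ M : ℝ, ∃ δ > 0, ∀ x ∈ Ω, Metric.infDist x (frontier Ω) < δ → M ≤ w x) :
    ∀ M : ℝ, ∃ δ > 0, ∀ x ∈ Ω, Metric.infDist x (frontier Ω) < δ → M ≤ convEnv Ω w x := by
  rcases Set.eq_empty_or_nonempty (frontier Ω) with hfr | hfr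
  · exfalso
    obtain ⟨x₀, hx₀⟩ := hΩne
    obtain ⟨δ, hδ, h⟩ := hblow (w x₀ + 1)
    have h0 : Metric.infDist x₀ (frontier Ω) = 0 := by rw [hfr]; exact Metric.infDist_empty
    linarith [h x₀ hx₀ (by rw [h0]; exact hδ)]
  have hcne : Ωᶜ.Nonempty := by
    obtain ⟨y, hy⟩ := hfr
    refine ⟨y, ?_⟩
    rw [hΩo.frontier_eq] at hy
    exact hy.2
  -- global lower bound for `w` on `Ω`
  obtain ⟨δ₀, hδ₀, h0⟩ := hblow 0
  set K := closure Ω ∩ {y | δ₀ ≤ Metric.infDist y (frontier Ω)} with hKdef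
  have hKcp : IsCompact K :=
    hΩb.isCompact_closure.inter_right
      (isClosed_le continuous_const (Metric.continuous_infDist_pt _))
  have hKsub : K ⊆ Ω := by
    rintro y ⟨hy1, hy2⟩
    by_contra hyΩ
    have hyfr : y ∈ frontier Ω := by
      rw [hΩo.frontier_eq]; exact ⟨hy1, hyΩ⟩
    have h00 : Metric.infDist y (frontier Ω) = 0 := Metric.infDist_zero_of_mem hyfr
    simp only [Set.mem_setOf_eq, h00] at hy2
    linarith
  obtain ⟨c₀, hc₀⟩ := exists_forall_le_of_lsc hKcp (hlsc.mono hKsub)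
  set c : ℝ := min c₀ 0 with hcdef
  have hcΩ : ∀ y ∈ Ω, c ≤ w y := by
    intro y hy
    by_cases h : Metric.infDist y (frontier Ω) < δ₀
    · exact le_trans (min_le_right _ _) (h0 y hy h)
    · exact le_trans (min_le_left _ _) (hc₀ y ⟨subset_closure hy, not_lt.mp h⟩)
  intro M
  set M' := M + 1 with hM'def
  obtain ⟨ρ, hρ, hM'⟩ := hblow M'
  set c' : ℝ := min c M' with hc'def
  have hc'M : c' ≤ M' := min_le_right _ _
  set ε : ℝ := 1 / (M' + 1 - c') with hεdef
  have hden : (1 : ℝ) ≤ M' + 1 - c' := by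
    have := min_le_right c M'
    simp only [hc'def] at *
    linarith
  have hdenpos : (0 : ℝ) < M' + 1 - c' := by linarith
  have hε0 : 0 < ε := by rw [hεdef]; positivity
  refine ⟨ε * ρ, mul_pos hε0 hρ, fun x hx hxd => ?_⟩
  rw [convEnv]
  refine le_csInf ⟨∑ i : Fin 1, (1 : ℝ) * w x, 1, fun _ => 1, fun _ => x,
    fun _ => zero_le_one, fun _ => hx, by simp, by simp, by simp⟩ ?_
  rintro r ⟨m, t, q, ht, hq, h1, hxe, rfl⟩
  -- concavity bound
  have hdc : ∀ i, Metric.infDist (q i) (frontier Ω) = Metric.infDist (q i) Ωᶜ :=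
    fun i => infDist_frontier_eq hΩo hcne (hq i)
  have hkey : ∑ i, t i * Metric.infDist (q i) (frontier Ω)
      < ε * ρ := by
    calc ∑ i, t i * Metric.infDist (q i) (frontier Ω)
        = ∑ i, t i * Metric.infDist (q i) Ωᶜ := by
          exact Finset.sum_congr rfl fun i _ => by rw [hdc i]
      _ ≤ Metric.infDist x Ωᶜ := sum_dist_le hΩc hcne ht hq h1 hxe
      _ = Metric.infDist x (frontier Ω) := (infDist_frontier_eq hΩo hcne hx).symm
      _ < ε * ρ := hxd
  set A := Finset.univ.filter (fun i : Fin m => Metric.infDist (q i) (frontier Ω) < ρ) with hA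
  set B := Finset.univ.filter
    (fun i : Fin m => ¬ Metric.infDist (q i) (frontier Ω) < ρ) with hB
  set s : ℝ := ∑ i ∈ B, t i with hs
  have hsplit1 : (∑ i ∈ A, t i) + s = 1 := by
    rw [hs, hA, hB, Finset.sum_filter_add_sum_filter_not, h1]
  have hs0 : 0 ≤ s := Finset.sum_nonneg fun i _ => ht i
  have hsε : s ≤ ε := by
    have h1' : ρ * s ≤ ∑ i ∈ B, t i * Metric.infDist (q i) (frontier Ω) := by
      rw [hs, Finset.mul_sum]
      refine Finset.sum_le_sum fun i hi => ?_
      rw [hB, Finset.mem_filter] at hi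
      rw [mul_comm]
      exact mul_le_mul_of_nonneg_left (not_lt.mp hi.2) (ht i)
    have h2' : ∑ i ∈ B, t i * Metric.infDist (q i) (frontier Ω)
        ≤ ∑ i, t i * Metric.infDist (q i) (frontier Ω) := by
      refine Finset.sum_le_sum_of_subset_of_nonneg (Finset.filter_subset _ _) fun i _ _ =>
        mul_nonneg (ht i) Metric.infDist_nonneg
    have : ρ * s < ε * ρ := lt_of_le_of_lt (le_trans h1' h2') hkey
    nlinarith
  have hrsplit : ∑ i, t i * w (q i)
      = (∑ i ∈ A, t i * w (q i)) + (∑ i ∈ B, t i * w (q i)) := by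
    rw [hA, hB, Finset.sum_filter_add_sum_filter_not]
  have hAbound : (∑ i ∈ A, t i) * M' ≤ ∑ i ∈ A, t i * w (q i) := by
    rw [Finset.sum_mul]
    refine Finset.sum_le_sum fun i hi => ?_
    rw [hA, Finset.mem_filter] at hi
    exact mul_le_mul_of_nonneg_left (hM' (q i) (hq i) hi.2) (ht i)
  have hBbound : s * c' ≤ ∑ i ∈ B, t i * w (q i) := by
    rw [hs, Finset.sum_mul]
    refine Finset.sum_le_sum fun i _ => ?_
    exact mul_le_mul_of_nonneg_left (le_trans (min_le_left _ _) (hcΩ (q i) (hq i))) (ht i)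
  have hεmul : ε * (M' - c') ≤ 1 := by
    rw [hεdef, div_mul_eq_mul_div, one_mul, div_le_one hdenpos]
    linarith
  have hsmul : s * (M' - c') ≤ ε * (M' - c') :=
    mul_le_mul_of_nonneg_right hsε (by linarith)
  have hAsum : ∑ i ∈ A, t i = 1 - s := by linarith
  rw [hrsplit]
  have : (1 - s) * M' + s * c' ≤ (∑ i ∈ A, t i * w (q i)) + (∑ i ∈ B, t i * w (q i)) := by
    rw [← hAsum]
    exact add_le_add hAbound hBbound
  nlinarith
end

section
/- Let Ω be an open bounded convex subset of ℝⁿ and let w : Ω → ℝ be a lower semicontinuous function such that w(x) → +∞ as dist(x, ∂Ω) → 0. Then for every x ∈ Ω there exist an integer m with 1 ≤ m ≤ n+1, positive numbers t₁, …, t_m with Σ_{i=1}^m t_i = 1, and points x₁, …, x_m ∈ Ω with Σ_{i=1}^m t_i x_i = x, such that w**(x) = Σ_{i=1}^m t_i w(x_i); that is, the infimum defining the convex envelope is attained with at most n+1 points of Ω. -/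
open Real Set Metric Filter
open Topology

variable {n : ℕ} {Ω : Set (EuclideanSpace ℝ (Fin n))} {w : EuclideanSpace ℝ (Fin n) → ℝ}

/-- generic dite-padding sum identity -/
lemma sum_dite_pad {M : Type*} [AddCommMonoid M] {N m : ℕ} (hm : m ≤ N) (f : Fin m → M) :
    ∑ j : Fin N, (if h : (j : ℕ) < m then f ⟨j, h⟩ else 0) = ∑ i, f i := by
  classical
  have h1 : ∑ j : Fin N, (if h : (j : ℕ) < m then f ⟨j, h⟩ else 0)
      = ∑ j ∈ Finset.range N, (if h : j < m then f ⟨j, h⟩ else 0) :=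
    Fin.sum_univ_eq_sum_range (fun j => if h : j < m then f ⟨j, h⟩ else 0) N
  have h2 : ∑ j ∈ Finset.range m, (if h : j < m then f ⟨j, h⟩ else 0)
      = ∑ j ∈ Finset.range N, (if h : j < m then f ⟨j, h⟩ else 0) := by
    refine Finset.sum_subset (Finset.range_subset_range.2 hm) ?_
    intro j _ hj
    rw [Finset.mem_range] at hj
    rw [dif_neg hj]
  have h3 : ∑ j : Fin m, (if h : (j : ℕ) < m then f ⟨j, h⟩ else 0) = ∑ i, f i := by
    apply Finset.sum_congr rfl
    intro j _
    rw [dif_pos j.2]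
  rw [h1, ← h2, ← Fin.sum_univ_eq_sum_range (fun j => if h : j < m then f ⟨j, h⟩ else 0) m, h3]

lemma mem_hull_of_rep {m : ℕ} {t : Fin m → ℝ} {q : Fin m → EuclideanSpace ℝ (Fin n)}
    {x : EuclideanSpace ℝ (Fin n)}
    (ht : ∀ i, 0 ≤ t i) (hq : ∀ i, q i ∈ Ω) (hsum : ∑ i, t i = 1)
    (hx : ∑ i, t i • q i = x) :
    (x, ∑ i, t i * w (q i)) ∈
      convexHull ℝ {p : EuclideanSpace ℝ (Fin n) × ℝ | p.1 ∈ Ω ∧ p.2 = w p.1} := by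
  have h := Finset.centerMass_mem_convexHull (Finset.univ : Finset (Fin m))
    (w := t) (z := fun i => (q i, w (q i)))
    (s := {p : EuclideanSpace ℝ (Fin n) × ℝ | p.1 ∈ Ω ∧ p.2 = w p.1}) (fun i _ => ht i)
    (by rw [hsum]; exact one_pos) (fun i _ => ⟨hq i, rfl⟩)
  rw [Finset.centerMass_eq_of_sum_1 _ _ hsum] at h
  have : ∑ i, t i • ((q i, w (q i)) : EuclideanSpace ℝ (Fin n) × ℝ)
      = (x, ∑ i, t i * w (q i)) := by
    apply Prod.ext
    · rw [Prod.fst_sum]; simpa using hx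
    · rw [Prod.snd_sum]; simp [smul_eq_mul]
  rwa [this] at h

lemma rep_of_mem_hull {x : EuclideanSpace ℝ (Fin n)} {r : ℝ}
    (h : (x, r) ∈
      convexHull ℝ {p : EuclideanSpace ℝ (Fin n) × ℝ | p.1 ∈ Ω ∧ p.2 = w p.1}) :
    ∃ m : ℕ, 1 ≤ m ∧ m ≤ n + 2 ∧
      ∃ (t : Fin m → ℝ) (q : Fin m → EuclideanSpace ℝ (Fin n)),
        (∀ i, 0 < t i) ∧ (∀ i, q i ∈ Ω) ∧ ∑ i, t i = 1 ∧ ∑ i, t i • q i = x ∧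
        ∑ i, t i * w (q i) = r ∧
        AffineIndependent ℝ (fun j => ((q j, w (q j)) : EuclideanSpace ℝ (Fin n) × ℝ)) := by
  classical
  obtain ⟨ι, hfin, z, s, hzG, hai, hspos, hssum, hszx⟩ :=
    eq_pos_convex_span_of_mem_convexHull h
  letI := hfin
  have hz1 : ∀ i, (z i).1 ∈ Ω := fun i => (hzG ⟨i, rfl⟩).1
  have hz2 : ∀ i, (z i).2 = w ((z i).1) := fun i => (hzG ⟨i, rfl⟩).2
  set m := Fintype.card ι with hm
  let e : Fin m ≃ ι := (Fintype.equivFin ι).symm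
  have hcard : 1 ≤ m := by
    rcases Nat.eq_zero_or_pos m with h0 | h1
    · exfalso
      haveI : IsEmpty ι := Fintype.card_eq_zero_iff.mp h0
      rw [Finset.univ_eq_empty, Finset.sum_empty] at hssum
      exact zero_ne_one hssum
    · exact h1
  have hfr : Module.finrank ℝ (EuclideanSpace ℝ (Fin n) × ℝ) = n + 1 := by
    rw [Module.finrank_prod, finrank_euclideanSpace_fin, Module.finrank_self]
  have hle : m ≤ n + 2 := by
    have h1 := hai.card_le_finrank_succ
    have h2 : Module.finrank ℝ (vectorSpan ℝ (Set.range z))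
        ≤ Module.finrank ℝ (EuclideanSpace ℝ (Fin n) × ℝ) := Submodule.finrank_le _
    omega
  have hze : (fun j => (((z (e j)).1, w ((z (e j)).1)) : EuclideanSpace ℝ (Fin n) × ℝ))
      = z ∘ e := by
    funext j
    exact Prod.ext rfl (hz2 (e j)).symm
  have hxr : ∑ j, s (e j) • z (e j) = (x, r) := by
    rw [Equiv.sum_comp e (fun i => s i • z i)]
    exact hszx
  refine ⟨m, hcard, hle, fun j => s (e j), fun j => (z (e j)).1, fun j => hspos _,
    fun j => hz1 _, ?_, ?_, ?_, ?_⟩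
  · rw [Equiv.sum_comp e s]; exact hssum
  · have := congrArg Prod.fst hxr
    rw [Prod.fst_sum] at this
    simpa using this
  · have := congrArg Prod.snd hxr
    rw [Prod.snd_sum] at this
    simp only [Prod.smul_snd, smul_eq_mul] at this
    calc ∑ j, s (e j) * w ((z (e j)).1) = ∑ j, s (e j) * (z (e j)).2 := by
          apply Finset.sum_congr rfl; intro j _; rw [hz2]
      _ = r := this
  · rw [hze]
    exact hai.comp_embedding e.toEmbedding

lemma exists_lower_bound (hΩo : IsOpen Ω) (hΩb : Bornology.IsBounded Ω)
    (hlsc : LowerSemicontinuousOn w Ω)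
    (hblow : ∀ M : ℝ, ∃ δ > 0, ∀ x ∈ Ω, Metric.infDist x (frontier Ω) < δ → M ≤ w x) :
    ∃ c : ℝ, ∀ y ∈ Ω, c ≤ w y := by
  classical
  obtain ⟨δ, hδ, hM⟩ := hblow 0
  set K : Set (EuclideanSpace ℝ (Fin n)) :=
    closure Ω ∩ {y | δ ≤ infDist y (frontier Ω)} with hK
  have hKcl : IsClosed K :=
    isClosed_closure.inter (isClosed_le continuous_const (continuous_infDist_pt _))
  have hKcpt : IsCompact K := by
    rw [Metric.isCompact_iff_isClosed_bounded]
    exact ⟨hKcl, hΩb.closure.subset inter_subset_left⟩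
  have hKΩ : K ⊆ Ω := by
    intro y hy
    by_contra hyΩ
    have hfr : y ∈ frontier Ω := by
      rw [frontier, hΩo.interior_eq]
      exact ⟨hy.1, hyΩ⟩
    have := hy.2
    rw [mem_setOf_eq, infDist_zero_of_mem hfr] at this
    linarith
  have hnb : ∀ y ∈ K, {z | w y - 1 < w z} ∈ 𝓝 y := by
    intro y hy
    have h1 := hlsc y (hKΩ hy) (w y - 1) (by linarith)
    rwa [hΩo.nhdsWithin_eq (hKΩ hy)] at h1
  obtain ⟨tf, htf⟩ := hKcpt.elim_nhds_subcover' (fun y _ => {z | w y - 1 < w z}) hnb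
  by_cases hKe : K = ∅
  · refine ⟨0, fun y hy => ?_⟩
    have : infDist y (frontier Ω) < δ := by
      by_contra hlt
      push_neg at hlt
      have : y ∈ K := ⟨subset_closure hy, hlt⟩
      rw [hKe] at this
      exact this
    exact hM y hy this
  · rcases Set.nonempty_iff_ne_empty.2 hKe with ⟨y0, hy0⟩
    have htfne : tf.Nonempty := by
      rcases Finset.eq_empty_or_nonempty tf with h | h
      · exfalso
        have := htf hy0
        simp [h] at this
      · exact h
    set c0 : ℝ := tf.inf' htfne (fun y => w (y : EuclideanSpace ℝ (Fin n)) - 1) with hc0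
    refine ⟨min c0 0, fun y hy => ?_⟩
    by_cases hyd : infDist y (frontier Ω) < δ
    · exact le_trans (min_le_right _ _) (hM y hy hyd)
    · push_neg at hyd
      have hyK : y ∈ K := ⟨subset_closure hy, hyd⟩
      have := htf hyK
      simp only [Set.mem_iUnion] at this
      obtain ⟨z, hz, hyz⟩ := this
      have h1 : c0 ≤ w (z : EuclideanSpace ℝ (Fin n)) - 1 := Finset.inf'_le _ hz
      have h2 : w (z : EuclideanSpace ℝ (Fin n)) - 1 < w y := hyz
      calc min c0 0 ≤ c0 := min_le_left _ _
        _ ≤ _ := h1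
        _ ≤ w y := le_of_lt h2

set_option maxHeartbeats 2000000 in
/-- **Lemma 2.2, second part.** Let `Ω ⊂ ℝⁿ` be an open bounded convex set and
`w : Ω → ℝ` a lower semicontinuous function with `w(x) → +∞` as `dist(x, ∂Ω) → 0`.
Then for every `x ∈ Ω` the infimum defining `w**(x)` is attained: there are `m ≤ n+1`
positive weights `tᵢ` summing to `1` and points `xᵢ ∈ Ω` with `Σ tᵢ xᵢ = x` and
`w**(x) = Σ tᵢ w(xᵢ)`. -/
theorem convEnv_attained {n : ℕ}
    (Ω : Set (EuclideanSpace ℝ (Fin n))) (w : EuclideanSpace ℝ (Fin n) → ℝ)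
    (hΩo : IsOpen Ω) (hΩb : Bornology.IsBounded Ω) (hΩc : Convex ℝ Ω) (hΩne : Ω.Nonempty)
    (hlsc : LowerSemicontinuousOn w Ω)
    (hblow : ∀ M : ℝ, ∃ δ > 0, ∀ x ∈ Ω, Metric.infDist x (frontier Ω) < δ → M ≤ w x) :
    ∀ x ∈ Ω, ∃ m : ℕ, 1 ≤ m ∧ m ≤ n + 1 ∧
      ∃ (t : Fin m → ℝ) (q : Fin m → EuclideanSpace ℝ (Fin n)),
        (∀ i, 0 < t i) ∧ (∀ i, q i ∈ Ω) ∧ ∑ i, t i = 1 ∧ ∑ i, t i • q i = x ∧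
        convEnv Ω w x = ∑ i, t i * w (q i) := by
  classical
  intro x hx
  set G : Set (EuclideanSpace ℝ (Fin n) × ℝ) := {p | p.1 ∈ Ω ∧ p.2 = w p.1} with hG
  set S : Set ℝ := {r : ℝ | ∃ (m : ℕ) (t : Fin m → ℝ) (q : Fin m → EuclideanSpace ℝ (Fin n)),
    (∀ i, 0 ≤ t i) ∧ (∀ i, q i ∈ Ω) ∧ ∑ i, t i = 1 ∧ ∑ i, t i • q i = x ∧
    r = ∑ i, t i * w (q i)} with hS
  have hconv : convEnv Ω w x = sInf S := rfl
  obtain ⟨c, hc⟩ := exists_lower_bound hΩo hΩb hlsc hblow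
  -- S is nonempty
  have hSne : S.Nonempty := by
    refine ⟨w x, 1, fun _ => 1, fun _ => x, fun _ => zero_le_one, fun _ => hx, by simp, by simp,
      by simp⟩
  -- S is bounded below
  have hSbd : BddBelow S := by
    refine ⟨c, fun r hr => ?_⟩
    obtain ⟨m, t, q, ht0, hqΩ, ht1, htq, hrv⟩ := hr
    have : ∑ i, t i * c ≤ ∑ i, t i * w (q i) :=
      Finset.sum_le_sum fun i _ => mul_le_mul_of_nonneg_left (hc _ (hqΩ i)) (ht0 i)
    rw [← Finset.sum_mul, ht1, one_mul] at this
    linarith [hrv ▸ this]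
  -- the minimizing sequence, of fixed arity n+2
  have hseq : ∀ k : ℕ, ∃ (t : Fin (n + 2) → ℝ) (q : Fin (n + 2) → EuclideanSpace ℝ (Fin n)),
      (∀ i, 0 ≤ t i) ∧ (∀ i, q i ∈ Ω) ∧ ∑ i, t i = 1 ∧ ∑ i, t i • q i = x ∧
      sInf S ≤ ∑ i, t i * w (q i) ∧ ∑ i, t i * w (q i) < sInf S + 1 / (k + 1) := by
    intro k
    have hpos : (0:ℝ) < 1 / (k + 1) := by positivity
    obtain ⟨r, hrS, hrlt⟩ := exists_lt_of_csInf_lt hSne (lt_add_of_pos_right _ hpos)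
    obtain ⟨m, t, q, ht0, hqΩ, ht1, htq, hrv⟩ := hrS
    have hhull : ((x, r) : EuclideanSpace ℝ (Fin n) × ℝ) ∈ convexHull ℝ G := by
      have := mem_hull_of_rep (w := w) ht0 hqΩ ht1 htq
      rwa [← hrv] at this
    obtain ⟨m', hm'1, hm'2, t', q', ht'pos, hq'Ω, ht'1, ht'x, ht'v, -⟩ := rep_of_mem_hull hhull
    set t'' : Fin (n + 2) → ℝ := fun j => if h : (j : ℕ) < m' then t' ⟨j, h⟩ else 0 with ht''
    set q'' : Fin (n + 2) → EuclideanSpace ℝ (Fin n) :=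
      fun j => if h : (j : ℕ) < m' then q' ⟨j, h⟩ else x with hq''
    have h0 : ∀ j, 0 ≤ t'' j := by
      intro j
      by_cases h : (j : ℕ) < m' <;> simp [ht'', h]
      exact le_of_lt (ht'pos _)
    have hqm : ∀ j, q'' j ∈ Ω := by
      intro j
      by_cases h : (j : ℕ) < m' <;> simp [hq'', h]
      exacts [hq'Ω _, hx]
    have e1 : ∑ j, t'' j = 1 := (sum_dite_pad hm'2 t').trans ht'1
    have e2 : ∑ j, t'' j • q'' j = x := by
      have h := (sum_dite_pad hm'2 (fun i => t' i • q' i)).trans ht'x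
      rw [← h]
      apply Finset.sum_congr rfl
      intro j _
      by_cases hj : (j : ℕ) < m' <;> simp [ht'', hq'', hj]
    have e3 : ∑ j, t'' j * w (q'' j) = r := by
      have h := (sum_dite_pad hm'2 (fun i => t' i * w (q' i))).trans ht'v
      rw [← h]
      apply Finset.sum_congr rfl
      intro j _
      by_cases hj : (j : ℕ) < m' <;> simp [ht'', hq'', hj]
    have hmem : r ∈ S := ⟨n + 2, t'', q'', h0, hqm, e1, e2, e3.symm⟩
    refine ⟨t'', q'', h0, hqm, e1, e2, ?_, ?_⟩
    · rw [e3]; exact csInf_le hSbd hmem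
    · rw [e3]; exact hrlt
  choose T Q hT0 hQΩ hT1 hTQ hlow hup using hseq
  -- compactness
  obtain ⟨tl, ql, hl0, hl1, hlcl, φ, hφ, htconv, hqconv⟩ :
      ∃ (tl : Fin (n + 2) → ℝ) (ql : Fin (n + 2) → EuclideanSpace ℝ (Fin n)),
        (∀ i, 0 ≤ tl i) ∧ (∀ i, tl i ≤ 1) ∧ (∀ i, ql i ∈ closure Ω) ∧
        ∃ φ : ℕ → ℕ, StrictMono φ ∧
          (∀ i, Tendsto (fun k => T (φ k) i) atTop (𝓝 (tl i))) ∧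
          (∀ i, Tendsto (fun k => Q (φ k) i) atTop (𝓝 (ql i))) := by
    set C : Set ((Fin (n + 2) → ℝ) × (Fin (n + 2) → EuclideanSpace ℝ (Fin n))) :=
      (Set.univ.pi fun _ => Icc (0:ℝ) 1) ×ˢ (Set.univ.pi fun _ => closure Ω) with hC
    have hCcpt : IsCompact C :=
      (isCompact_univ_pi fun _ => isCompact_Icc).prod
        (isCompact_univ_pi fun _ =>
          Metric.isCompact_iff_isClosed_bounded.2 ⟨isClosed_closure, hΩb.closure⟩)
    have hmem : ∀ k, ((T k, Q k) :
        (Fin (n + 2) → ℝ) × (Fin (n + 2) → EuclideanSpace ℝ (Fin n))) ∈ C := by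
      intro k
      constructor
      · intro i _
        refine ⟨hT0 k i, ?_⟩
        rw [← hT1 k]
        exact Finset.single_le_sum (fun j _ => hT0 k j) (Finset.mem_univ i)
      · intro i _
        exact subset_closure (hQΩ k i)
    obtain ⟨⟨tl, ql⟩, hmemC, φ, hφ, hconv⟩ := hCcpt.tendsto_subseq hmem
    have htconv : ∀ i, Tendsto (fun k => T (φ k) i) atTop (𝓝 (tl i)) := fun i =>
      ((((continuous_apply i).comp continuous_fst).tendsto
        ((tl, ql) : (Fin (n + 2) → ℝ) × (Fin (n + 2) → EuclideanSpace ℝ (Fin n)))).comp hconv)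
    have hqconv : ∀ i, Tendsto (fun k => Q (φ k) i) atTop (𝓝 (ql i)) := fun i =>
      ((((continuous_apply i).comp continuous_snd).tendsto
        ((tl, ql) : (Fin (n + 2) → ℝ) × (Fin (n + 2) → EuclideanSpace ℝ (Fin n)))).comp hconv)
    exact ⟨tl, ql, fun i => (hmemC.1 i (Set.mem_univ i)).1, fun i => (hmemC.1 i (Set.mem_univ i)).2,
      fun i => hmemC.2 i (Set.mem_univ i), φ, hφ, htconv, hqconv⟩
  -- value convergence
  have hrconv : Tendsto (fun k => ∑ i, T (φ k) i * w (Q (φ k) i)) atTop (𝓝 (sInf S)) := by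
    have h1 : Tendsto (fun k => sInf S + 1 / ((φ k : ℝ) + 1)) atTop (𝓝 (sInf S + 0)) :=
      tendsto_const_nhds.add (tendsto_one_div_add_atTop_nhds_zero_nat.comp hφ.tendsto_atTop)
    rw [add_zero] at h1
    exact tendsto_of_tendsto_of_tendsto_of_le_of_le tendsto_const_nhds h1
      (fun k => hlow (φ k)) (fun k => le_of_lt (hup (φ k)))
  -- support points stay inside
  have hsupp : ∀ i, 0 < tl i → ql i ∈ Ω := by
    intro i hti
    by_contra hqi
    have hfr : ql i ∈ frontier Ω := by
      rw [frontier, hΩo.interior_eq]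
      exact ⟨hlcl i, hqi⟩
    have hd0 : Tendsto (fun k => infDist (Q (φ k) i) (frontier Ω)) atTop (𝓝 0) := by
      have h := ((continuous_infDist_pt (frontier Ω)).tendsto (ql i)).comp (hqconv i)
      rwa [infDist_zero_of_mem hfr] at h
    set M : ℝ := max 0 ((sInf S + 1 + |c|) / (tl i / 2) + 1) with hM'
    obtain ⟨δ, hδ, hMδ⟩ := hblow M
    have hev1 : ∀ᶠ k in atTop, infDist (Q (φ k) i) (frontier Ω) < δ :=
      hd0.eventually (eventually_lt_nhds hδ)
    have hev2 : ∀ᶠ k in atTop, tl i / 2 < T (φ k) i :=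
      (htconv i).eventually (eventually_gt_nhds (by linarith))
    obtain ⟨k, h1, h2⟩ := (hev1.and hev2).exists
    have hwM : M ≤ w (Q (φ k) i) := hMδ _ (hQΩ _ i) h1
    have hsplit : ∑ j, T (φ k) j * w (Q (φ k) j)
        = T (φ k) i * w (Q (φ k) i) + ∑ j ∈ ({i}ᶜ : Finset (Fin (n + 2))),
          T (φ k) j * w (Q (φ k) j) :=
      Fintype.sum_eq_add_sum_compl i _
    have hct : ∑ j ∈ ({i}ᶜ : Finset (Fin (n + 2))), T (φ k) j ≤ 1 := by
      have h3 := Fintype.sum_eq_add_sum_compl i (T (φ k))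
      rw [hT1 (φ k)] at h3
      have := hT0 (φ k) i
      linarith
    have hct0 : 0 ≤ ∑ j ∈ ({i}ᶜ : Finset (Fin (n + 2))), T (φ k) j :=
      Finset.sum_nonneg fun j _ => hT0 (φ k) j
    have hcompl : -|c| ≤ ∑ j ∈ ({i}ᶜ : Finset (Fin (n + 2))), T (φ k) j * w (Q (φ k) j) := by
      have h3 : ∑ j ∈ ({i}ᶜ : Finset (Fin (n + 2))), T (φ k) j * c
          ≤ ∑ j ∈ ({i}ᶜ : Finset (Fin (n + 2))), T (φ k) j * w (Q (φ k) j) :=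
        Finset.sum_le_sum fun j _ => mul_le_mul_of_nonneg_left (hc _ (hQΩ _ j)) (hT0 _ j)
      have h4 : ∑ j ∈ ({i}ᶜ : Finset (Fin (n + 2))), T (φ k) j * c
          = (∑ j ∈ ({i}ᶜ : Finset (Fin (n + 2))), T (φ k) j) * c := by
        rw [Finset.sum_mul]
      nlinarith [abs_nonneg c, neg_abs_le c]
    have hM0 : (0:ℝ) ≤ M := le_max_left _ _
    have hMge : sInf S + 1 + |c| ≤ tl i / 2 * M := by
      have hM2 : (sInf S + 1 + |c|) / (tl i / 2) + 1 ≤ M := le_max_right _ _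
      have hp : (0:ℝ) < tl i / 2 := by linarith
      have := (div_le_iff₀ hp).1 (by linarith : (sInf S + 1 + |c|) / (tl i / 2) ≤ M)
      linarith
    have hTi : tl i / 2 * M ≤ T (φ k) i * w (Q (φ k) i) :=
      mul_le_mul (le_of_lt h2) hwM hM0 (hT0 _ i)
    have hfin : sInf S + 1 ≤ ∑ j, T (φ k) j * w (Q (φ k) j) := by
      rw [hsplit]; linarith
    have hub := hup (φ k)
    have hsmall : 1 / ((φ k : ℝ) + 1) ≤ 1 := by
      rw [div_le_one (by positivity : (0:ℝ) < (φ k : ℝ) + 1)]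
      linarith [(Nat.cast_nonneg (φ k) : (0:ℝ) ≤ (φ k : ℝ))]
    linarith
  -- limit identities
  have htl1 : ∑ i, tl i = 1 :=
    tendsto_nhds_unique (tendsto_finset_sum _ fun i _ => htconv i)
      (by simp only [hT1]; exact tendsto_const_nhds)
  have htlx : ∑ i, tl i • ql i = x :=
    tendsto_nhds_unique (tendsto_finset_sum _ fun i _ => (htconv i).smul (hqconv i))
      (by simp only [hTQ]; exact tendsto_const_nhds)
  set I : Finset (Fin (n + 2)) := Finset.univ.filter (fun i => 0 < tl i) with hI
  have hIt0 : ∀ i ∉ I, tl i = 0 := by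
    intro i hi
    simp only [hI, Finset.mem_filter, Finset.mem_univ, true_and, not_lt] at hi
    exact le_antisymm hi (hl0 i)
  have hI1 : ∑ i ∈ I, tl i = 1 := by
    rw [← htl1]
    exact Finset.sum_subset (Finset.subset_univ I) (fun i _ hi => hIt0 i hi)
  have hIx : ∑ i ∈ I, tl i • ql i = x := by
    rw [← htlx]
    exact Finset.sum_subset (Finset.subset_univ I)
      (fun i _ hi => by rw [hIt0 i hi, zero_smul])
  have hIq : ∀ i ∈ I, ql i ∈ Ω := by
    intro i hi
    simp only [hI, Finset.mem_filter, Finset.mem_univ, true_and] at hi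
    exact hsupp i hi
  -- the limit value
  have hAle : ∑ i ∈ I, tl i * w (ql i) ≤ sInf S := by
    refine _root_.le_of_forall_pos_le_add fun ε hε => ?_
    have key : ∑ i ∈ I, tl i * (w (ql i) - ε) ≤ sInf S := by
      have haev : ∀ᶠ k in atTop, ∀ i ∈ I, w (ql i) - ε < w (Q (φ k) i) := by
        rw [eventually_all_finset]
        intro i hi
        have hlsci := hlsc (ql i) (hIq i hi) (w (ql i) - ε) (by linarith)
        have htd : Tendsto (fun k => Q (φ k) i) atTop (𝓝[Ω] (ql i)) :=
          tendsto_nhdsWithin_of_tendsto_nhds_of_eventually_within _ (hqconv i)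
            (Eventually.of_forall fun k => hQΩ _ i)
        exact htd.eventually hlsci
      have hev : ∀ᶠ k in atTop,
          (∑ i ∈ I, T (φ k) i * (w (ql i) - ε) + ∑ i ∈ Iᶜ, T (φ k) i * c)
            ≤ ∑ i, T (φ k) i * w (Q (φ k) i) := by
        filter_upwards [haev] with k hk
        rw [← Finset.sum_add_sum_compl I (fun i => T (φ k) i * w (Q (φ k) i))]
        refine add_le_add ?_ ?_
        · exact Finset.sum_le_sum fun i hi =>
            mul_le_mul_of_nonneg_left (le_of_lt (hk i hi)) (hT0 _ i)
        · exact Finset.sum_le_sum fun i _ =>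
            mul_le_mul_of_nonneg_left (hc _ (hQΩ _ i)) (hT0 _ i)
      have hlim : Tendsto
          (fun k => ∑ i ∈ I, T (φ k) i * (w (ql i) - ε) + ∑ i ∈ Iᶜ, T (φ k) i * c) atTop
          (𝓝 (∑ i ∈ I, tl i * (w (ql i) - ε) + ∑ i ∈ Iᶜ, tl i * c)) :=
        (tendsto_finset_sum _ fun i _ => (htconv i).mul tendsto_const_nhds).add
          (tendsto_finset_sum _ fun i _ => (htconv i).mul tendsto_const_nhds)
      have hzero : ∑ i ∈ Iᶜ, tl i * c = 0 :=
        Finset.sum_eq_zero fun i hi => by rw [hIt0 i (Finset.mem_compl.1 hi), zero_mul]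
      have hres := le_of_tendsto_of_tendsto hlim hrconv hev
      rw [hzero, add_zero] at hres
      exact hres
    have hexp : ∑ i ∈ I, tl i * w (ql i) = ∑ i ∈ I, tl i * (w (ql i) - ε) + ε * ∑ i ∈ I, tl i := by
      rw [Finset.mul_sum, ← Finset.sum_add_distrib]
      apply Finset.sum_congr rfl
      intro i _
      ring
    rw [hexp, hI1, mul_one]
    exact add_le_add key le_rfl
  -- reindexing I
  obtain ⟨m₀, hm₀1, t₀, q₀, ht₀pos, hq₀Ω, ht₀1, ht₀x, ht₀v⟩ :
      ∃ m₀ : ℕ, 1 ≤ m₀ ∧ ∃ (t₀ : Fin m₀ → ℝ) (q₀ : Fin m₀ → EuclideanSpace ℝ (Fin n)),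
        (∀ j, 0 < t₀ j) ∧ (∀ j, q₀ j ∈ Ω) ∧ ∑ j, t₀ j = 1 ∧ ∑ j, t₀ j • q₀ j = x ∧
        ∑ j, t₀ j * w (q₀ j) = ∑ i ∈ I, tl i * w (ql i) := by
    have hIne : I.Nonempty := by
      apply Finset.nonempty_of_sum_ne_zero (f := tl)
      rw [hI1]; exact one_ne_zero
    have hcard : 1 ≤ I.card := Finset.card_pos.2 hIne
    have hsum : ∀ (f : Fin (n + 2) → ℝ),
        ∑ j : Fin I.card, f ((I.equivFin.symm j : I) : Fin (n + 2)) = ∑ i ∈ I, f i := by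
      intro f
      rw [Equiv.sum_comp I.equivFin.symm (fun (i : I) => f (i : Fin (n + 2)))]
      exact Finset.sum_coe_sort I f
    have hsum' : ∀ (f : Fin (n + 2) → EuclideanSpace ℝ (Fin n)),
        ∑ j : Fin I.card, f ((I.equivFin.symm j : I) : Fin (n + 2)) = ∑ i ∈ I, f i := by
      intro f
      rw [Equiv.sum_comp I.equivFin.symm (fun (i : I) => f (i : Fin (n + 2)))]
      exact Finset.sum_coe_sort I f
    refine ⟨I.card, hcard, fun j => tl ((I.equivFin.symm j : I) : Fin (n + 2)),
      fun j => ql ((I.equivFin.symm j : I) : Fin (n + 2)), ?_, ?_, ?_, ?_, ?_⟩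
    · intro j
      have := (I.equivFin.symm j).2
      simp only [hI, Finset.mem_filter, Finset.mem_univ, true_and] at this
      exact this
    · intro j
      exact hIq _ (I.equivFin.symm j).2
    · rw [hsum tl]; exact hI1
    · exact (hsum' (fun i => tl i • ql i)).trans hIx
    · exact hsum (fun i => tl i * w (ql i))
  have hAge : sInf S ≤ ∑ i ∈ I, tl i * w (ql i) := by
    refine csInf_le hSbd ?_
    exact ⟨m₀, t₀, q₀, fun j => le_of_lt (ht₀pos j), hq₀Ω, ht₀1, ht₀x, ht₀v.symm⟩
  have hA : ∑ i ∈ I, tl i * w (ql i) = sInf S := le_antisymm hAle hAge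
  -- (x, sInf S) is in the convex hull of the graph
  have hhull : ((x, sInf S) : EuclideanSpace ℝ (Fin n) × ℝ) ∈ convexHull ℝ G := by
    have := mem_hull_of_rep (w := w) (fun j => le_of_lt (ht₀pos j)) hq₀Ω ht₀1 ht₀x
    rwa [ht₀v, hA] at this
  -- final Caratheodory representation
  obtain ⟨m, hm1, hm2, t, q, htpos, hqΩ', ht1', htx', htv', hai⟩ := rep_of_mem_hull hhull
  rcases Nat.lt_or_ge m (n + 2) with hlt | hge
  · exact ⟨m, hm1, by omega, t, q, htpos, hqΩ', ht1', htx', by rw [hconv, ← htv']⟩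
  · exfalso
    have hmeq : m = n + 2 := le_antisymm hm2 hge
    subst hmeq
    set p : Fin (n + 2) → EuclideanSpace ℝ (Fin n) × ℝ := fun j => (q j, w (q j)) with hp
    have hfr : Module.finrank ℝ (EuclideanSpace ℝ (Fin n) × ℝ) = n + 1 := by
      rw [Module.finrank_prod, finrank_euclideanSpace_fin, Module.finrank_self]
    have htop : affineSpan ℝ (Set.range p) = ⊤ := by
      apply hai.affineSpan_eq_top_iff_card_eq_finrank_add_one.2
      rw [Fintype.card_fin, hfr]
    have hvs : vectorSpan ℝ (Set.range p) = ⊤ :=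
      AffineSubspace.vectorSpan_eq_top_of_affineSpan_eq_top ℝ _ _ htop
    have hv : (((0 : EuclideanSpace ℝ (Fin n)), (-1 : ℝ)) :
        EuclideanSpace ℝ (Fin n) × ℝ) ∈ Submodule.span ℝ (Set.range fun j => p j -ᵥ p 0) := by
      rw [← vectorSpan_range_eq_span_range_vsub_right ℝ p 0, hvs]
      trivial
    obtain ⟨cf, hcf⟩ := (Submodule.mem_span_range_iff_exists_fun ℝ).1 hv
    set d : Fin (n + 2) → ℝ := fun j => cf j - if j = 0 then ∑ i, cf i else 0 with hd
    have hd0 : ∑ j, d j = 0 := by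
      simp [hd, Finset.sum_sub_distrib]
    have hdp : ∑ j, d j • p j = (((0 : EuclideanSpace ℝ (Fin n)), (-1 : ℝ))) := by
      have expand : ∑ j, d j • p j = ∑ j, cf j • p j - (∑ i, cf i) • p 0 := by
        rw [hd]
        simp only [sub_smul, ite_smul, zero_smul, Finset.sum_sub_distrib]
        congr 1
        rw [Finset.sum_ite_eq' Finset.univ 0 (fun j => (∑ i, cf i) • p j)]
        simp
      rw [expand, ← hcf]
      simp only [vsub_eq_sub, smul_sub, Finset.sum_sub_distrib, ← Finset.sum_smul]
    have hq0 : ∑ j, d j • q j = 0 := by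
      have := congrArg Prod.fst hdp
      rw [Prod.fst_sum] at this
      simpa [hp] using this
    have hw1 : ∑ j, d j * w (q j) = -1 := by
      have := congrArg Prod.snd hdp
      rw [Prod.snd_sum] at this
      simpa [hp, smul_eq_mul] using this
    obtain ⟨ε, hεpos, hεd⟩ : ∃ ε > 0, ∀ j, ε * |d j| < t j := by
      obtain ⟨j0, -, hj0⟩ := Finset.exists_min_image Finset.univ (fun j => t j / (|d j| + 1))
        ⟨0, Finset.mem_univ 0⟩
      refine ⟨t j0 / (|d j0| + 1), div_pos (htpos j0) (by positivity), fun j => ?_⟩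
      have h1 : t j0 / (|d j0| + 1) ≤ t j / (|d j| + 1) := hj0 j (Finset.mem_univ j)
      have h2 : (0:ℝ) < |d j| + 1 := by positivity
      have h3 : t j0 / (|d j0| + 1) * (|d j| + 1) ≤ t j := (le_div_iff₀ h2).1 h1
      have h4 : 0 < t j0 / (|d j0| + 1) := div_pos (htpos j0) (by positivity)
      nlinarith
    set t' : Fin (n + 2) → ℝ := fun j => t j + ε * d j with ht'
    have ht'pos : ∀ j, 0 < t' j := by
      intro j
      have h1 : -(ε * |d j|) ≤ ε * d j := by
        have := neg_abs_le (d j)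
        nlinarith
      have := hεd j
      simp only [ht']
      linarith
    have ht'1 : ∑ j, t' j = 1 := by
      simp only [ht']
      rw [Finset.sum_add_distrib, ← Finset.mul_sum, hd0, mul_zero, add_zero]
      exact ht1'
    have ht'x : ∑ j, t' j • q j = x := by
      simp only [ht', add_smul, mul_smul]
      rw [Finset.sum_add_distrib, ← Finset.smul_sum, hq0, smul_zero, add_zero]
      exact htx'
    have ht'v : ∑ j, t' j * w (q j) = sInf S - ε := by
      simp only [ht', add_mul, mul_assoc]
      rw [Finset.sum_add_distrib, ← Finset.mul_sum, hw1, htv']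
      ring
    have hmem : sInf S - ε ∈ S :=
      ⟨n + 2, t', q, fun j => le_of_lt (ht'pos j), hqΩ', ht'1, ht'x, ht'v.symm⟩
    have := csInf_le hSbd hmem
    linarith
end

section
/- Let Ω be an open bounded convex subset of ℝⁿ and let w ∈ C²(Ω) satisfy w(x) → +∞ as dist(x, ∂Ω) → 0. Fix x ∈ Ω and let t₁, …, t_m > 0 (m ≤ n+1) with Σ t_i = 1 and x₁, …, x_m ∈ Ω with Σ t_i x_i = x be optimal for the infimum defining w**(x). If (p, A) ∈ J^{2,−}w**(x), then ∇w(x_i) = p for every i = 1, …, m, and the Hessian matrices A_i := ∇²w(x_i) are positive semidefinite for every i = 1, …, m. -/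
open Real Set Metric Filter Matrix

section AuxiliaryLemmas

open Topology

lemma second_order_test {g g' : ℝ → ℝ} {c a : ℝ} (ha : 0 < a)
    (hg : ∀ s : ℝ, |s| < a → HasDerivAt g (g' s) s)
    (hmin : ∀ s : ℝ, |s| < a → g 0 ≤ g s)
    (h0 : g' 0 = 0) (hg' : HasDerivAt g' c 0) : 0 ≤ c := by
  by_contra hc
  push_neg at hc
  have hslope : Tendsto (fun s => g' s / s) (𝓝[≠] (0:ℝ)) (𝓝 c) := by
    have := hasDerivAt_iff_tendsto_slope.mp hg'
    simpa [slope_fun_def_field, h0] using this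
  have hev : ∀ᶠ s in 𝓝[≠] (0:ℝ), g' s / s < 0 := hslope.eventually_lt_const hc
  rw [eventually_nhdsWithin_iff] at hev
  rcases Metric.eventually_nhds_iff.mp hev with ⟨δ, hδpos, hδ⟩
  set b := min a δ / 2 with hb
  have hbpos : 0 < b := by positivity
  have hba : b < a := by
    have : min a δ ≤ a := min_le_left _ _
    simp only [hb]; linarith
  have hbδ : b < δ := by
    have : min a δ ≤ δ := min_le_right _ _
    simp only [hb]; linarith
  have hanti : StrictAntiOn g (Icc 0 b) := by
    apply strictAntiOn_of_deriv_neg (convex_Icc 0 b)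
    · intro s hs
      have hsa : |s| < a := by
        rw [abs_lt]; constructor <;> [linarith [hs.1]; linarith [hs.2]]
      exact ((hg s hsa).continuousAt).continuousWithinAt
    · intro s hs
      rw [interior_Icc] at hs
      have hsa : |s| < a := by rw [abs_lt]; constructor <;> [linarith [hs.1]; linarith [hs.2]]
      have hsδ : dist s 0 < δ := by rw [Real.dist_eq, sub_zero, abs_lt]; constructor <;> [linarith [hs.1]; linarith [hs.2]]
      have hq := hδ hsδ (by simpa using ne_of_gt hs.1)
      rw [(hg s hsa).deriv]
      rcases div_neg_iff.mp hq with ⟨_, h2⟩ | ⟨h1, _⟩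
      · linarith [hs.1]
      · exact h1
  have hlt : g b < g 0 :=
    hanti ⟨le_rfl, hbpos.le⟩ ⟨hbpos.le, le_rfl⟩ hbpos
  have := hmin b (by rw [abs_of_pos hbpos]; exact hba)
  linarith

lemma exists_lb {n : ℕ} {Ω : Set (EuclideanSpace ℝ (Fin n))} {w : EuclideanSpace ℝ (Fin n) → ℝ}
    (hΩo : IsOpen Ω) (hΩb : Bornology.IsBounded Ω) (hw : ContinuousOn w Ω)
    (hblow : ∀ M : ℝ, ∃ δ > 0, ∀ x ∈ Ω, Metric.infDist x (frontier Ω) < δ → M ≤ w x) :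
    ∃ c : ℝ, ∀ y ∈ Ω, c ≤ w y := by
  obtain ⟨δ, hδpos, hδ⟩ := hblow 0
  set K : Set (EuclideanSpace ℝ (Fin n)) :=
    closure Ω ∩ {y | δ ≤ Metric.infDist y (frontier Ω)} with hK
  have hKclosed : IsClosed K :=
    isClosed_closure.inter (isClosed_le continuous_const (continuous_infDist_pt _))
  have hKcompact : IsCompact K :=
    Metric.isCompact_of_isClosed_isBounded hKclosed (hΩb.closure.subset inter_subset_left)
  have hKΩ : K ⊆ Ω := by
    rintro y ⟨hy1, hy2⟩
    by_contra hyΩ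
    have hyf : y ∈ frontier Ω := by
      rw [hΩo.frontier_eq]; exact ⟨hy1, hyΩ⟩
    have : Metric.infDist y (frontier Ω) = 0 := Metric.infDist_zero_of_mem hyf
    have hy2' : δ ≤ Metric.infDist y (frontier Ω) := hy2
    rw [this] at hy2'; linarith
  obtain ⟨c₁, hc₁⟩ := (hKcompact.image_of_continuousOn (hw.mono hKΩ)).bddBelow
  refine ⟨min c₁ 0, fun y hy => ?_⟩
  rcases lt_or_ge (Metric.infDist y (frontier Ω)) δ with h | h
  · exact le_trans (min_le_right _ _) (hδ y hy h)
  · exact le_trans (min_le_left _ _) (hc₁ ⟨y, ⟨subset_closure hy, h⟩, rfl⟩)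

lemma convEnv_le_of_mem {n : ℕ} {Ω : Set (EuclideanSpace ℝ (Fin n))}
    {w : EuclideanSpace ℝ (Fin n) → ℝ} {c : ℝ} (hc : ∀ y ∈ Ω, c ≤ w y)
    {z : EuclideanSpace ℝ (Fin n)} {m : ℕ}
    {t : Fin m → ℝ} {q : Fin m → EuclideanSpace ℝ (Fin n)}
    (ht : ∀ i, 0 ≤ t i) (hq : ∀ i, q i ∈ Ω) (hts : ∑ i, t i = 1)
    (hqs : ∑ i, t i • q i = z) :
    convEnv Ω w z ≤ ∑ i, t i * w (q i) := by
  apply csInf_le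
  · refine ⟨c, ?_⟩
    rintro r ⟨m', t', q', ht', hq', hts', hqs', rfl⟩
    calc c = ∑ i, t' i * c := by rw [← Finset.sum_mul, hts', one_mul]
    _ ≤ ∑ i, t' i * w (q' i) :=
      Finset.sum_le_sum fun i _ => mul_le_mul_of_nonneg_left (hc (q' i) (hq' i)) (ht' i)
  · exact ⟨m, t, q, ht, hq, hts, hqs, rfl⟩

lemma grad_aux {n : ℕ}
    (Ω : Set (EuclideanSpace ℝ (Fin n))) (w : EuclideanSpace ℝ (Fin n) → ℝ)
    (hΩo : IsOpen Ω) (hΩb : Bornology.IsBounded Ω) (hΩc : Convex ℝ Ω) (hΩne : Ω.Nonempty)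
    (hw : ContDiffOn ℝ 2 w Ω)
    (c : ℝ) (hc : ∀ y ∈ Ω, c ≤ w y)
    (x : EuclideanSpace ℝ (Fin n)) (hx : x ∈ Ω)
    (m : ℕ) (hm1 : 1 ≤ m) (hm : m ≤ n + 1)
    (t : Fin m → ℝ) (q : Fin m → EuclideanSpace ℝ (Fin n))
    (ht : ∀ i, 0 < t i) (hq : ∀ i, q i ∈ Ω) (hts : ∑ i, t i = 1) (hqs : ∑ i, t i • q i = x)
    (hopt : convEnv Ω w x = ∑ i, t i * w (q i))
    (φ : EuclideanSpace ℝ (Fin n) → ℝ) (hφ : ContDiff ℝ (⊤ : ℕ∞) φ)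
    (ε : ℝ) (hε : ε > 0) (hloc : ∀ y ∈ Ω, ‖y - x‖ < ε → convEnv Ω w x - φ x ≤ convEnv Ω w y - φ y)
    (i : Fin m) :
    fderiv ℝ w (q i) = fderiv ℝ φ x := by
  have hwd : ∀ y ∈ Ω, DifferentiableAt ℝ w y := fun y hy =>
    (hw.differentiableOn two_ne_zero).differentiableAt (hΩo.mem_nhds hy)
  obtain ⟨ρ₀, hρ₀, hball⟩ := Metric.isOpen_iff.mp hΩo (q i) (hq i)
  set ρ := min ρ₀ (ε / t i) with hρdef
  have hρ : 0 < ρ := lt_min hρ₀ (div_pos hε (ht i))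
  -- sums split at i
  have hsplitx : x = t i • q i + ∑ j ∈ Finset.univ.erase i, t j • q j := by
    rw [← hqs, ← Finset.add_sum_erase _ _ (Finset.mem_univ i)]
  have hsplitw : ∑ j, t j * w (q j)
      = t i * w (q i) + ∑ j ∈ Finset.univ.erase i, t j * w (q j) := by
    rw [← Finset.add_sum_erase _ _ (Finset.mem_univ i)]
  have hFmin : IsLocalMin (fun y => t i * w y - φ (x + t i • (y - q i))) (q i) := by
    rw [IsLocalMin, IsMinFilter, Metric.eventually_nhds_iff]
    refine ⟨ρ, hρ, fun y hy => ?_⟩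
    have hyΩ : y ∈ Ω := hball (Metric.mem_ball.mpr (lt_of_lt_of_le hy (min_le_left _ _)))
    have hE2 : ∑ j, t j • Function.update q i y j
        = t i • y + ∑ j ∈ Finset.univ.erase i, t j • q j := by
      rw [← Finset.add_sum_erase _ _ (Finset.mem_univ i), Function.update_self]
      congr 1
      exact Finset.sum_congr rfl fun j hj => by
        rw [Function.update_of_ne (Finset.mem_erase.mp hj).1]
    have hzeq : ∑ j, t j • Function.update q i y j = x + t i • (y - q i) := by
      rw [hE2, hsplitx]; module
    have hzΩ : x + t i • (y - q i) ∈ Ω := by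
      rw [← hzeq]
      exact hΩc.sum_mem (fun j _ => (ht j).le) hts (fun j _ => by
        rcases eq_or_ne j i with rfl | hji
        · rw [Function.update_self]; exact hyΩ
        · rw [Function.update_of_ne hji]; exact hq j)
    have hznorm : ‖(x + t i • (y - q i)) - x‖ < ε := by
      have h1 : ‖(x + t i • (y - q i)) - x‖ = t i * ‖y - q i‖ := by
        rw [add_sub_cancel_left, norm_smul, Real.norm_eq_abs, abs_of_pos (ht i)]
      rw [h1]
      have h2 : ‖y - q i‖ < ε / t i := by
        rw [← dist_eq_norm]; exact lt_of_lt_of_le hy (min_le_right _ _)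
      calc t i * ‖y - q i‖ < t i * (ε / t i) := by
            exact mul_lt_mul_of_pos_left h2 (ht i)
      _ = ε := by rw [mul_comm, div_mul_cancel₀ ε (ht i).ne']
    have hkey := hloc _ hzΩ hznorm
    have hCE : convEnv Ω w (x + t i • (y - q i)) ≤ ∑ j, t j * w (Function.update q i y j) :=
      convEnv_le_of_mem hc (fun j => (ht j).le) (fun j => by
        rcases eq_or_ne j i with rfl | hji
        · rw [Function.update_self]; exact hyΩ
        · rw [Function.update_of_ne hji]; exact hq j) hts hzeq
    have hE1 : ∑ j, t j * w (Function.update q i y j)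
        = t i * w y + ∑ j ∈ Finset.univ.erase i, t j * w (q j) := by
      rw [← Finset.add_sum_erase _ _ (Finset.mem_univ i), Function.update_self]
      congr 1
      exact Finset.sum_congr rfl fun j hj => by
        rw [Function.update_of_ne (Finset.mem_erase.mp hj).1]
    rw [hopt, hsplitw] at hkey
    rw [hE1] at hCE
    have hq0 : (q i : EuclideanSpace ℝ (Fin n)) - q i = 0 := sub_self _
    simp only [hq0, smul_zero, add_zero]
    linarith
  have hDw : HasFDerivAt w (fderiv ℝ w (q i)) (q i) := (hwd _ (hq i)).hasFDerivAt
  have hg : HasFDerivAt (fun y : EuclideanSpace ℝ (Fin n) => x + t i • (y - q i))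
      (t i • ContinuousLinearMap.id ℝ (EuclideanSpace ℝ (Fin n))) (q i) :=
    (((hasFDerivAt_id (q i)).sub_const (q i)).const_smul (t i)).const_add x
  have hDφ : HasFDerivAt φ (fderiv ℝ φ x) (x + t i • (q i - q i)) := by
    simpa using ((hφ.differentiable (by simp)) x).hasFDerivAt
  have hcomp : HasFDerivAt (fun y => φ (x + t i • (y - q i)))
      ((fderiv ℝ φ x).comp (t i • ContinuousLinearMap.id ℝ (EuclideanSpace ℝ (Fin n)))) (q i) :=
    hDφ.comp (q i) hg
  have hF := (hDw.const_mul (t i)).sub hcomp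
  have h0 := hFmin.hasFDerivAt_eq_zero hF
  ext u
  have h1 := DFunLike.congr_fun h0 u
  simp only [ContinuousLinearMap.sub_apply, ContinuousLinearMap.smul_apply,
    ContinuousLinearMap.comp_apply, ContinuousLinearMap.coe_smul', Pi.smul_apply,
    ContinuousLinearMap.coe_id', id_eq, _root_.map_smul, smul_eq_mul,
    ContinuousLinearMap.zero_apply] at h1
  have := (ht i).ne'
  have h2 : t i * (fderiv ℝ w (q i) u - fderiv ℝ φ x u) = 0 := by linear_combination h1
  have h3 := mul_eq_zero.mp h2
  rcases h3 with h3 | h3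
  · exact absurd h3 this
  · linarith

lemma split_aux {n : ℕ}
    (Ω : Set (EuclideanSpace ℝ (Fin n))) (w : EuclideanSpace ℝ (Fin n) → ℝ)
    (hΩc : Convex ℝ Ω)
    (c : ℝ) (hc : ∀ y ∈ Ω, c ≤ w y)
    (x : EuclideanSpace ℝ (Fin n))
    (m : ℕ)
    (t : Fin m → ℝ) (q : Fin m → EuclideanSpace ℝ (Fin n))
    (ht : ∀ i, 0 < t i) (hq : ∀ i, q i ∈ Ω) (hts : ∑ i, t i = 1) (hqs : ∑ i, t i • q i = x)
    (hopt : convEnv Ω w x = ∑ i, t i * w (q i))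
    (i : Fin m)
    (y : EuclideanSpace ℝ (Fin n)) (hy : y ∈ Ω) (z : EuclideanSpace ℝ (Fin n)) (hz : z ∈ Ω)
    (hyz : y + z = (2:ℝ) • q i) :
    2 * w (q i) ≤ w y + w z := by
  have hsplitx : x = t i • q i + ∑ j ∈ Finset.univ.erase i, t j • q j := by
    rw [← hqs, ← Finset.add_sum_erase _ _ (Finset.mem_univ i)]
  have hsplitw : ∑ j, t j * w (q j)
      = t i * w (q i) + ∑ j ∈ Finset.univ.erase i, t j * w (q j) := by
    rw [← Finset.add_sum_erase _ _ (Finset.mem_univ i)]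
  set T : Fin (m+1) → ℝ := Fin.snoc (Function.update t i (t i / 2)) (t i / 2) with hT
  set Q : Fin (m+1) → EuclideanSpace ℝ (Fin n) := Fin.snoc (Function.update q i y) z with hQ
  have hT0 : ∀ j, 0 ≤ T j := by
    intro j
    refine Fin.lastCases ?_ ?_ j
    · simp only [hT, Fin.snoc_last]; linarith [ht i]
    · intro k
      simp only [hT, Fin.snoc_castSucc]
      rcases eq_or_ne k i with rfl | hki
      · rw [Function.update_self]; linarith [ht k]
      · rw [Function.update_of_ne hki]; exact (ht k).le
  have hQΩ : ∀ j, Q j ∈ Ω := by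
    intro j
    refine Fin.lastCases ?_ ?_ j
    · simp only [hQ, Fin.snoc_last]; exact hz
    · intro k
      simp only [hQ, Fin.snoc_castSucc]
      rcases eq_or_ne k i with rfl | hki
      · rw [Function.update_self]; exact hy
      · rw [Function.update_of_ne hki]; exact hq k
  have hupdT : ∑ j : Fin m, Function.update t i (t i / 2) j
      = t i / 2 + ∑ j ∈ Finset.univ.erase i, t j := by
    rw [← Finset.add_sum_erase _ _ (Finset.mem_univ i), Function.update_self]
    congr 1
    exact Finset.sum_congr rfl fun j hj => by
      rw [Function.update_of_ne (Finset.mem_erase.mp hj).1]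
  have htse : t i + ∑ j ∈ Finset.univ.erase i, t j = 1 := by
    rw [Finset.add_sum_erase _ _ (Finset.mem_univ i)]; exact hts
  have hTs : ∑ j, T j = 1 := by
    rw [Fin.sum_univ_castSucc]
    simp only [hT, Fin.snoc_castSucc, Fin.snoc_last]
    rw [hupdT]; linarith
  have hQs : ∑ j, T j • Q j = x := by
    rw [Fin.sum_univ_castSucc]
    simp only [hT, hQ, Fin.snoc_castSucc, Fin.snoc_last]
    have hupd : ∑ j : Fin m, Function.update t i (t i / 2) j • Function.update q i y j
        = (t i / 2) • y + ∑ j ∈ Finset.univ.erase i, t j • q j := by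
      rw [← Finset.add_sum_erase _ _ (Finset.mem_univ i), Function.update_self,
        Function.update_self]
      congr 1
      exact Finset.sum_congr rfl fun j hj => by
        rw [Function.update_of_ne (Finset.mem_erase.mp hj).1,
          Function.update_of_ne (Finset.mem_erase.mp hj).1]
    rw [hupd, hsplitx]
    have h2q : (t i / 2) • (y + z) = (t i / 2) • ((2:ℝ) • q i) := by rw [hyz]
    rw [smul_smul] at h2q
    have heq : (t i / 2) • y + (t i / 2) • z = t i • q i := by
      rw [← smul_add, h2q]; norm_num
    rw [← heq]; module
  have h1 : convEnv Ω w x ≤ ∑ j, T j * w (Q j) :=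
    convEnv_le_of_mem hc hT0 hQΩ hTs hQs
  have h2 : ∑ j, T j * w (Q j)
      = t i / 2 * w y + t i / 2 * w z + ∑ j ∈ Finset.univ.erase i, t j * w (q j) := by
    rw [Fin.sum_univ_castSucc]
    simp only [hT, hQ, Fin.snoc_castSucc, Fin.snoc_last]
    have hupd : ∑ j : Fin m, Function.update t i (t i / 2) j * w (Function.update q i y j)
        = (t i / 2) * w y + ∑ j ∈ Finset.univ.erase i, t j * w (q j) := by
      rw [← Finset.add_sum_erase _ _ (Finset.mem_univ i), Function.update_self,
        Function.update_self]
      congr 1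
      exact Finset.sum_congr rfl fun j hj => by
        rw [Function.update_of_ne (Finset.mem_erase.mp hj).1,
          Function.update_of_ne (Finset.mem_erase.mp hj).1]
    rw [hupd]; ring
  rw [hopt, hsplitw, h2] at h1
  have h3 : t i * (2 * w (q i)) ≤ t i * (w y + w z) := by linarith
  exact le_of_mul_le_mul_left h3 (ht i)

lemma psd_aux {n : ℕ}
    (Ω : Set (EuclideanSpace ℝ (Fin n))) (w : EuclideanSpace ℝ (Fin n) → ℝ)
    (hΩo : IsOpen Ω)
    (hw : ContDiffOn ℝ 2 w Ω)
    (m : ℕ) (q : Fin m → EuclideanSpace ℝ (Fin n)) (hq : ∀ i, q i ∈ Ω)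
    (i : Fin m)
    (hsplit : ∀ y ∈ Ω, ∀ z ∈ Ω, y + z = (2:ℝ) • q i → 2 * w (q i) ≤ w y + w z) :
    (hessianMatrix w (q i)).PosSemidef := by
  have hwd : ∀ y ∈ Ω, DifferentiableAt ℝ w y := fun y hy =>
    (hw.differentiableOn two_ne_zero).differentiableAt (hΩo.mem_nhds hy)
  have hfd1 : ContDiffOn ℝ 1 (fun y => fderiv ℝ w y) Ω :=
    hw.fderiv_of_isOpen hΩo (by norm_num)
  have hfd : DifferentiableAt ℝ (fun y => fderiv ℝ w y) (q i) :=
    (hfd1.differentiableOn one_ne_zero).differentiableAt (hΩo.mem_nhds (hq i))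
  set f'' := fderiv ℝ (fun y => fderiv ℝ w y) (q i) with hf''def
  have hf'' : HasFDerivAt (fun y => fderiv ℝ w y) f'' (q i) := hfd.hasFDerivAt
  have hsymm : ∀ a b, f'' a b = f'' b a := by
    intro a b
    have hev : ∀ᶠ y in 𝓝 (q i), HasFDerivAt w (fderiv ℝ w y) y := by
      filter_upwards [hΩo.mem_nhds (hq i)] with y hy using (hwd y hy).hasFDerivAt
    exact second_derivative_symmetric_of_eventually hev hf'' a b
  have hHent : ∀ a b, hessianMatrix w (q i) a b
      = f'' (EuclideanSpace.single a 1) (EuclideanSpace.single b 1) := by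
    intro a b
    show fderiv ℝ (fun y => fderiv ℝ w y (EuclideanSpace.single b 1)) (q i)
      (EuclideanSpace.single a 1) = _
    rw [fderiv_clm_apply hfd (differentiableAt_const _)]
    simp [hf''def]
  -- the quadratic form is nonneg
  have hquad : ∀ v : EuclideanSpace ℝ (Fin n), 0 ≤ f'' v v := by
    intro v
    rcases eq_or_ne v 0 with rfl | hv
    · simp
    obtain ⟨r, hr, hball⟩ := Metric.isOpen_iff.mp hΩo (q i) (hq i)
    set a := r / ‖v‖ with hadef
    have hapos : 0 < a := div_pos hr (norm_pos_iff.mpr hv)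
    have hmem : ∀ s : ℝ, |s| < a → q i + s • v ∈ Ω ∧ q i - s • v ∈ Ω := by
      intro s hs
      have hn : ‖s • v‖ < r := by
        rw [norm_smul, Real.norm_eq_abs]
        calc |s| * ‖v‖ < a * ‖v‖ := by
              exact mul_lt_mul_of_pos_right hs (norm_pos_iff.mpr hv)
        _ = r := by rw [hadef, div_mul_cancel₀ _ (norm_pos_iff.mpr hv).ne']
      constructor <;> apply hball <;> rw [Metric.mem_ball, dist_eq_norm]
      · simpa using hn
      · simpa [norm_neg] using hn
    set G : ℝ → ℝ := fun s => w (q i + s • v) + w (q i - s • v) with hG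
    set G' : ℝ → ℝ := fun s => fderiv ℝ w (q i + s • v) v - fderiv ℝ w (q i - s • v) v with hG'
    have hcp : ∀ s : ℝ, HasDerivAt (fun s : ℝ => q i + s • v) v s := fun s => by
      simpa using ((hasDerivAt_id s).smul_const v).const_add (q i)
    have hcm : ∀ s : ℝ, HasDerivAt (fun s : ℝ => q i - s • v) (-v) s := fun s => by
      simpa using ((hasDerivAt_id s).smul_const v).const_sub (q i)
    have hgd : ∀ s : ℝ, |s| < a → HasDerivAt G (G' s) s := by
      intro s hs
      obtain ⟨hp, hmn⟩ := hmem s hs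
      have h1 : HasDerivAt (fun s : ℝ => w (q i + s • v)) (fderiv ℝ w (q i + s • v) v) s :=
        ((hwd _ hp).hasFDerivAt).comp_hasDerivAt s (hcp s)
      have h2 : HasDerivAt (fun s : ℝ => w (q i - s • v)) (fderiv ℝ w (q i - s • v) (-v)) s :=
        ((hwd _ hmn).hasFDerivAt).comp_hasDerivAt s (hcm s)
      have := h1.add h2
      simpa [hG, hG', map_neg, sub_eq_add_neg, Pi.add_def] using this
    have hG0 : ∀ s : ℝ, |s| < a → G 0 ≤ G s := by
      intro s hs
      obtain ⟨hp, hmn⟩ := hmem s hs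
      have hsum : (q i + s • v) + (q i - s • v) = (2:ℝ) • q i := by module
      have := hsplit _ hp _ hmn hsum
      simp only [hG, zero_smul, add_zero, sub_zero]
      linarith
    have hG'0 : G' 0 = 0 := by simp [hG']
    have hf''0 : HasFDerivAt (fun y => fderiv ℝ w y) f'' (q i + (0:ℝ) • v) := by
      simpa using hf''
    have hf''0' : HasFDerivAt (fun y => fderiv ℝ w y) f'' (q i - (0:ℝ) • v) := by
      simpa using hf''
    have hB1 : HasDerivAt (fun s : ℝ => fderiv ℝ w (q i + s • v)) (f'' v) 0 :=
      hf''0.comp_hasDerivAt 0 (hcp 0)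
    have hB2 : HasDerivAt (fun s : ℝ => fderiv ℝ w (q i - s • v)) (f'' (-v)) 0 :=
      hf''0'.comp_hasDerivAt 0 (hcm 0)
    have hC1 : HasDerivAt (fun s : ℝ => fderiv ℝ w (q i + s • v) v) (f'' v v) 0 := by
      have := hB1.clm_apply (hasDerivAt_const 0 v)
      simpa using this
    have hC2 : HasDerivAt (fun s : ℝ => fderiv ℝ w (q i - s • v) v) (-(f'' v v)) 0 := by
      have := hB2.clm_apply (hasDerivAt_const 0 v)
      simpa [map_neg] using this
    have hG'' : HasDerivAt G' (2 * (f'' v v)) 0 := by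
      have := hC1.sub hC2
      have h2 : f'' v v - -(f'' v v) = 2 * (f'' v v) := by ring
      rw [h2] at this
      exact this
    have := second_order_test hapos hgd hG0 hG'0 hG''
    linarith
  rw [posSemidef_iff_dotProduct_mulVec]
  constructor
  · show (hessianMatrix w (q i))ᴴ = hessianMatrix w (q i)
    ext a b
    simp only [conjTranspose_apply, star_trivial]
    rw [hHent, hHent, hsymm]
  · intro u
    set v : EuclideanSpace ℝ (Fin n) := ∑ b, u b • EuclideanSpace.single b 1 with hvdef
    have hexp : f'' v v = ∑ a, u a *
        ∑ b, u b * f'' (EuclideanSpace.single a 1) (EuclideanSpace.single b 1) := by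
      rw [hvdef, map_sum]
      refine Finset.sum_congr rfl fun a _ => ?_
      rw [_root_.map_smul, smul_eq_mul]
      congr 1
      rw [map_sum, ContinuousLinearMap.sum_apply]
      refine Finset.sum_congr rfl fun b _ => ?_
      rw [_root_.map_smul, ContinuousLinearMap.smul_apply, smul_eq_mul, hsymm]
    have hdot : dotProduct (star u) ((hessianMatrix w (q i)) *ᵥ u) = f'' v v := by
      rw [hexp]
      simp only [dotProduct, Matrix.mulVec, star_trivial]
      refine Finset.sum_congr rfl fun a _ => ?_
      congr 1
      refine Finset.sum_congr rfl fun b _ => ?_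
      rw [hHent]; ring
    rw [hdot]
    exact hquad v

end AuxiliaryLemmas

/-- **Lemma 2.3 (i)–(ii) (Alvarez–Lasry–Lions).** Let `Ω ⊂ ℝⁿ` be open bounded convex,
`w ∈ C²(Ω)` with `w(x) → +∞` as `dist(x, ∂Ω) → 0`. Fix `x ∈ Ω` and let positive weights
`tᵢ` (`m ≤ n+1`, `Σ tᵢ = 1`) and points `xᵢ ∈ Ω` with `Σ tᵢ xᵢ = x` be optimal for the
infimum defining `w**(x)`. If `(p, A) ∈ J^{2,-}w**(x)`, then `∇w(xᵢ) = p` for every `i`,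
and each Hessian `Aᵢ := ∇²w(xᵢ)` is positive semidefinite. -/
theorem subjet_gradient_and_psd {n : ℕ}
    (Ω : Set (EuclideanSpace ℝ (Fin n))) (w : EuclideanSpace ℝ (Fin n) → ℝ)
    (hΩo : IsOpen Ω) (hΩb : Bornology.IsBounded Ω) (hΩc : Convex ℝ Ω) (hΩne : Ω.Nonempty)
    (hw : ContDiffOn ℝ 2 w Ω)
    (hblow : ∀ M : ℝ, ∃ δ > 0, ∀ x ∈ Ω, Metric.infDist x (frontier Ω) < δ → M ≤ w x)
    (x : EuclideanSpace ℝ (Fin n)) (hx : x ∈ Ω)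
    (m : ℕ) (hm1 : 1 ≤ m) (hm : m ≤ n + 1)
    (t : Fin m → ℝ) (q : Fin m → EuclideanSpace ℝ (Fin n))
    (ht : ∀ i, 0 < t i) (hq : ∀ i, q i ∈ Ω) (hts : ∑ i, t i = 1) (hqs : ∑ i, t i • q i = x)
    (hopt : convEnv Ω w x = ∑ i, t i * w (q i))
    (p : EuclideanSpace ℝ (Fin n)) (A : Matrix (Fin n) (Fin n) ℝ)
    (hpA : InSubjet Ω (convEnv Ω w) x p A) :
    (∀ i, gradient w (q i) = p) ∧ (∀ i, (hessianMatrix w (q i)).PosSemidef) := by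
  obtain ⟨φ, hφ, ⟨ε, hε, hloc⟩, hp, hA⟩ := hpA
  obtain ⟨c, hc⟩ := exists_lb hΩo hΩb hw.continuousOn hblow
  refine ⟨fun i => ?_, fun i => ?_⟩
  · rw [hp]
    unfold gradient
    rw [grad_aux Ω w hΩo hΩb hΩc hΩne hw c hc x hx m hm1 hm t q ht hq hts hqs hopt φ hφ ε hε hloc i]
  · exact psd_aux Ω w hΩo hw m q hq i
      (fun y hy z hz hyz => split_aux Ω w hΩc c hc x m t q ht hq hts hqs hopt i y hy z hz hyz)
end

section
/- Let Ω be an open bounded convex subset of ℝⁿ and let w ∈ C²(Ω) satisfy w(x) → +∞ as dist(x, ∂Ω) → 0. Fix x ∈ Ω and let t₁, …, t_m > 0 (m ≤ n+1) with Σ t_i = 1 and x₁, …, x_m ∈ Ω with Σ t_i x_i = x be optimal for the infimum defining w**(x), and let (p, A) ∈ J^{2,−}w**(x). If all the Hessian matrices A_i := ∇²w(x_i), i = 1, …, m, are positive definite, then A ≤ (Σ_{i=1}^m t_i A_i^{−1})^{−1} in the sense of symmetric matrices, and Tr(A) ≤ (Σ_{i=1}^m t_i (Tr A_i)^{−1})^{−1}.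 -/
open Real Set Metric Filter Matrix

section Aux

variable {n : ℕ}

local notation "E" => EuclideanSpace ℝ (Fin n)

lemma euclid_sum_apply {ι : Type*} (s : Finset ι) (f : ι → EuclideanSpace ℝ (Fin n)) (j : Fin n) :
    (∑ i ∈ s, f i) j = ∑ i ∈ s, f i j := by
  induction s using Finset.cons_induction with
  | empty => rfl
  | cons a s ha ih => rw [Finset.sum_cons, Finset.sum_cons, ← ih]; rfl

lemma euclid_sum_single (v : EuclideanSpace ℝ (Fin n)) :
    ∑ i, v i • EuclideanSpace.single i (1:ℝ) = v := by
  ext j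
  rw [euclid_sum_apply]
  simp [EuclideanSpace.single_apply, PiLp.smul_apply]

lemma sum_mulVec' {ι : Type*} (s : Finset ι) (M : ι → Matrix (Fin n) (Fin n) ℝ) (v : Fin n → ℝ) :
    (∑ k ∈ s, M k) *ᵥ v = ∑ k ∈ s, M k *ᵥ v := by
  ext i
  simp [Matrix.mulVec, dotProduct, Matrix.sum_apply, Finset.sum_mul]
  exact Finset.sum_comm

lemma sum_dotProduct' {ι : Type*} (s : Finset ι) (u : ι → (Fin n → ℝ)) (w : Fin n → ℝ) :
    (∑ k ∈ s, u k) ⬝ᵥ w = ∑ k ∈ s, u k ⬝ᵥ w := by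
  simp [dotProduct, Finset.sum_apply, Finset.sum_mul]
  exact Finset.sum_comm

lemma dotProduct_sum' {ι : Type*} (s : Finset ι) (u : Fin n → ℝ) (w : ι → (Fin n → ℝ)) :
    u ⬝ᵥ (∑ k ∈ s, w k) = ∑ k ∈ s, u ⬝ᵥ w k := by
  simp [dotProduct, Finset.sum_apply, Finset.mul_sum]
  exact Finset.sum_comm

lemma single_quad (M : Matrix (Fin n) (Fin n) ℝ) (j : Fin n) :
    (Pi.single j 1 : Fin n → ℝ) ⬝ᵥ M *ᵥ (Pi.single j 1 : Fin n → ℝ) = M j j := by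
  simp [dotProduct, Matrix.mulVec, Pi.single_apply]

lemma quad_eq (M : Matrix (Fin n) (Fin n) ℝ) (u : Fin n → ℝ) :
    (∑ j, u j * ∑ i, u i * M i j) = u ⬝ᵥ M *ᵥ u := by
  simp only [dotProduct, Matrix.mulVec, Finset.mul_sum]
  rw [Finset.sum_comm]
  exact Finset.sum_congr rfl fun i _ => Finset.sum_congr rfl fun j _ => by ring

end Aux

/-- Second derivative test at an interior local minimum. -/
lemma second_deriv_test {g d : ℝ → ℝ} {L : ℝ} {V : Set ℝ} (hV : V ∈ nhds (0:ℝ))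
    (hg : ∀ s ∈ V, HasDerivAt g (d s) s) (hd : HasDerivAt d L 0)
    (hmin : ∀ᶠ s in nhds (0:ℝ), g 0 ≤ g s) : 0 ≤ L := by
  by_contra hL
  push_neg at hL
  have hmin' : IsLocalMin g 0 := hmin
  have hd0 : d 0 = 0 := by
    have h1 := hmin'.deriv_eq_zero
    rwa [(hg 0 (mem_of_mem_nhds hV)).deriv] at h1
  -- the slope of `d` at `0` tends to `L < 0`, so `d` is negative just right of `0`
  have hslope : Tendsto (slope d 0) (nhdsWithin 0 {(0:ℝ)}ᶜ) (nhds L) :=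
    hasDerivAt_iff_tendsto_slope.1 hd
  have hslope' : ∀ᶠ u in nhdsWithin (0:ℝ) (Set.Ioi 0), slope d 0 u < 0 :=
    (hslope.mono_left (nhdsWithin_mono 0 (fun u hu => ne_of_gt hu))).eventually_lt_const hL
  have hdneg : ∀ᶠ u in nhdsWithin (0:ℝ) (Set.Ioi 0), d u < 0 := by
    filter_upwards [hslope', self_mem_nhdsWithin] with u hu hu0
    have : slope d 0 u = d u / u := by simp [slope, hd0, div_eq_inv_mul]
    rw [this] at hu
    rcases div_neg_iff.mp hu with ⟨h1, h2⟩ | ⟨h1, h2⟩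
    · exact absurd hu0 (by simpa using h2.asymm)
    · exact h1
  obtain ⟨r, hr, hIoo⟩ := mem_nhdsGT_iff_exists_Ioo_subset.mp hdneg
  -- pick a point `s` with the needed properties
  obtain ⟨r2, hr2, hball⟩ := Metric.mem_nhds_iff.mp hV
  have h2 : ∀ᶠ s in nhdsWithin (0:ℝ) (Set.Ioi 0), Set.Icc 0 s ⊆ V := by
    filter_upwards [eventually_nhdsWithin_of_eventually_nhds (gt_mem_nhds hr2),
      self_mem_nhdsWithin] with s hs hs0 u hu
    apply hball
    simp only [Metric.mem_ball, Real.dist_eq, sub_zero]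
    rw [abs_of_nonneg hu.1]
    exact lt_of_le_of_lt hu.2 hs
  have h3 : ∀ᶠ s in nhdsWithin (0:ℝ) (Set.Ioi 0), g 0 ≤ g s :=
    eventually_nhdsWithin_of_eventually_nhds hmin
  have h4 : ∀ᶠ s in nhdsWithin (0:ℝ) (Set.Ioi 0), s ∈ Set.Ioo 0 r :=
    Ioo_mem_nhdsGT_of_mem ⟨le_rfl, hr⟩
  obtain ⟨s, hsV, hsg, hsr⟩ := (h2.and (h3.and h4)).exists
  have hs0 : (0:ℝ) < s := hsr.1
  -- mean value theorem on `[0, s]`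
  obtain ⟨c, hc, hceq⟩ := exists_hasDerivAt_eq_slope g d hs0
    (fun u hu => ((hg u (hsV hu)).continuousAt).continuousWithinAt)
    (fun u hu => hg u (hsV ⟨hu.1.le, hu.2.le⟩))
  have hcneg : d c < 0 := hIoo ⟨hc.1, hc.2.trans hsr.2⟩
  rw [hceq] at hcneg
  have : 0 ≤ (g s - g 0) / (s - 0) := div_nonneg (sub_nonneg.mpr hsg) (by linarith)
  linarith


section LineDeriv

variable {n : ℕ} {f : EuclideanSpace ℝ (Fin n) → ℝ} {U : Set (EuclideanSpace ℝ (Fin n))}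

lemma line_hasDerivAt_aux (a v : EuclideanSpace ℝ (Fin n)) (s : ℝ) :
    HasDerivAt (fun u : ℝ => a + u • v) v s := by
  simpa using ((hasDerivAt_id s).smul_const v).const_add a

lemma line_deriv1 (hU : IsOpen U) (hf : ContDiffOn ℝ 2 f U)
    (a v : EuclideanSpace ℝ (Fin n)) (s : ℝ) (hs : a + s • v ∈ U) :
    HasDerivAt (fun u : ℝ => f (a + u • v)) (fderiv ℝ f (a + s • v) v) s := by
  have hF : HasFDerivAt f (fderiv ℝ f (a + s • v)) (a + s • v) :=
    (((hf.differentiableOn (by norm_num)).differentiableAt (hU.mem_nhds hs))).hasFDerivAt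
  exact hF.comp_hasDerivAt s (line_hasDerivAt_aux a v s)

lemma line_deriv2 (hU : IsOpen U) (hf : ContDiffOn ℝ 2 f U)
    {a : EuclideanSpace ℝ (Fin n)} (ha : a ∈ U) (v : EuclideanSpace ℝ (Fin n)) :
    HasDerivAt (fun s : ℝ => fderiv ℝ f (a + s • v) v)
      (∑ j, v j * ∑ i, v i * hessianMatrix f a i j) 0 := by
  set g2 : Fin n → EuclideanSpace ℝ (Fin n) → ℝ :=
    fun j y => fderiv ℝ f y (EuclideanSpace.single j 1) with hg2def
  have hf' : ContDiffOn ℝ 1 (fderiv ℝ f) U := hf.fderiv_of_isOpen hU (by norm_num)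
  have hdf : DifferentiableAt ℝ (fderiv ℝ f) a :=
    (hf'.differentiableOn one_ne_zero).differentiableAt (hU.mem_nhds ha)
  have hg2 : ∀ j, DifferentiableAt ℝ (g2 j) a := fun j =>
    (ContinuousLinearMap.apply ℝ ℝ (EuclideanSpace.single j (1:ℝ))).differentiable.differentiableAt.comp a hdf
  have hfun : (fun y => fderiv ℝ f y v) = fun y => ∑ j, v j * g2 j y := by
    funext y
    conv_lhs => rw [← euclid_sum_single v]
    rw [map_sum]
    exact Finset.sum_congr rfl fun j _ => by simp [g2, smul_eq_mul]
  have hG : DifferentiableAt ℝ (fun y => fderiv ℝ f y v) a := by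
    rw [hfun]
    exact DifferentiableAt.fun_sum fun j _ => (hg2 j).const_mul (v j)
  have hF : HasFDerivAt (fun y => fderiv ℝ f y v) (fderiv ℝ (fun y => fderiv ℝ f y v) a)
      (a + (0:ℝ) • v) := by
    rw [show a + (0:ℝ) • v = a by simp]
    exact hG.hasFDerivAt
  have hcomp := hF.comp_hasDerivAt 0 (line_hasDerivAt_aux a v 0)
  have hval : fderiv ℝ (fun y => fderiv ℝ f y v) a v
      = ∑ j, v j * ∑ i, v i * hessianMatrix f a i j := by
    rw [hfun, fderiv_fun_sum (fun j _ => (hg2 j).const_mul (v j))]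
    rw [ContinuousLinearMap.sum_apply]
    refine Finset.sum_congr rfl fun j _ => ?_
    rw [fderiv_const_mul (hg2 j) (v j), ContinuousLinearMap.smul_apply]
    rw [smul_eq_mul]
    congr 1
    conv_lhs => rw [← euclid_sum_single v, map_sum]
    refine Finset.sum_congr rfl fun i _ => ?_
    rw [_root_.map_smul, smul_eq_mul]
    rfl
  rw [hval] at hcomp
  exact hcomp
end LineDeriv


lemma bdd_below_aux {n : ℕ} {Ω : Set (EuclideanSpace ℝ (Fin n))} {w : EuclideanSpace ℝ (Fin n) → ℝ}
    (hΩo : IsOpen Ω) (hΩb : Bornology.IsBounded Ω) (hw : ContDiffOn ℝ 2 w Ω)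
    (hblow : ∀ M : ℝ, ∃ δ > 0, ∀ x ∈ Ω, Metric.infDist x (frontier Ω) < δ → M ≤ w x) :
    ∃ c, ∀ y ∈ Ω, c ≤ w y := by
  obtain ⟨δ, hδ, h0⟩ := hblow 0
  set K := closure Ω ∩ {y | δ ≤ Metric.infDist y (frontier Ω)} with hK
  have hKc : IsClosed K :=
    isClosed_closure.inter (isClosed_le continuous_const (Metric.continuous_infDist_pt _))
  have hKcp : IsCompact K :=
    Metric.isCompact_of_isClosed_isBounded hKc (hΩb.closure.subset inter_subset_left)
  have hKΩ : K ⊆ Ω := by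
    rintro y ⟨hy1, hy2⟩
    by_contra hy
    have hfr : y ∈ frontier Ω := by
      rw [hΩo.frontier_eq]
      exact ⟨hy1, hy⟩
    have : Metric.infDist y (frontier Ω) = 0 := Metric.infDist_zero_of_mem hfr
    have hy2' : δ ≤ Metric.infDist y (frontier Ω) := hy2
    rw [this] at hy2'
    exact absurd (lt_of_lt_of_le hδ hy2') (lt_irrefl 0)
  obtain ⟨c, hcK⟩ := hKcp.bddBelow_image (hw.continuousOn.mono hKΩ)
  refine ⟨min c 0, fun y hy => ?_⟩
  by_cases hyd : Metric.infDist y (frontier Ω) < δ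
  · exact le_trans (min_le_right _ _) (h0 y hy hyd)
  · exact le_trans (min_le_left _ _) (hcK ⟨y, ⟨subset_closure hy, not_lt.mp hyd⟩, rfl⟩)

lemma convEnv_le_comb {n : ℕ} {Ω : Set (EuclideanSpace ℝ (Fin n))} {w : EuclideanSpace ℝ (Fin n) → ℝ}
    (hbd : ∃ c, ∀ y ∈ Ω, c ≤ w y) {m : ℕ} (t : Fin m → ℝ) (q : Fin m → EuclideanSpace ℝ (Fin n))
    (ht : ∀ i, 0 ≤ t i) (hq : ∀ i, q i ∈ Ω) (hts : ∑ i, t i = 1)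
    {y : EuclideanSpace ℝ (Fin n)} (hqs : ∑ i, t i • q i = y) :
    convEnv Ω w y ≤ ∑ i, t i * w (q i) := by
  obtain ⟨c, hc⟩ := hbd
  apply csInf_le
  · refine ⟨c, ?_⟩
    rintro r ⟨m', t', q', ht', hq', hts', hqs', rfl⟩
    calc c = ∑ i, t' i * c := by rw [← Finset.sum_mul, hts', one_mul]
      _ ≤ ∑ i, t' i * w (q' i) :=
        Finset.sum_le_sum fun i _ => mul_le_mul_of_nonneg_left (hc _ (hq' i)) (ht' i)
  · exact ⟨m, t, q, ht, hq, hts, hqs, rfl⟩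

lemma hessian_isHermitian {n : ℕ} {φ : EuclideanSpace ℝ (Fin n) → ℝ} (hφ : ContDiff ℝ (⊤ : ℕ∞) φ)
    (x : EuclideanSpace ℝ (Fin n)) : (hessianMatrix φ x).IsHermitian := by
  have hd1 : ∀ y, HasFDerivAt φ (fderiv ℝ φ y) y := fun y =>
    ((hφ.differentiable (by simp)) y).hasFDerivAt
  have hd2 : DifferentiableAt ℝ (fderiv ℝ φ) x :=
    ((hφ.fderiv_right (m := 1) (by exact WithTop.coe_le_coe.mpr le_top)).differentiable one_ne_zero) x
  have hsym := second_derivative_symmetric (f' := fderiv ℝ φ)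
    (f'' := fderiv ℝ (fderiv ℝ φ) x) hd1 hd2.hasFDerivAt
  have key : ∀ (u : EuclideanSpace ℝ (Fin n)) (j : Fin n),
      fderiv ℝ (fun y => fderiv ℝ φ y (EuclideanSpace.single j 1)) x u
        = (fderiv ℝ (fderiv ℝ φ) x u) (EuclideanSpace.single j 1) := by
    intro u j
    have heq : (fun y => fderiv ℝ φ y (EuclideanSpace.single j (1:ℝ)))
        = (ContinuousLinearMap.apply ℝ ℝ (EuclideanSpace.single j (1:ℝ))) ∘ (fderiv ℝ φ) := rfl
    rw [heq, fderiv_comp x (ContinuousLinearMap.apply ℝ ℝ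
      (EuclideanSpace.single j (1:ℝ))).differentiableAt hd2]
    simp
  ext i j
  simp only [Matrix.conjTranspose_apply, hessianMatrix, Matrix.of_apply, star_trivial]
  rw [key, key]
  exact hsym _ _

lemma key_ineq {n : ℕ} {Ω : Set (EuclideanSpace ℝ (Fin n))} {w : EuclideanSpace ℝ (Fin n) → ℝ}
    (hΩo : IsOpen Ω) (hbd : ∃ c, ∀ y ∈ Ω, c ≤ w y) (hw : ContDiffOn ℝ 2 w Ω)
    {x : EuclideanSpace ℝ (Fin n)} (hx : x ∈ Ω) {m : ℕ} {t : Fin m → ℝ}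
    {q : Fin m → EuclideanSpace ℝ (Fin n)}
    (ht : ∀ i, 0 < t i) (hq : ∀ i, q i ∈ Ω) (hts : ∑ i, t i = 1) (hqs : ∑ i, t i • q i = x)
    (hopt : convEnv Ω w x = ∑ i, t i * w (q i))
    {φ : EuclideanSpace ℝ (Fin n) → ℝ} (hφ : ContDiff ℝ (⊤ : ℕ∞) φ) {ε : ℝ} (hε : 0 < ε)
    (hmin : ∀ y ∈ Ω, ‖y - x‖ < ε → convEnv Ω w x - φ x ≤ convEnv Ω w y - φ y)
    (z : Fin m → EuclideanSpace ℝ (Fin n)) :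
    ∑ j, (∑ k, t k • z k) j * ∑ i, (∑ k, t k • z k) i * hessianMatrix φ x i j
      ≤ ∑ k, t k * ∑ j, (z k) j * ∑ i, (z k) i * hessianMatrix w (q k) i j := by
  set h : EuclideanSpace ℝ (Fin n) := ∑ k, t k • z k with hh
  set V : Set ℝ := (⋂ k, {s : ℝ | q k + s • z k ∈ Ω}) ∩ {s : ℝ | x + s • h ∈ Ω} with hV
  have hVopen : IsOpen V := by
    refine IsOpen.inter (isOpen_iInter_of_finite fun k => ?_) ?_
    · exact hΩo.preimage (continuous_const.add (continuous_id.smul continuous_const))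
    · exact hΩo.preimage (continuous_const.add (continuous_id.smul continuous_const))
  have hV0 : (0:ℝ) ∈ V := by
    constructor
    · exact mem_iInter.mpr fun k => by simpa using hq k
    · simpa using hx
  have hφ2 : ContDiffOn ℝ 2 φ univ := (hφ.of_le (by exact WithTop.coe_le_coe.mpr (le_top : (2 : ℕ∞) ≤ ⊤))).contDiffOn
  set G : ℝ → ℝ := fun s => (∑ k, t k * w (q k + s • z k)) - φ (x + s • h) with hG
  set d : ℝ → ℝ :=
    fun s => (∑ k, t k * fderiv ℝ w (q k + s • z k) (z k)) - fderiv ℝ φ (x + s • h) h with hd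
  have hg : ∀ s ∈ V, HasDerivAt G (d s) s := by
    intro s hs
    have hs1 : ∀ k, q k + s • z k ∈ Ω := fun k => mem_iInter.mp hs.1 k
    exact (HasDerivAt.fun_sum fun k _ =>
        HasDerivAt.const_mul (t k) (line_deriv1 hΩo hw (q k) (z k) s (hs1 k))).sub
      (line_deriv1 isOpen_univ hφ2 x h s (mem_univ _))
  have hd0 : HasDerivAt d
      ((∑ k, t k * ∑ j, z k j * ∑ i, z k i * hessianMatrix w (q k) i j)
        - ∑ j, h j * ∑ i, h i * hessianMatrix φ x i j) 0 :=
    (HasDerivAt.fun_sum fun k _ =>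
        HasDerivAt.const_mul (t k) (line_deriv2 hΩo hw (hq k) (z k))).sub
      (line_deriv2 isOpen_univ hφ2 (mem_univ x) h)
  have hmin' : ∀ᶠ s in nhds (0:ℝ), G 0 ≤ G s := by
    have hnorm : ∀ᶠ s in nhds (0:ℝ), ‖s • h‖ < ε := by
      have hcont : Continuous fun s : ℝ => ‖s • h‖ :=
        (continuous_id.smul continuous_const).norm
      have ht0 := hcont.tendsto 0
      rw [show ‖(0:ℝ) • h‖ = 0 by simp] at ht0
      exact ht0.eventually_lt_const hε
    filter_upwards [hVopen.mem_nhds hV0, hnorm] with s hsV hsn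
    have hs1 : ∀ k, q k + s • z k ∈ Ω := fun k => mem_iInter.mp hsV.1 k
    have hs2 : x + s • h ∈ Ω := hsV.2
    have hcomb : ∑ k, t k • (q k + s • z k) = x + s • h := by
      have e1 : (fun k => t k • (q k + s • z k)) = fun k => t k • q k + s • (t k • z k) :=
        funext fun k => by rw [smul_add, smul_comm]
      rw [e1, Finset.sum_add_distrib, hqs, ← Finset.smul_sum]
    have hle : convEnv Ω w (x + s • h) ≤ ∑ k, t k * w (q k + s • z k) :=
      convEnv_le_comb hbd t _ (fun k => (ht k).le) hs1 hts hcomb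
    have hG0 : G 0 = convEnv Ω w x - φ x := by
      rw [hG]
      simp only [zero_smul, add_zero]
      rw [hopt]
    rw [hG0, hG]
    calc convEnv Ω w x - φ x ≤ convEnv Ω w (x + s • h) - φ (x + s • h) :=
          hmin _ hs2 (by simpa using hsn)
      _ ≤ _ := sub_le_sub_right hle _
  have hfinal := second_deriv_test (hVopen.mem_nhds hV0) hg hd0 hmin'
  linarith

/-- **Lemma 2.3 (iii) (Alvarez–Lasry–Lions).** In the setting of the preceding lemma, with
`(p, A) ∈ J^{2,-}w**(x)`: if all the Hessians `Aᵢ := ∇²w(xᵢ)` are positive definite, then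
`A ≤ (Σ tᵢ Aᵢ⁻¹)⁻¹` in the sense of symmetric matrices, and
`Tr(A) ≤ (Σ tᵢ (Tr Aᵢ)⁻¹)⁻¹`. -/
theorem subjet_matrix_inequalities_posdef {n : ℕ}
    (Ω : Set (EuclideanSpace ℝ (Fin n))) (w : EuclideanSpace ℝ (Fin n) → ℝ)
    (hΩo : IsOpen Ω) (hΩb : Bornology.IsBounded Ω) (hΩc : Convex ℝ Ω) (hΩne : Ω.Nonempty)
    (hw : ContDiffOn ℝ 2 w Ω)
    (hblow : ∀ M : ℝ, ∃ δ > 0, ∀ x ∈ Ω, Metric.infDist x (frontier Ω) < δ → M ≤ w x)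
    (x : EuclideanSpace ℝ (Fin n)) (hx : x ∈ Ω)
    (m : ℕ) (hm1 : 1 ≤ m) (hm : m ≤ n + 1)
    (t : Fin m → ℝ) (q : Fin m → EuclideanSpace ℝ (Fin n))
    (ht : ∀ i, 0 < t i) (hq : ∀ i, q i ∈ Ω) (hts : ∑ i, t i = 1) (hqs : ∑ i, t i • q i = x)
    (hopt : convEnv Ω w x = ∑ i, t i * w (q i))
    (p : EuclideanSpace ℝ (Fin n)) (A : Matrix (Fin n) (Fin n) ℝ)
    (hpA : InSubjet Ω (convEnv Ω w) x p A)
    (hPD : ∀ i, (hessianMatrix w (q i)).PosDef) :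
    ((∑ i, t i • (hessianMatrix w (q i))⁻¹)⁻¹ - A).PosSemidef ∧
      Matrix.trace A ≤ (∑ i, t i * (Matrix.trace (hessianMatrix w (q i)))⁻¹)⁻¹ := by
  obtain ⟨φ, hφ, ⟨ε, hε, hmin⟩, hpdef, hAdef⟩ := hpA
  have hbd := bdd_below_aux hΩo hΩb hw hblow
  haveI : Nonempty (Fin m) := ⟨⟨0, hm1⟩⟩
  set Ai : Fin m → Matrix (Fin n) (Fin n) ℝ := fun k => hessianMatrix w (q k) with hAidef
  have key : ∀ z : Fin m → EuclideanSpace ℝ (Fin n),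
      ∑ j, (∑ k, t k • z k) j * ∑ i, (∑ k, t k • z k) i * A i j
        ≤ ∑ k, t k * ∑ j, (z k) j * ∑ i, (z k) i * Ai k i j := by
    intro z
    rw [hAdef]
    exact key_ineq hΩo hbd hw hx ht hq hts hqs hopt hφ hε hmin z
  have keyd : ∀ u : Fin m → (Fin n → ℝ),
      (∑ k, t k • u k) ⬝ᵥ A *ᵥ (∑ k, t k • u k) ≤ ∑ k, t k * (u k ⬝ᵥ Ai k *ᵥ u k) := by
    intro u
    have h1 := key (fun k => (WithLp.linearEquiv 2 ℝ (Fin n → ℝ)).symm (u k))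
    have h2 : (∑ k, t k • (WithLp.linearEquiv 2 ℝ (Fin n → ℝ)).symm (u k))
        = (WithLp.linearEquiv 2 ℝ (Fin n → ℝ)).symm (∑ k, t k • u k) := by
      simp only [← _root_.map_smul, ← map_sum]
    rw [h2] at h1
    rw [← quad_eq A (∑ k, t k • u k)]
    calc ∑ j, (∑ k, t k • u k) j * ∑ i, (∑ k, t k • u k) i * A i j
        ≤ ∑ k, t k * ∑ j, u k j * ∑ i, u k i * Ai k i j := h1
      _ = ∑ k, t k * (u k ⬝ᵥ Ai k *ᵥ u k) :=
          Finset.sum_congr rfl fun k _ => by rw [quad_eq]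
  have hAherm : A.IsHermitian := by rw [hAdef]; exact hessian_isHermitian hφ x
  have hAk1 : ∀ k, Ai k * (Ai k)⁻¹ = 1 := fun k =>
    Matrix.mul_nonsing_inv _ (isUnit_iff_ne_zero.mpr (hPD k).det_pos.ne')
  set S : Matrix (Fin n) (Fin n) ℝ := ∑ k, t k • (Ai k)⁻¹ with hSdef
  have hSherm : S.IsHermitian := by
    rw [hSdef]
    show (∑ k, t k • (Ai k)⁻¹)ᴴ = _
    rw [Matrix.conjTranspose_sum]
    exact Finset.sum_congr rfl fun k _ => by
      rw [Matrix.conjTranspose_smul, ((hPD k).inv).1, star_trivial]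
  have hSpd : S.PosDef := by
    refine Matrix.PosDef.of_dotProduct_mulVec_pos hSherm fun v hv => ?_
    have hmv : S *ᵥ v = ∑ k, t k • ((Ai k)⁻¹ *ᵥ v) := by
      rw [hSdef, sum_mulVec']
      exact Finset.sum_congr rfl fun k _ => smul_mulVec _ _ _
    rw [star_trivial, hmv, dotProduct_sum']
    refine Finset.sum_pos (fun k _ => ?_) Finset.univ_nonempty
    rw [dotProduct_smul]
    have := ((hPD k).inv).dotProduct_mulVec_pos hv
    rw [star_trivial] at this
    exact mul_pos (ht k) this
  have hdetS : IsUnit S.det := isUnit_iff_ne_zero.mpr hSpd.det_pos.ne'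
  have hSB : S * S⁻¹ = 1 := Matrix.mul_nonsing_inv S hdetS
  constructor
  · -- the matrix inequality
    refine Matrix.PosSemidef.of_dotProduct_mulVec_nonneg ((hSpd.inv).1.sub hAherm) fun v => ?_
    rw [star_trivial, Matrix.sub_mulVec, dotProduct_sub, sub_nonneg]
    set u : Fin m → (Fin n → ℝ) := fun k => ((Ai k)⁻¹ * S⁻¹) *ᵥ v with hu
    have husum : ∑ k, t k • u k = v := by
      calc ∑ k, t k • u k = ∑ k, (t k • ((Ai k)⁻¹ * S⁻¹)) *ᵥ v :=
            Finset.sum_congr rfl fun k _ => (smul_mulVec _ _ _).symm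
        _ = (∑ k, t k • ((Ai k)⁻¹ * S⁻¹)) *ᵥ v := (sum_mulVec' _ _ _).symm
        _ = ((∑ k, t k • (Ai k)⁻¹) * S⁻¹) *ᵥ v := by
            rw [Finset.sum_congr rfl fun (k : Fin m) _ => (smul_mul_assoc (t k) ((Ai k)⁻¹) S⁻¹).symm,
              ← Finset.sum_mul]
        _ = v := by rw [← hSdef, hSB, Matrix.one_mulVec]
    have hmvk : ∀ k, Ai k *ᵥ u k = S⁻¹ *ᵥ v := by
      intro k
      rw [hu]
      rw [Matrix.mulVec_mulVec, ← Matrix.mul_assoc, hAk1 k, Matrix.one_mul]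
    calc v ⬝ᵥ A *ᵥ v = (∑ k, t k • u k) ⬝ᵥ A *ᵥ (∑ k, t k • u k) := by rw [husum]
      _ ≤ ∑ k, t k * (u k ⬝ᵥ Ai k *ᵥ u k) := keyd u
      _ = ∑ k, (t k • u k) ⬝ᵥ (S⁻¹ *ᵥ v) := by
          refine Finset.sum_congr rfl fun k _ => ?_
          rw [hmvk k, smul_dotProduct, smul_eq_mul]
      _ = (∑ k, t k • u k) ⬝ᵥ (S⁻¹ *ᵥ v) := (sum_dotProduct' _ _ _).symm
      _ = v ⬝ᵥ S⁻¹ *ᵥ v := by rw [husum]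
  · -- the trace inequality
    rcases Nat.eq_zero_or_pos n with hn | hn
    · subst hn
      simp [Matrix.trace]
    · haveI : Nonempty (Fin n) := Fin.pos_iff_nonempty.mp hn
      have hsk : ∀ k, 0 < Matrix.trace (Ai k) := by
        intro k
        rw [Matrix.trace]
        refine Finset.sum_pos (fun i _ => ?_) Finset.univ_nonempty
        have h1 := (hPD k).dotProduct_mulVec_pos (x := (Pi.single i 1 : Fin n → ℝ))
          (by intro h; have h2 := congrFun h i; simp at h2)
        rw [star_trivial, single_quad] at h1
        exact h1
      set T : ℝ := ∑ k, t k * (Matrix.trace (Ai k))⁻¹ with hT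
      have hTpos : 0 < T :=
        Finset.sum_pos (fun k _ => mul_pos (ht k) (inv_pos.mpr (hsk k))) Finset.univ_nonempty
      set c : Fin m → ℝ := fun k => T⁻¹ * (Matrix.trace (Ai k))⁻¹ with hc
      have htc : ∑ k, t k * c k = 1 := by
        have e : ∑ k, t k * c k = T⁻¹ * ∑ k, t k * (Matrix.trace (Ai k))⁻¹ := by
          rw [Finset.mul_sum]
          exact Finset.sum_congr rfl fun k _ => by rw [hc]; ring
        rw [e, ← hT, inv_mul_cancel₀ hTpos.ne']
      have hj : ∀ j : Fin n, A j j ≤ ∑ k, t k * (c k ^ 2 * Ai k j j) := by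
        intro j
        have hk := keyd (fun k => c k • (Pi.single j 1 : Fin n → ℝ))
        have hsum : (∑ k, t k • (c k • (Pi.single j 1 : Fin n → ℝ))) = (Pi.single j 1 : Fin n → ℝ) := by
          rw [Finset.sum_congr rfl fun (k : Fin m) _ => smul_smul (t k) (c k) ((Pi.single j 1 : Fin n → ℝ)),
            ← Finset.sum_smul, htc, one_smul]
        rw [hsum, single_quad] at hk
        calc A j j ≤ ∑ k, t k * ((c k • (Pi.single j 1 : Fin n → ℝ)) ⬝ᵥ Ai k *ᵥ (c k • (Pi.single j 1 : Fin n → ℝ))) := hk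
          _ = ∑ k, t k * (c k ^ 2 * Ai k j j) := by
            refine Finset.sum_congr rfl fun k _ => ?_
            rw [smul_dotProduct, Matrix.mulVec_smul, dotProduct_smul, single_quad]
            simp only [smul_eq_mul]
            ring
      have htr : Matrix.trace A ≤ ∑ k, t k * (c k ^ 2 * Matrix.trace (Ai k)) := by
        rw [Matrix.trace]
        calc ∑ i, A.diag i ≤ ∑ j, ∑ k, t k * (c k ^ 2 * Ai k j j) :=
              Finset.sum_le_sum fun j _ => hj j
          _ = ∑ k, t k * (c k ^ 2 * Matrix.trace (Ai k)) := by
              rw [Finset.sum_comm]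
              refine Finset.sum_congr rfl fun k _ => ?_
              rw [Matrix.trace]
              simp [Matrix.diag, Finset.mul_sum]
      have hval : ∑ k, t k * (c k ^ 2 * Matrix.trace (Ai k)) = T⁻¹ := by
        have e : ∀ k : Fin m, t k * (c k ^ 2 * Matrix.trace (Ai k))
            = T⁻¹ * T⁻¹ * (t k * (Matrix.trace (Ai k))⁻¹) := by
          intro k
          have hs := (hsk k).ne'
          simp only [hc]
          have e2 : ((Matrix.trace (Ai k))⁻¹) ^ 2 * Matrix.trace (Ai k) = (Matrix.trace (Ai k))⁻¹ := by
            rw [sq, mul_assoc, inv_mul_cancel₀ hs, mul_one]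
          calc t k * ((T⁻¹ * (Matrix.trace (Ai k))⁻¹) ^ 2 * Matrix.trace (Ai k))
              = T⁻¹ * T⁻¹ * (t k * (((Matrix.trace (Ai k))⁻¹) ^ 2 * Matrix.trace (Ai k))) := by ring
            _ = T⁻¹ * T⁻¹ * (t k * (Matrix.trace (Ai k))⁻¹) := by rw [e2]
        rw [Finset.sum_congr rfl fun k _ => e k, ← Finset.mul_sum, ← hT]
        rw [mul_assoc, inv_mul_cancel₀ hTpos.ne', mul_one]
      rw [← hT] at *
      linarith [htr, hval.le, hval.ge]
end

section
/- Let Ω be an open bounded convex subset of ℝⁿ and let w ∈ C²(Ω) satisfy w(x) → +∞ as dist(x, ∂Ω) → 0. Fix x ∈ Ω and let t₁, …, t_m > 0 (m ≤ n+1) with Σ t_i = 1 and x₁, …, x_m ∈ Ω with Σ t_i x_i = x be optimal for the infimum defining w**(x), let A_i := ∇²w(x_i) and let (p, A) ∈ J^{2,−}w**(x). Then ⟨A h, h⟩ ≤ Σ_{i=1}^m t_i ⟨A_i h_i, h_i⟩ for every h, h₁, …, h_m ∈ ℝⁿ such that h = Σ_{i=1}^m t_i h_i. -/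
open Real Set Metric Filter Matrix
open Topology

section Aux

variable {n : ℕ}

/-- Reinterpret a plain vector as an element of Euclidean space. -/
noncomputable def toE {n : ℕ} (v : Fin n → ℝ) : EuclideanSpace ℝ (Fin n) := WithLp.toLp 2 v

@[simp] lemma toE_apply {n : ℕ} (v : Fin n → ℝ) (j : Fin n) : toE v j = v j := rfl

lemma line_hasDerivAt (a v : EuclideanSpace ℝ (Fin n)) (s : ℝ) :
    HasDerivAt (fun s : ℝ => a + s • v) v s := by
  simpa using ((hasDerivAt_id s).smul_const v).const_add a

lemma comp_line_hasDerivAt {f : EuclideanSpace ℝ (Fin n) → ℝ} {a v : EuclideanSpace ℝ (Fin n)}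
    {s : ℝ} (hf : DifferentiableAt ℝ f (a + s • v)) :
    HasDerivAt (fun s : ℝ => f (a + s • v)) (fderiv ℝ f (a + s • v) v) s :=
  hf.hasFDerivAt.comp_hasDerivAt s (line_hasDerivAt a v s)

lemma fderiv_apply_hasFDerivAt {f : EuclideanSpace ℝ (Fin n) → ℝ} {a : EuclideanSpace ℝ (Fin n)}
    (hf : ContDiffAt ℝ 2 f a) (u : EuclideanSpace ℝ (Fin n)) :
    HasFDerivAt (fun y => fderiv ℝ f y u)
      ((ContinuousLinearMap.apply ℝ ℝ u).comp (fderiv ℝ (fderiv ℝ f) a)) a := by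
  have h1 : ContDiffAt ℝ 1 (fderiv ℝ f) a := hf.fderiv_right (by norm_num)
  exact (ContinuousLinearMap.apply ℝ ℝ u).hasFDerivAt.comp a
    (h1.differentiableAt (by norm_num)).hasFDerivAt

lemma fderiv_apply_eq {f : EuclideanSpace ℝ (Fin n) → ℝ} {a : EuclideanSpace ℝ (Fin n)}
    (hf : ContDiffAt ℝ 2 f a) (u w : EuclideanSpace ℝ (Fin n)) :
    fderiv ℝ (fun y => fderiv ℝ f y u) a w = fderiv ℝ (fderiv ℝ f) a w u := by
  rw [(fderiv_apply_hasFDerivAt hf u).fderiv]; rfl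

lemma second_deriv_line {f : EuclideanSpace ℝ (Fin n) → ℝ} {a : EuclideanSpace ℝ (Fin n)}
    (hf : ContDiffAt ℝ 2 f a) (v : EuclideanSpace ℝ (Fin n)) :
    HasDerivAt (fun s : ℝ => fderiv ℝ f (a + s • v) v)
      (fderiv ℝ (fderiv ℝ f) a v v) 0 := by
  have e : a + (0:ℝ) • v = a := by simp
  have h2 := fderiv_apply_hasFDerivAt hf v
  rw [← e] at h2
  have h := h2.comp_hasDerivAt 0 (line_hasDerivAt a v 0)
  rw [e] at h; exact h

lemma quad_eq_s8 {f : EuclideanSpace ℝ (Fin n) → ℝ} {a : EuclideanSpace ℝ (Fin n)}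
    (hf : ContDiffAt ℝ 2 f a) (v : Fin n → ℝ) :
    fderiv ℝ (fderiv ℝ f) a (toE v) (toE v)
      = (hessianMatrix f a).mulVec v ⬝ᵥ v := by
  have hv : toE v = ∑ i, v i • EuclideanSpace.single i 1 := by
    ext j
    rw [show ((∑ i, v i • EuclideanSpace.single i 1 : EuclideanSpace ℝ (Fin n)) j)
        = EuclideanSpace.proj j (∑ i, v i • EuclideanSpace.single i 1) from rfl, map_sum]
    simp [EuclideanSpace.single_apply]
  have hH : ∀ i j, hessianMatrix f a i j
      = fderiv ℝ (fderiv ℝ f) a (EuclideanSpace.single i 1) (EuclideanSpace.single j 1) := by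
    intro i j
    exact fderiv_apply_eq hf _ _
  conv_lhs => rw [hv]
  rw [map_sum]
  simp only [_root_.map_smul, ContinuousLinearMap.coe_sum', ContinuousLinearMap.coe_smul',
    Finset.sum_apply, Pi.smul_apply, map_sum, ContinuousLinearMap.map_smul, smul_eq_mul]
  simp only [dotProduct, Matrix.mulVec, hH]
  simp only [Finset.mul_sum, Finset.sum_mul]
  rw [Finset.sum_comm]
  exact Finset.sum_congr rfl fun i _ => Finset.sum_congr rfl fun j _ => by ring

lemma deriv2_nonneg_of_localmin {f f' : ℝ → ℝ} {a δ : ℝ} (hδ : 0 < δ)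
    (hdf : ∀ s : ℝ, |s| < δ → HasDerivAt f (f' s) s)
    (hmin : ∀ s : ℝ, |s| < δ → f 0 ≤ f s)
    (hdf' : HasDerivAt f' a 0) : 0 ≤ a := by
  by_contra hlt
  push_neg at hlt
  have hmin0 : IsLocalMin f 0 := by
    rw [IsLocalMin, IsMinFilter, Metric.eventually_nhds_iff]
    exact ⟨δ, hδ, fun {y} hy => hmin y (by simpa [Real.dist_eq] using hy)⟩
  have h0 : f' 0 = 0 := hmin0.hasDerivAt_eq_zero (hdf 0 (by simpa using hδ))
  have hs := hasDerivAt_iff_tendsto_slope.mp hdf'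
  have hev : ∀ᶠ s in 𝓝[≠] (0:ℝ), slope f' 0 s < 0 := hs.eventually_lt_const hlt
  rw [eventually_nhdsWithin_iff, Metric.eventually_nhds_iff] at hev
  obtain ⟨δ₁, hδ₁, hsl⟩ := hev
  set s₀ := min δ δ₁ / 2 with hs₀def
  have hs₀ : 0 < s₀ := by positivity
  have hs₀δ : s₀ < δ := by
    have : min δ δ₁ ≤ δ := min_le_left _ _
    simp only [hs₀def]; linarith
  have hs₀δ₁ : s₀ < δ₁ := by
    have : min δ δ₁ ≤ δ₁ := min_le_right _ _
    simp only [hs₀def]; linarith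
  have hneg : ∀ y ∈ Set.Ioo (0:ℝ) s₀, f' y < 0 := by
    intro y hy
    have h1 : slope f' 0 y < 0 := by
      apply hsl (by rw [Real.dist_eq, sub_zero, abs_of_pos hy.1]; linarith [hy.2])
      simpa using ne_of_gt hy.1
    rw [slope_def_field, h0, sub_zero, sub_zero, div_neg_iff] at h1
    rcases h1 with ⟨h2, h3⟩ | ⟨h2, h3⟩
    · linarith [hy.1]
    · exact h2
  have hanti : StrictAntiOn f (Set.Icc 0 s₀) := by
    apply strictAntiOn_of_deriv_neg (convex_Icc 0 s₀)
    · intro y hy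
      have : |y| < δ := by
        rw [abs_of_nonneg hy.1]; linarith [hy.2]
      exact (hdf y this).continuousAt.continuousWithinAt
    · intro y hy
      rw [interior_Icc] at hy
      have : |y| < δ := by rw [abs_of_pos hy.1]; linarith [hy.2]
      rw [(hdf y this).deriv]
      exact hneg y hy
  have h4 : f s₀ < f 0 := hanti (Set.left_mem_Icc.mpr hs₀.le) (Set.right_mem_Icc.mpr hs₀.le) hs₀
  have h5 : f 0 ≤ f s₀ := hmin s₀ (by rw [abs_of_pos hs₀]; exact hs₀δ)
  linarith

lemma bddBelow_of_blowup {Ω : Set (EuclideanSpace ℝ (Fin n))}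
    (hΩo : IsOpen Ω) (hΩb : Bornology.IsBounded Ω) {w : EuclideanSpace ℝ (Fin n) → ℝ}
    (hwc : ContinuousOn w Ω)
    (hblow : ∀ M : ℝ, ∃ δ > 0, ∀ x ∈ Ω, Metric.infDist x (frontier Ω) < δ → M ≤ w x) :
    ∃ c : ℝ, ∀ y ∈ Ω, c ≤ w y := by
  obtain ⟨δ, hδ, H0⟩ := hblow 0
  set K := closure Ω ∩ {y | δ ≤ infDist y (frontier Ω)} with hK
  have hKc : IsClosed K := isClosed_closure.inter
    (isClosed_le continuous_const (continuous_infDist_pt _))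
  have hKb : Bornology.IsBounded K := hΩb.closure.subset Set.inter_subset_left
  have hKcpt : IsCompact K := isCompact_of_isClosed_isBounded hKc hKb
  have hKΩ : K ⊆ Ω := by
    rintro y ⟨hy1, hy2⟩
    by_contra hyΩ
    have hfr : y ∈ frontier Ω := by rw [hΩo.frontier_eq]; exact ⟨hy1, hyΩ⟩
    have : infDist y (frontier Ω) = 0 := infDist_zero_of_mem hfr
    simp only [Set.mem_setOf_eq, this] at hy2
    linarith
  by_cases hKne : K.Nonempty
  · obtain ⟨z, hz, hzmin⟩ := hKcpt.exists_isMinOn hKne (hwc.mono hKΩ)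
    refine ⟨min 0 (w z), fun y hy => ?_⟩
    by_cases hdist : infDist y (frontier Ω) < δ
    · exact le_trans (min_le_left _ _) (H0 y hy hdist)
    · exact le_trans (min_le_right _ _) (hzmin ⟨subset_closure hy, le_of_not_gt hdist⟩)
  · refine ⟨0, fun y hy => ?_⟩
    apply H0 y hy
    by_contra hge
    push_neg at hge
    exact hKne ⟨y, subset_closure hy, hge⟩

end Aux

/-- **Inequality (2.3) of Alvarez–Lasry–Lions.** In the setting of Lemma 2.3, with
`(p, A) ∈ J^{2,-}w**(x)` and `Aᵢ := ∇²w(xᵢ)`: one has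
`⟨A h, h⟩ ≤ Σ tᵢ ⟨Aᵢ hᵢ, hᵢ⟩` whenever `h = Σ tᵢ hᵢ`. -/
theorem subjet_quadratic_form_inequality {n : ℕ}
    (Ω : Set (EuclideanSpace ℝ (Fin n))) (w : EuclideanSpace ℝ (Fin n) → ℝ)
    (hΩo : IsOpen Ω) (hΩb : Bornology.IsBounded Ω) (hΩc : Convex ℝ Ω) (hΩne : Ω.Nonempty)
    (hw : ContDiffOn ℝ 2 w Ω)
    (hblow : ∀ M : ℝ, ∃ δ > 0, ∀ x ∈ Ω, Metric.infDist x (frontier Ω) < δ → M ≤ w x)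
    (x : EuclideanSpace ℝ (Fin n)) (hx : x ∈ Ω)
    (m : ℕ) (hm1 : 1 ≤ m) (hm : m ≤ n + 1)
    (t : Fin m → ℝ) (q : Fin m → EuclideanSpace ℝ (Fin n))
    (ht : ∀ i, 0 < t i) (hq : ∀ i, q i ∈ Ω) (hts : ∑ i, t i = 1) (hqs : ∑ i, t i • q i = x)
    (hopt : convEnv Ω w x = ∑ i, t i * w (q i))
    (p : EuclideanSpace ℝ (Fin n)) (A : Matrix (Fin n) (Fin n) ℝ)
    (hpA : InSubjet Ω (convEnv Ω w) x p A) :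
    ∀ (h : Fin n → ℝ) (hs : Fin m → Fin n → ℝ), (∑ i, t i • hs i) = h →
      A.mulVec h ⬝ᵥ h ≤ ∑ i, t i * ((hessianMatrix w (q i)).mulVec (hs i) ⬝ᵥ hs i) := by
  intro h hs hsum
  obtain ⟨φ, hφ, ⟨ε, hε, hmin⟩, hp, hA⟩ := hpA
  have hwq : ∀ i, ContDiffAt ℝ 2 w (q i) := fun i => hw.contDiffAt (hΩo.mem_nhds (hq i))
  have hφ2 : ContDiffAt ℝ 2 φ x := hφ.contDiffAt.of_le (by exact WithTop.coe_le_coe.mpr (le_top : (2 : ℕ∞) ≤ ⊤))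
  obtain ⟨c, hc⟩ := bddBelow_of_blowup hΩo hΩb hw.continuousOn hblow
  -- key: convEnv at any point is ≤ any admissible combination
  have key : ∀ (y : EuclideanSpace ℝ (Fin n)) (t' : Fin m → ℝ)
      (q' : Fin m → EuclideanSpace ℝ (Fin n)),
      (∀ i, 0 ≤ t' i) → (∀ i, q' i ∈ Ω) → ∑ i, t' i = 1 → ∑ i, t' i • q' i = y →
      convEnv Ω w y ≤ ∑ i, t' i * w (q' i) := by
    intro y t' q' h1 h2 h3 h4
    apply csInf_le
    · refine ⟨c, ?_⟩
      rintro r ⟨m', t'', q'', h1', h2', h3', h4', rfl⟩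
      calc c = (∑ i, t'' i) * c := by rw [h3', one_mul]
        _ = ∑ i, t'' i * c := by rw [Finset.sum_mul]
        _ ≤ ∑ i, t'' i * w (q'' i) :=
          Finset.sum_le_sum fun i _ => mul_le_mul_of_nonneg_left (hc _ (h2' i)) (h1' i)
    · exact ⟨m, t', q', h1, h2, h3, h4, rfl⟩
  -- componentwise sum identity in EuclideanSpace
  have hsumE : (∑ i, t i • toE (hs i)) = toE h := by
    ext j
    rw [show ((∑ i, t i • toE (hs i)) j)
        = EuclideanSpace.proj j (∑ i, t i • toE (hs i)) from rfl, map_sum]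
    have hcf := congrFun hsum j
    simp only [Finset.sum_apply, Pi.smul_apply, smul_eq_mul] at hcf
    simpa using hcf
  -- eventual membership
  have hev : ∀ᶠ s : ℝ in 𝓝 0,
      (∀ i, q i + s • toE (hs i) ∈ Ω) ∧
      (x + s • toE h ∈ Ω) ∧
      ‖(x + s • toE h) - x‖ < ε := by
    refine Filter.Eventually.and ?_ (Filter.Eventually.and ?_ ?_)
    · rw [eventually_all]
      intro i
      have hcont : Continuous fun s : ℝ => q i + s • toE (hs i) :=
        continuous_const.add (continuous_id.smul continuous_const)
      exact hcont.continuousAt.eventually_mem (hΩo.mem_nhds (by simpa using hq i))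
    · have hcont : Continuous fun s : ℝ => x + s • toE h :=
        continuous_const.add (continuous_id.smul continuous_const)
      exact hcont.continuousAt.eventually_mem (hΩo.mem_nhds (by simpa using hx))
    · have hcont : Continuous fun s : ℝ => ‖(x + s • toE h) - x‖ :=
        ((continuous_const.add (continuous_id.smul continuous_const)).sub continuous_const).norm
      have h0 : ‖(x + (0:ℝ) • toE h) - x‖ < ε := by
        simp only [zero_smul, add_zero, sub_self, norm_zero]
        exact hε
      have := hcont.continuousAt.eventually_mem (Iio_mem_nhds h0)
      exact this.mono fun s hs => hs
  rw [Metric.eventually_nhds_iff] at hev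
  obtain ⟨δ₀, hδ₀, hP⟩ := hev
  -- the one-dimensional functions
  set F : ℝ → ℝ := fun s => (∑ i, t i * w (q i + s • toE (hs i)))
      - φ (x + s • toE h) with hF
  set F' : ℝ → ℝ := fun s =>
      (∑ i, t i * fderiv ℝ w (q i + s • toE (hs i)) (toE (hs i)))
      - fderiv ℝ φ (x + s • toE h) (toE h) with hF'
  have hmin' : ∀ s : ℝ, |s| < δ₀ → F 0 ≤ F s := by
    intro s hsδ
    obtain ⟨h1, h2, h3⟩ := hP (by simpa [Real.dist_eq] using hsδ)
    have hsum' : ∑ i, t i • (q i + s • toE (hs i))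
        = x + s • toE h := by
      simp only [smul_add, Finset.sum_add_distrib, hqs]
      congr 1
      rw [← hsumE, Finset.smul_sum]
      exact Finset.sum_congr rfl fun i _ => (smul_comm s (t i) _).symm
    have hle := key _ t _ (fun i => (ht i).le) h1 hts hsum'
    have hchain := hmin _ h2 h3
    rw [hopt] at hchain
    simp only [hF]
    have e0 : ∀ i, q i + (0:ℝ) • toE (hs i) = q i := fun i => by simp
    have ex : x + (0:ℝ) • toE h = x := by simp
    rw [ex, Finset.sum_congr rfl fun i _ => by rw [e0 i]]
    linarith
  have hdF : ∀ s : ℝ, |s| < δ₀ → HasDerivAt F (F' s) s := by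
    intro s hsδ
    obtain ⟨h1, h2, _⟩ := hP (by simpa [Real.dist_eq] using hsδ)
    have hsd : HasDerivAt (fun s : ℝ => ∑ i, t i * w (q i + s • toE (hs i)))
        (∑ i, t i * fderiv ℝ w (q i + s • toE (hs i)) (toE (hs i))) s := by
      apply HasDerivAt.fun_sum
      intro i _
      exact (comp_line_hasDerivAt
        ((hw.contDiffAt (hΩo.mem_nhds (h1 i))).differentiableAt (by norm_num))).const_mul (t i)
    have hφd : HasDerivAt (fun s : ℝ => φ (x + s • toE h))
        (fderiv ℝ φ (x + s • toE h) (toE h)) s :=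
      comp_line_hasDerivAt ((hφ.differentiable (by simp)).differentiableAt)
    exact hsd.sub hφd
  have hdF' : HasDerivAt F'
      ((∑ i, t i * (fderiv ℝ (fderiv ℝ w) (q i) (toE (hs i)) (toE (hs i))))
        - fderiv ℝ (fderiv ℝ φ) x (toE h) (toE h)) 0 := by
    have h1 : HasDerivAt
        (fun s : ℝ => ∑ i, t i * fderiv ℝ w (q i + s • toE (hs i)) (toE (hs i)))
        (∑ i, t i * (fderiv ℝ (fderiv ℝ w) (q i) (toE (hs i)) (toE (hs i)))) 0 := by
      apply HasDerivAt.fun_sum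
      intro i _
      exact (second_deriv_line (hwq i) (toE (hs i))).const_mul (t i)
    exact h1.sub (second_deriv_line hφ2 (toE h))
  have final := deriv2_nonneg_of_localmin hδ₀ hdF hmin' hdF'
  have eφ : fderiv ℝ (fderiv ℝ φ) x (toE h) (toE h) = A.mulVec h ⬝ᵥ h := by
    rw [quad_eq_s8 hφ2 h, ← hA]
  have ew : ∀ i, fderiv ℝ (fderiv ℝ w) (q i) (toE (hs i)) (toE (hs i))
      = (hessianMatrix w (q i)).mulVec (hs i) ⬝ᵥ hs i := fun i => quad_eq_s8 (hwq i) (hs i)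
  rw [eφ] at final
  simp only [ew] at final
  linarith
end

section
/- Let A₁, …, A_m be symmetric positive definite n×n real matrices, let t₁, …, t_m > 0 with Σ_{i=1}^m t_i = 1, and let h ∈ ℝⁿ. Then ⟨(Σ_{i=1}^m t_i A_i^{−1})^{−1} h, h⟩ = min{ Σ_{i=1}^m t_i ⟨A_i h_i, h_i⟩ : h₁, …, h_m ∈ ℝⁿ, Σ_{i=1}^m t_i h_i = h }, and the minimum is attained at h_i = A_i^{−1}(Σ_{j=1}^m t_j A_j^{−1})^{−1} h for i = 1, …, m. -/
open Matrix

/-!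
For a positive definite `A`, completing the square gives the Fenchel–Young inequality
`2 ⟨g, x⟩ ≤ ⟨A x, x⟩ + ⟨A⁻¹ g, g⟩`, with equality at `x = A⁻¹ g`. Take `g = B h` with
`B = (Σ tᵢ Aᵢ⁻¹)⁻¹`, apply it to each `Aᵢ` and sum with weights `tᵢ`: under `Σ tᵢ hᵢ = h` the left
side becomes `2 ⟨B h, h⟩` and the dual terms add up to `⟨(Σ tᵢ Aᵢ⁻¹) B h, B h⟩ = ⟨h, B h⟩`.
-/

variable {n ι : Type*} [Fintype n]

theorem Matrix.IsHermitian.mulVec_dotProduct_comm {A : Matrix n n ℝ} (hA : A.IsHermitian)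
    (x y : n → ℝ) : A *ᵥ x ⬝ᵥ y = A *ᵥ y ⬝ᵥ x := by
  rw [dotProduct_comm, dotProduct_mulVec, ← mulVec_transpose,
    ← conjTranspose_eq_transpose_of_trivial, hA.eq]

variable [DecidableEq n]

theorem Matrix.PosDef.mulVec_inv_mulVec {A : Matrix n n ℝ} (hA : A.PosDef) (g : n → ℝ) :
    A *ᵥ (A⁻¹ *ᵥ g) = g := by
  rw [mulVec_mulVec, mul_nonsing_inv _ ((isUnit_iff_isUnit_det A).mp hA.isUnit), one_mulVec]

theorem Matrix.PosDef.two_mul_dotProduct_le {A : Matrix n n ℝ} (hA : A.PosDef) (g x : n → ℝ) :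
    2 * (g ⬝ᵥ x) ≤ A *ᵥ x ⬝ᵥ x + A⁻¹ *ᵥ g ⬝ᵥ g := by
  set z := A⁻¹ *ᵥ g
  have hz : A *ᵥ z = g := hA.mulVec_inv_mulVec g
  have hsq : 0 ≤ A *ᵥ (x - z) ⬝ᵥ (x - z) := by
    simpa [dotProduct_comm] using hA.posSemidef.dotProduct_mulVec_nonneg (x - z)
  have hsymm := hA.1.mulVec_dotProduct_comm x z
  rw [mulVec_sub, sub_dotProduct, dotProduct_sub, dotProduct_sub, hz] at hsq
  rw [hz] at hsymm
  linarith [dotProduct_comm g z]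

variable [Fintype ι] {A : ι → Matrix n n ℝ} {t : ι → ℝ}

theorem Matrix.two_mul_dotProduct_sum_smul_le (hA : ∀ i, (A i).PosDef) (ht : ∀ i, 0 ≤ t i)
    (g : n → ℝ) (x : ι → n → ℝ) :
    2 * (g ⬝ᵥ ∑ i, t i • x i) ≤
      ∑ i, t i * (A i *ᵥ x i ⬝ᵥ x i) + (∑ i, t i • (A i)⁻¹) *ᵥ g ⬝ᵥ g := by
  simp only [dotProduct_sum, sum_mulVec, sum_dotProduct, Finset.mul_sum, ← Finset.sum_add_distrib,
    dotProduct_smul, smul_mulVec, smul_dotProduct, smul_eq_mul]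
  refine Finset.sum_le_sum fun i _ => ?_
  nlinarith [mul_le_mul_of_nonneg_left ((hA i).two_mul_dotProduct_le g (x i)) (ht i)]

theorem Matrix.sum_mul_mulVec_dotProduct_inv_mulVec (hA : ∀ i, (A i).PosDef) (g : n → ℝ) :
    ∑ i, t i * (A i *ᵥ ((A i)⁻¹ *ᵥ g) ⬝ᵥ (A i)⁻¹ *ᵥ g) =
      (∑ i, t i • (A i)⁻¹) *ᵥ g ⬝ᵥ g := by
  simp only [(hA _).mulVec_inv_mulVec, sum_mulVec, sum_dotProduct, smul_mulVec, smul_dotProduct,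
    smul_eq_mul, dotProduct_comm g]

/-- **Harmonic-mean minimization of quadratic forms.** Let `A₁, …, A_m` be symmetric
positive definite `n×n` real matrices, `t₁, …, t_m > 0` with `Σ tᵢ = 1`, and `h ∈ ℝⁿ`.
Then `⟨(Σ tᵢ Aᵢ⁻¹)⁻¹ h, h⟩ = min { Σ tᵢ ⟨Aᵢ hᵢ, hᵢ⟩ : Σ tᵢ hᵢ = h }`, and the minimum is
attained at `hᵢ = Aᵢ⁻¹ (Σ tⱼ Aⱼ⁻¹)⁻¹ h`. -/
theorem harmonic_mean_quadratic_min {n m : ℕ}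
    (A : Fin m → Matrix (Fin n) (Fin n) ℝ) (hA : ∀ i, (A i).PosDef)
    (t : Fin m → ℝ) (ht : ∀ i, 0 < t i) (hts : ∑ i, t i = 1) (h : Fin n → ℝ) :
    let B : Matrix (Fin n) (Fin n) ℝ := (∑ i, t i • (A i)⁻¹)⁻¹
    let hstar : Fin m → Fin n → ℝ := fun i => (A i)⁻¹.mulVec (B.mulVec h)
    IsLeast
      {r : ℝ | ∃ hs : Fin m → Fin n → ℝ, (∑ i, t i • hs i) = h ∧
        r = ∑ i, t i * ((A i).mulVec (hs i) ⬝ᵥ hs i)}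
      (B.mulVec h ⬝ᵥ h) ∧
    (∑ i, t i • hstar i) = h ∧
    B.mulVec h ⬝ᵥ h = ∑ i, t i * ((A i).mulVec (hstar i) ⬝ᵥ hstar i) := by
  intro B hstar
  have hS : (∑ i, t i • (A i)⁻¹).PosDef :=
    posDef_sum (Finset.nonempty_of_sum_ne_zero (f := t) (by simp [hts]))
      fun i _ => (hA i).inv.smul (ht i)
  have hSB : (∑ i, t i • (A i)⁻¹) *ᵥ (B *ᵥ h) = h := hS.mulVec_inv_mulVec h
  have hsum : ∑ i, t i • hstar i = h := by
    simpa only [sum_mulVec, smul_mulVec] using hSB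
  have hval : B *ᵥ h ⬝ᵥ h = ∑ i, t i * (A i *ᵥ hstar i ⬝ᵥ hstar i) := by
    rw [sum_mul_mulVec_dotProduct_inv_mulVec hA, hSB, dotProduct_comm]
  refine ⟨⟨⟨hstar, hsum, hval⟩, ?_⟩, hsum, hval⟩
  rintro r ⟨hs, hhs, rfl⟩
  have hbound := two_mul_dotProduct_sum_smul_le hA (fun i => (ht i).le) (B *ᵥ h) hs
  rw [hhs, hSB, dotProduct_comm h] at hbound
  linarith
end

section
/- The map Q ↦ (Tr(Q^{−1}))^{−1} is concave on the cone of symmetric positive definite n×n real matrices; i.e., for all symmetric positive definite Q₀, Q₁ and all t ∈ [0,1], (Tr(((1−t)Q₀ + tQ₁)^{−1}))^{−1} ≥ (1−t)(Tr(Q₀^{−1}))^{−1} + t(Tr(Q₁^{−1}))^{−1}. -/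
open Matrix Set

/-!
By Cauchy–Schwarz, `(Tr Q⁻¹)⁻¹ ≤ Tr(M Q M)` for every symmetric `M` with `Tr M = 1`, with
equality at `M = Q⁻¹ / Tr Q⁻¹`. So `Q ↦ (Tr Q⁻¹)⁻¹` is a pointwise infimum of linear functions
of `Q`, hence concave: test the two endpoint inequalities against the optimal `M` of the
interpolated matrix.
-/

namespace Matrix

variable {ι : Type*}

theorem PosDef.one_sub_smul_add_smul {Q₀ Q₁ : Matrix ι ι ℝ} (h₀ : Q₀.PosDef)
    (h₁ : Q₁.PosDef) {t : ℝ} (ht : t ∈ Icc (0 : ℝ) 1) : ((1 - t) • Q₀ + t • Q₁).PosDef := by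
  rcases ht.2.lt_or_eq with ht1 | rfl
  · exact (h₀.smul (sub_pos.2 ht1)).add_posSemidef (h₁.posSemidef.smul ht.1)
  · simpa using h₁

variable [Fintype ι] [DecidableEq ι]

theorem trace_sub_smul_inv_mul_mul_sub_smul_inv {Q : Matrix ι ι ℝ} (hQ : IsUnit Q.det)
    (M : Matrix ι ι ℝ) (r : ℝ) :
    ((M - r • Q⁻¹) * Q * (M - r • Q⁻¹)).trace
      = (M * Q * M).trace - 2 * r * M.trace + r ^ 2 * Q⁻¹.trace := by
  simp only [sub_mul, mul_sub, smul_mul_assoc, mul_smul_comm, nonsing_inv_mul _ hQ, mul_assoc,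
    mul_nonsing_inv _ hQ, mul_one, one_mul, trace_sub, trace_smul, smul_eq_mul]
  ring

theorem trace_smul_inv_mul_mul_smul_inv {Q : Matrix ι ι ℝ} (hQ : IsUnit Q.det) (a : ℝ) :
    (a • Q⁻¹ * Q * (a • Q⁻¹)).trace = a ^ 2 * Q⁻¹.trace := by
  simp only [smul_mul_assoc, mul_smul_comm, nonsing_inv_mul _ hQ, one_mul, trace_smul,
    smul_eq_mul, smul_smul]
  ring

namespace PosDef

/-- Cauchy–Schwarz for the inner product `⟨A, B⟩ = Tr(A Q B)`, applied to `M` and `Q⁻¹`. -/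
theorem sq_trace_le_trace_mul_mul_mul_trace_inv {Q M : Matrix ι ι ℝ} (hQ : Q.PosDef)
    (hM : M.IsHermitian) : M.trace ^ 2 ≤ (M * Q * M).trace * Q⁻¹.trace := by
  have hdisc := discrim_le_zero (a := Q⁻¹.trace) (b := -2 * M.trace) (c := (M * Q * M).trace)
    fun r => by
      have hN : (M - r • Q⁻¹).IsHermitian :=
        hM.sub (hQ.inv.isHermitian.smul (IsSelfAdjoint.all r))
      have := (hQ.posSemidef.conjTranspose_mul_mul_same (M - r • Q⁻¹)).trace_nonneg
      rw [hN.eq, trace_sub_smul_inv_mul_mul_sub_smul_inv hQ.det_pos.ne'.isUnit] at this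
      linarith
  rw [discrim] at hdisc
  linarith

theorem inv_trace_inv_le_trace_mul_mul {Q M : Matrix ι ι ℝ} (hQ : Q.PosDef)
    (hM : M.IsHermitian) (hM₁ : M.trace = 1) : (Q⁻¹.trace)⁻¹ ≤ (M * Q * M).trace := by
  have hcs := sq_trace_le_trace_mul_mul_mul_trace_inv hQ hM
  rw [hM₁, one_pow] at hcs
  have hpos : 0 < Q⁻¹.trace := by
    rcases hQ.inv.posSemidef.trace_nonneg.lt_or_eq with h | h
    · exact h
    · rw [← h, mul_zero] at hcs
      exact absurd hcs (by norm_num)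
  exact (inv_le_iff_one_le_mul₀ hpos).2 hcs

end PosDef

end Matrix

/-- **Concavity of `Q ↦ (Tr(Q⁻¹))⁻¹` (Appendix of Alvarez–Lasry–Lions).**
For all symmetric positive definite `n×n` real matrices `Q₀, Q₁` and all `t ∈ [0,1]`,
`(Tr(((1-t)Q₀ + tQ₁)⁻¹))⁻¹ ≥ (1-t)(Tr(Q₀⁻¹))⁻¹ + t(Tr(Q₁⁻¹))⁻¹`. -/
theorem inv_trace_inv_concave {n : ℕ}
    (Q₀ Q₁ : Matrix (Fin n) (Fin n) ℝ) (h₀ : Q₀.PosDef) (h₁ : Q₁.PosDef)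
    (t : ℝ) (ht : t ∈ Set.Icc (0 : ℝ) 1) :
    (1 - t) * (Matrix.trace Q₀⁻¹)⁻¹ + t * (Matrix.trace Q₁⁻¹)⁻¹ ≤
      (Matrix.trace ((1 - t) • Q₀ + t • Q₁)⁻¹)⁻¹ := by
  cases isEmpty_or_nonempty (Fin n)
  · simp [Matrix.trace]
  set Q := (1 - t) • Q₀ + t • Q₁
  have hQ : Q.PosDef := h₀.one_sub_smul_add_smul h₁ ht
  set c := Q⁻¹.trace
  have hc : 0 < c := hQ.inv.trace_pos
  set M := c⁻¹ • Q⁻¹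
  have hM : M.IsHermitian := hQ.inv.isHermitian.smul (IsSelfAdjoint.all _)
  have hM₁ : M.trace = 1 := by
    simp only [M, trace_smul, smul_eq_mul]
    exact inv_mul_cancel₀ hc.ne'
  calc (1 - t) * (Q₀⁻¹.trace)⁻¹ + t * (Q₁⁻¹.trace)⁻¹
      ≤ (1 - t) * (M * Q₀ * M).trace + t * (M * Q₁ * M).trace :=
        add_le_add
          (mul_le_mul_of_nonneg_left (h₀.inv_trace_inv_le_trace_mul_mul hM hM₁)
            (sub_nonneg.2 ht.2))
          (mul_le_mul_of_nonneg_left (h₁.inv_trace_inv_le_trace_mul_mul hM hM₁) ht.1)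
    _ = (M * Q * M).trace := by
        simp only [Q, mul_add, add_mul, mul_smul_comm, smul_mul_assoc, trace_add, trace_smul,
          smul_eq_mul]
    _ = c⁻¹ ^ 2 * c := trace_smul_inv_mul_mul_smul_inv hQ.det_pos.ne'.isUnit c⁻¹
    _ = c⁻¹ := by field_simp
end

section
/- Let Ω be an open bounded convex subset of ℝⁿ with diameter D_Ω, and let u be its first Dirichlet Laplacian eigenfunction normalized so that max_{cl Ω} u = 1. Let κ ∈ (0,1), set w_κ := (−log(κu))^{1/2}, and suppose that at some x ∈ Ω one has w_κ**(x) < w_κ(x). Let x₁, …, x_m ∈ Ω with m ≥ 2 be points at which the infimum defining w_κ**(x) is attained (with positive weights t_i summing to 1 and Σ t_i x_i = x), and suppose ∇w_κ(x₁) = ⋯ = ∇w_κ(x_m) =: p_κ, and that w_κ** is affine on each segment [x_i, x_j]. Then |p_κ|² ≥ π²/(2 D_Ω²). -/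
open Real Set Metric Filter Matrix
open Topology

lemma aux_deriv_nonneg_of_min0 {F : ℝ → ℝ} {c : ℝ} (hF : HasDerivAt F c 0)
    (h0 : F 0 = 0) (hpos : ∀ s ∈ Set.Icc (0:ℝ) 1, 0 ≤ F s) : 0 ≤ c := by
  have ht : Filter.Tendsto (slope F 0) (𝓝[>] 0) (𝓝 c) :=
    (hasDerivAt_iff_tendsto_slope.1 hF).mono_left
      (nhdsWithin_mono _ (fun x hx => ne_of_gt hx))
  refine ge_of_tendsto ht ?_
  filter_upwards [Ioo_mem_nhdsGT_of_mem (by constructor <;> norm_num : (0:ℝ) ∈ Set.Ico 0 1)]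
    with s hs
  have h1 : 0 ≤ F s := hpos s ⟨le_of_lt hs.1, le_of_lt hs.2⟩
  have : slope F 0 s = F s / s := by simp [slope_def_field, h0]
  rw [this]
  exact div_nonneg h1 (le_of_lt hs.1)

lemma aux_deriv_nonpos_of_min1 {F : ℝ → ℝ} {c : ℝ} (hF : HasDerivAt F c 1)
    (h1 : F 1 = 0) (hpos : ∀ s ∈ Set.Icc (0:ℝ) 1, 0 ≤ F s) : c ≤ 0 := by
  have ht : Filter.Tendsto (slope F 1) (𝓝[<] 1) (𝓝 c) :=
    (hasDerivAt_iff_tendsto_slope.1 hF).mono_left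
      (nhdsWithin_mono _ (fun x hx => ne_of_lt hx))
  refine le_of_tendsto ht ?_
  filter_upwards [Ioo_mem_nhdsLT_of_mem (by constructor <;> norm_num : (1:ℝ) ∈ Set.Ioc 0 1)]
    with s hs
  have h0 : 0 ≤ F s := hpos s ⟨le_of_lt hs.1, le_of_lt hs.2⟩
  have : slope F 1 s = F s / (s - 1) := by simp [slope_def_field, h1]
  rw [this]
  exact div_nonpos_of_nonneg_of_nonpos h0 (by linarith [hs.2])

section AuxConvEnv
variable {n : ℕ} {Ω : Set (EuclideanSpace ℝ (Fin n))} {w : EuclideanSpace ℝ (Fin n) → ℝ}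

lemma convEnv_set_bddBelow (hw : ∀ z, 0 ≤ w z) (x : EuclideanSpace ℝ (Fin n)) :
    BddBelow {r : ℝ | ∃ (m : ℕ) (t : Fin m → ℝ) (q : Fin m → EuclideanSpace ℝ (Fin n)),
    (∀ i, 0 ≤ t i) ∧ (∀ i, q i ∈ Ω) ∧ ∑ i, t i = 1 ∧ ∑ i, t i • q i = x ∧
    r = ∑ i, t i * w (q i)} := by
  refine ⟨0, fun r hr => ?_⟩
  obtain ⟨m, t, q, ht, hq, hts, hqs, hr⟩ := hr
  subst hr
  exact Finset.sum_nonneg fun i _ => mul_nonneg (ht i) (hw _)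

lemma convEnv_le (hw : ∀ z, 0 ≤ w z) {z : EuclideanSpace ℝ (Fin n)} (hz : z ∈ Ω) :
    convEnv Ω w z ≤ w z := by
  apply csInf_le (convEnv_set_bddBelow hw z)
  exact ⟨1, fun _ => 1, fun _ => z, fun _ => zero_le_one, fun _ => hz, by simp, by simp, by simp⟩

lemma convEnv_eq_at_contact (hw : ∀ z, 0 ≤ w z)
    {x : EuclideanSpace ℝ (Fin n)} {m : ℕ} {t : Fin m → ℝ}
    {q : Fin m → EuclideanSpace ℝ (Fin n)}
    (ht : ∀ i, 0 < t i) (hq : ∀ i, q i ∈ Ω) (hts : ∑ i, t i = 1)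
    (hqs : ∑ i, t i • q i = x)
    (hopt : convEnv Ω w x = ∑ i, t i * w (q i)) (k : Fin m) :
    convEnv Ω w (q k) = w (q k) := by
  refine le_antisymm (convEnv_le hw (hq k)) ?_
  refine le_csInf ⟨w (q k), 1, fun _ => 1, fun _ => q k, fun _ => zero_le_one, fun _ => hq k,
    by simp, by simp, by simp⟩ ?_
  rintro r ⟨m', t', q', ht', hq', hts', hqs', rfl⟩
  set T : Fin (m + m') → ℝ := Fin.append (Function.update t k 0) (fun j => t k * t' j) with hT
  set Q : Fin (m + m') → EuclideanSpace ℝ (Fin n) := Fin.append q q' with hQ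
  have hsub : ({k} : Finset (Fin m)) ⊆ Finset.univ := Finset.singleton_subset_iff.2 (Finset.mem_univ k)
  have h1 : ∑ i, Function.update t k 0 i • q i = ∑ i ∈ Finset.univ \ {k}, t i • q i := by
    rw [← Finset.sum_sdiff hsub, Finset.sum_singleton, Function.update_self, zero_smul, add_zero]
    refine Finset.sum_congr rfl fun i hi => ?_
    rw [Function.update_of_ne (Finset.notMem_singleton.1 (Finset.mem_sdiff.1 hi).2)]
  have h1' : ∑ i, Function.update t k 0 i * w (q i) = ∑ i ∈ Finset.univ \ {k}, t i * w (q i) := by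
    rw [← Finset.sum_sdiff hsub, Finset.sum_singleton, Function.update_self, zero_mul, add_zero]
    refine Finset.sum_congr rfl fun i hi => ?_
    rw [Function.update_of_ne (Finset.notMem_singleton.1 (Finset.mem_sdiff.1 hi).2)]
  have h1'' : ∑ i, Function.update t k 0 i = ∑ i ∈ Finset.univ \ {k}, t i := by
    rw [← Finset.sum_sdiff hsub, Finset.sum_singleton, Function.update_self, add_zero]
    refine Finset.sum_congr rfl fun i hi => ?_
    rw [Function.update_of_ne (Finset.notMem_singleton.1 (Finset.mem_sdiff.1 hi).2)]
  have hsd : ∀ f : Fin m → ℝ, ∑ i ∈ Finset.univ \ {k}, f i = (∑ i, f i) - f k := by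
    intro f
    rw [Finset.sum_sdiff_eq_sub hsub, Finset.sum_singleton]
  have hsdE : ∑ i ∈ Finset.univ \ {k}, t i • q i = (∑ i, t i • q i) - t k • q k := by
    rw [Finset.sum_sdiff_eq_sub hsub, Finset.sum_singleton]
  have key : convEnv Ω w x ≤ ∑ i, T i * w (Q i) := by
    apply csInf_le (convEnv_set_bddBelow hw x)
    refine ⟨m + m', T, Q, ?_, ?_, ?_, ?_, rfl⟩
    · intro i
      induction i using Fin.addCases with
      | left i =>
        rw [hT, Fin.append_left]
        rcases eq_or_ne i k with rfl | hik
        · simp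
        · rw [Function.update_of_ne hik]; exact (ht i).le
      | right j =>
        rw [hT, Fin.append_right]
        exact mul_nonneg (ht k).le (ht' j)
    · intro i
      induction i using Fin.addCases with
      | left i => rw [hQ, Fin.append_left]; exact hq i
      | right j => rw [hQ, Fin.append_right]; exact hq' j
    · rw [Fin.sum_univ_add]
      simp only [hT, Fin.append_left, Fin.append_right]
      rw [h1'', hsd, hts, ← Finset.mul_sum, hts']
      ring
    · rw [Fin.sum_univ_add]
      simp only [hT, hQ, Fin.append_left, Fin.append_right]
      rw [h1, hsdE, hqs]
      have : ∑ j, (t k * t' j) • q' j = t k • ∑ j, t' j • q' j := by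
        rw [Finset.smul_sum]
        refine Finset.sum_congr rfl fun j _ => ?_
        rw [smul_smul]
      rw [this, hqs']
      abel
  have hval : ∑ i, T i * w (Q i)
      = ((∑ i, t i * w (q i)) - t k * w (q k)) + t k * ∑ j, t' j * w (q' j) := by
    rw [Fin.sum_univ_add]
    simp only [hT, hQ, Fin.append_left, Fin.append_right]
    rw [h1', hsd, Finset.mul_sum]
    congr 1
    refine Finset.sum_congr rfl fun j _ => ?_
    ring
  rw [hopt, hval] at key
  have htk := ht k
  have : t k * w (q k) ≤ t k * ∑ j, t' j * w (q' j) := by linarith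
  exact le_of_mul_le_mul_left this htk

end AuxConvEnv

set_option maxHeartbeats 1000000 in
/-- **Proposition 3.1 (key gradient estimate).** Let `Ω ⊂ ℝⁿ` be open bounded convex, `u`
its first Dirichlet eigenfunction normalized by `max_{cl Ω} u = 1` (with the
Andrews–Clutterbuck inequality as hypothesis). Let `κ ∈ (0,1)`, `w_κ := (-log(κu))^{1/2}`,
and suppose `w_κ**(x) < w_κ(x)` at some `x ∈ Ω`. If `x₁, …, x_m ∈ Ω` (`m ≥ 2`) realize the
infimum defining `w_κ**(x)` with positive weights, `∇w_κ(xᵢ) = p_κ` for all `i`, and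
`w_κ**` is affine on each segment `[xᵢ, xⱼ]`, then `|p_κ|² ≥ π²/(2 D_Ω²)`. -/
theorem key_gradient_lower_bound {n : ℕ}
    (Ω : Set (EuclideanSpace ℝ (Fin n))) (u : EuclideanSpace ℝ (Fin n) → ℝ) (lam : ℝ)
    (hΩo : IsOpen Ω) (hΩb : Bornology.IsBounded Ω) (hΩc : Convex ℝ Ω) (hΩne : Ω.Nonempty)
    (hu2 : ContDiffOn ℝ 2 u Ω) (huc : ContinuousOn u (closure Ω))
    (hupos : ∀ x ∈ Ω, 0 < u x) (hubd : ∀ x ∈ frontier Ω, u x = 0)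
    (hlam : 0 < lam) (heig : ∀ x ∈ Ω, -lap u x = lam * u x)
    (humax : ∀ x ∈ closure Ω, u x ≤ 1) (huone : ∃ x ∈ closure Ω, u x = 1)
    (hAC : ∀ z ∈ Ω, ∀ y ∈ Ω, z ≠ y →
      (inner ℝ (gradient (fun p => -Real.log (u p)) z - gradient (fun p => -Real.log (u p)) y)
          (‖z - y‖⁻¹ • (z - y)) : ℝ) ≥
        (2 * Real.pi / Metric.diam Ω) *
          Real.tan (Real.pi * ‖z - y‖ / (2 * Metric.diam Ω)))
    (κ : ℝ) (hκ : κ ∈ Set.Ioo (0 : ℝ) 1)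
    (wκ : EuclideanSpace ℝ (Fin n) → ℝ)
    (hwκ : ∀ z, wκ z = Real.sqrt (-Real.log (κ * u z)))
    (x : EuclideanSpace ℝ (Fin n)) (hx : x ∈ Ω)
    (henv : convEnv Ω wκ x < wκ x)
    (m : ℕ) (hm : 2 ≤ m)
    (t : Fin m → ℝ) (q : Fin m → EuclideanSpace ℝ (Fin n))
    (ht : ∀ i, 0 < t i) (hq : ∀ i, q i ∈ Ω) (hts : ∑ i, t i = 1) (hqs : ∑ i, t i • q i = x)
    (hopt : convEnv Ω wκ x = ∑ i, t i * wκ (q i))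
    (p : EuclideanSpace ℝ (Fin n)) (hgrad : ∀ i, gradient wκ (q i) = p)
    (haff : ∀ i j, ∀ s ∈ Set.Icc (0 : ℝ) 1,
      convEnv Ω wκ ((1 - s) • q i + s • q j) =
        (1 - s) * convEnv Ω wκ (q i) + s * convEnv Ω wκ (q j)) :
    ‖p‖ ^ 2 ≥ Real.pi ^ 2 / (2 * (Metric.diam Ω) ^ 2) := by
  have hwnn : ∀ z, 0 ≤ wκ z := fun z => (hwκ z) ▸ Real.sqrt_nonneg _
  have hkey : ∀ z ∈ Ω, 0 < -Real.log (κ * u z) := by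
    intro z hz
    have h1 : 0 < u z := hupos z hz
    have h2 : u z ≤ 1 := humax z (subset_closure hz)
    have h3 : κ * u z < 1 := lt_of_le_of_lt (by nlinarith [hκ.1, hκ.2]) hκ.2
    have := Real.log_neg (mul_pos hκ.1 h1) h3
    linarith
  have hwsq : ∀ z ∈ Ω, wκ z ^ 2 = -Real.log (κ * u z) := fun z hz => by
    rw [hwκ z]; exact Real.sq_sqrt (hkey z hz).le
  have hwfun : wκ = fun y => Real.sqrt (-Real.log (κ * u y)) := funext hwκ
  -- differentiability of wκ on Ω
  have hwd : ∀ z ∈ Ω, DifferentiableAt ℝ wκ z := by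
    intro z hz
    rw [hwfun]
    have hu : DifferentiableAt ℝ u z :=
      (hu2.differentiableOn (by norm_num)).differentiableAt (hΩo.mem_nhds hz)
    have h1 : DifferentiableAt ℝ (fun y => κ * u y) z := hu.const_mul κ
    have h2 : DifferentiableAt ℝ (fun y => -Real.log (κ * u y)) z :=
      (h1.log (ne_of_gt (mul_pos hκ.1 (hupos z hz)))).neg
    exact h2.sqrt (ne_of_gt (hkey z hz))
  have hgw : ∀ k, HasGradientAt wκ p (q k) := by
    intro k
    have h := (hwd (q k) (hq k)).hasGradientAt
    rwa [hgrad k] at h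
  have hfw : ∀ k, HasFDerivAt wκ (InnerProductSpace.toDual ℝ (EuclideanSpace ℝ (Fin n)) p)
      (q k) := fun k => (hgw k).hasFDerivAt
  -- gradient of v = -log u at the contact points
  have hgv : ∀ k, gradient (fun y => -Real.log (u y)) (q k) = (2 * wκ (q k)) • p := by
    intro k
    have hpk := hfw k
    have hmul : HasFDerivAt (fun y => wκ y * wκ y + Real.log κ)
        (wκ (q k) • (InnerProductSpace.toDual ℝ (EuclideanSpace ℝ (Fin n)) p)
          + wκ (q k) • (InnerProductSpace.toDual ℝ (EuclideanSpace ℝ (Fin n)) p)) (q k) :=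
      (hpk.mul hpk).add_const _
    have heq : (fun y => -Real.log (u y)) =ᶠ[nhds (q k)] fun y => wκ y * wκ y + Real.log κ := by
      filter_upwards [hΩo.mem_nhds (hq k)] with z hz
      have h1 := hwsq z hz
      have h2 : Real.log (κ * u z) = Real.log κ + Real.log (u z) :=
        Real.log_mul (ne_of_gt hκ.1) (ne_of_gt (hupos z hz))
      show -Real.log (u z) = wκ z * wκ z + Real.log κ
      rw [← sq, h1, h2]; ring
    have hv := hmul.congr_of_eventuallyEq heq
    rw [(hasFDerivAt_iff_hasGradientAt.1 hv).gradient]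
    simp only [map_add, _root_.map_smul, LinearIsometryEquiv.symm_apply_apply]
    module
  -- there exist two distinct contact points
  have hij : ∃ i j : Fin m, q i ≠ q j := by
    by_contra h
    push_neg at h
    have i0 : Fin m := ⟨0, by omega⟩
    have hx0 : x = q i0 := by
      rw [← hqs]
      calc ∑ i, t i • q i = ∑ i, t i • q i0 :=
            Finset.sum_congr rfl fun i _ => by rw [h i i0]
        _ = (∑ i, t i) • q i0 := (Finset.sum_smul).symm
        _ = q i0 := by rw [hts, one_smul]
    have hce : convEnv Ω wκ x = wκ x := by
      rw [hopt, hx0]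
      calc ∑ i, t i * wκ (q i) = ∑ i, t i * wκ (q i0) :=
            Finset.sum_congr rfl fun i _ => by rw [h i i0]
        _ = (∑ i, t i) * wκ (q i0) := (Finset.sum_mul _ _ _).symm
        _ = wκ (q i0) := by rw [hts, one_mul]
    linarith
  have hcontact : ∀ k, convEnv Ω wκ (q k) = wκ (q k) :=
    convEnv_eq_at_contact hwnn ht hq hts hqs hopt
  -- linearity of wκ along segments between contact points
  have hlin : ∀ i j : Fin m, wκ (q j) - wκ (q i) = (inner ℝ p (q j - q i) : ℝ) := by
    intro i j
    set γ : ℝ → EuclideanSpace ℝ (Fin n) := fun s => q i + s • (q j - q i) with hγ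
    have hγc : ∀ s : ℝ, (1 - s) • q i + s • q j = γ s := by intro s; simp only [hγ]; module
    have hγmem : ∀ s ∈ Set.Icc (0:ℝ) 1, γ s ∈ Ω := by
      intro s hs
      rw [← hγc s]
      exact hΩc (hq i) (hq j) (by linarith [hs.2]) hs.1 (by ring)
    have hγ0 : γ 0 = q i := by simp [hγ]
    have hγ1 : γ 1 = q j := by simp only [hγ, one_smul]; abel
    set F : ℝ → ℝ := fun s => wκ (γ s) - ((1 - s) * wκ (q i) + s * wκ (q j)) with hF
    have hFpos : ∀ s ∈ Set.Icc (0:ℝ) 1, 0 ≤ F s := by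
      intro s hs
      have h1 : convEnv Ω wκ (γ s) ≤ wκ (γ s) := convEnv_le hwnn (hγmem s hs)
      have h2 := haff i j s hs
      rw [hγc s, hcontact i, hcontact j] at h2
      simp only [hF]
      linarith [h2 ▸ h1]
    have hder : ∀ s : ℝ, HasDerivAt γ (q j - q i) s := by
      intro s
      have h1 : HasDerivAt (fun s : ℝ => s • (q j - q i)) ((1:ℝ) • (q j - q i)) s :=
        (hasDerivAt_id s).smul_const _
      have h2 := h1.const_add (q i); rw [one_smul] at h2; exact h2
    have hFD : ∀ (s : ℝ) (k : Fin m), γ s = q k →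
        HasDerivAt F ((inner ℝ p (q j - q i) : ℝ) - (wκ (q j) - wκ (q i))) s := by
      intro s k hk
      have hwk : HasFDerivAt wκ (InnerProductSpace.toDual ℝ (EuclideanSpace ℝ (Fin n)) p)
          (γ s) := by rw [hk]; exact hfw k
      have h1 := hwk.comp_hasDerivAt s (hder s)
      have a1 : HasDerivAt (fun s : ℝ => (1 - s) * wκ (q i)) (-wκ (q i)) s := by
        simpa using ((hasDerivAt_id s).const_sub 1).mul_const (wκ (q i))
      have a2 : HasDerivAt (fun s : ℝ => s * wκ (q j)) (wκ (q j)) s := by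
        simpa using (hasDerivAt_id s).mul_const (wκ (q j))
      have h2 := h1.sub (a1.add a2)
      refine h2.congr_deriv ?_
      rw [InnerProductSpace.toDual_apply_apply]
      ring
    have hd0 := hFD 0 i hγ0
    have hd1 := hFD 1 j hγ1
    have hF0 : F 0 = 0 := by simp [hF, hγ0]
    have hF1 : F 1 = 0 := by simp [hF, hγ1]
    have hge := aux_deriv_nonneg_of_min0 hd0 hF0 hFpos
    have hle := aux_deriv_nonpos_of_min1 hd1 hF1 hFpos
    linarith
  -- pick the two distinct points
  obtain ⟨i0, j0, hij0⟩ := hij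
  set D := Metric.diam Ω with hD_def
  set d := ‖q i0 - q j0‖ with hd_def
  have hd : 0 < d := by
    rw [hd_def, norm_pos_iff]
    exact sub_ne_zero.2 hij0
  -- d < D strictly
  obtain ⟨r, hr0, hrball⟩ := Metric.isOpen_iff.1 hΩo (q i0) (hq i0)
  set e := q i0 - q j0 with he_def
  set zpt := q i0 + ((r/2) * d⁻¹) • e with hz_def
  have hpos2 : 0 < r / 2 * d⁻¹ := mul_pos (by linarith) (inv_pos.2 hd)
  have hdne : d ≠ 0 := ne_of_gt hd
  have hz1 : zpt ∈ Metric.ball (q i0) r := by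
    rw [Metric.mem_ball, dist_eq_norm]
    have h1 : zpt - q i0 = ((r/2) * d⁻¹) • e := by rw [hz_def]; abel
    rw [h1, norm_smul, Real.norm_eq_abs, abs_of_pos hpos2, ← hd_def]
    rw [mul_assoc, inv_mul_cancel₀ hdne, mul_one]
    linarith
  have hz2 : dist zpt (q j0) = d + r/2 := by
    rw [dist_eq_norm]
    have h1 : zpt - q j0 = (1 + (r/2) * d⁻¹) • e := by
      rw [hz_def, he_def]; module
    rw [h1, norm_smul, Real.norm_eq_abs, abs_of_pos (by linarith), ← hd_def]
    field_simp
  have hdD : d < D := by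
    have h1 : dist zpt (q j0) ≤ D := Metric.dist_le_diam_of_mem hΩb (hrball hz1) (hq j0)
    rw [hz2] at h1
    linarith
  have hD : 0 < D := lt_trans hd hdD
  -- tangent inequality
  set θ := Real.pi * d / (2 * D) with hθ_def
  have hπ := Real.pi_pos
  have hθ0 : 0 < θ := by
    rw [hθ_def]; exact div_pos (mul_pos hπ hd) (by linarith)
  have hθ2 : θ < Real.pi / 2 := by
    rw [hθ_def, div_lt_div_iff₀ (by positivity) two_pos]
    nlinarith
  have htan : θ ≤ Real.tan θ := (Real.lt_tan hθ0 hθ2).le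
  -- Andrews–Clutterbuck at the two points
  have hACij := hAC (q i0) (hq i0) (q j0) (hq j0) hij0
  rw [hgv i0, hgv j0, ← hd_def, ← hθ_def] at hACij
  set c : ℝ := (inner ℝ p (q i0 - q j0) : ℝ) with hc_def
  have hwc : wκ (q i0) - wκ (q j0) = c := hlin j0 i0
  have hlhs : (inner ℝ ((2 * wκ (q i0)) • p - (2 * wκ (q j0)) • p) (d⁻¹ • (q i0 - q j0)) : ℝ)
      = 2 * c * (d⁻¹ * c) := by
    rw [← sub_smul, real_inner_smul_left, real_inner_smul_right, ← hc_def]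
    have : 2 * wκ (q i0) - 2 * wκ (q j0) = 2 * c := by linarith
    rw [this]
  rw [hlhs] at hACij
  -- Cauchy–Schwarz
  have hcs : c ^ 2 ≤ ‖p‖ ^ 2 * d ^ 2 := by
    have h1 : |c| ≤ ‖p‖ * ‖q i0 - q j0‖ := abs_real_inner_le_norm p (q i0 - q j0)
    rw [← hd_def] at h1
    nlinarith [h1, abs_nonneg c, sq_abs c, norm_nonneg p, hd]
  clear hz_def hz1 hz2 hrball
  clear zpt
  clear hpos2 hlhs hwc hc_def hd_def he_def
  clear e
  clear_value c θ d D
  -- assemble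
  have hDne : D ≠ 0 := ne_of_gt hD
  have h1 : (2 * Real.pi / D) * θ ≤ (2 * Real.pi / D) * Real.tan θ :=
    mul_le_mul_of_nonneg_left htan (le_of_lt (div_pos (by linarith) hD))
  have h2 : (2 * Real.pi / D) * θ = Real.pi ^ 2 * d / D ^ 2 := by
    rw [hθ_def]; field_simp
  have h3 : 2 * c * (d⁻¹ * c) ≤ 2 * d * ‖p‖ ^ 2 := by
    have e1 : 2 * c * (d⁻¹ * c) = 2 * d⁻¹ * c ^ 2 := by ring
    have e2 : 2 * d⁻¹ * c ^ 2 ≤ 2 * d⁻¹ * (‖p‖ ^ 2 * d ^ 2) :=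
      mul_le_mul_of_nonneg_left hcs (mul_nonneg (by norm_num) (inv_nonneg.2 hd.le))
    have e3 : 2 * d⁻¹ * (‖p‖ ^ 2 * d ^ 2) = 2 * d * ‖p‖ ^ 2 := by
      field_simp
    rw [e1]; rw [e3] at e2; exact e2
  have h4 : Real.pi ^ 2 * d / D ^ 2 ≤ 2 * d * ‖p‖ ^ 2 := by
    calc Real.pi ^ 2 * d / D ^ 2 = (2 * Real.pi / D) * θ := h2.symm
      _ ≤ (2 * Real.pi / D) * Real.tan θ := h1
      _ ≤ 2 * c * (d⁻¹ * c) := hACij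
      _ ≤ 2 * d * ‖p‖ ^ 2 := h3
  have h5 : Real.pi ^ 2 * d ≤ 2 * d * ‖p‖ ^ 2 * D ^ 2 := by
    rw [div_le_iff₀ (by positivity)] at h4
    linarith
  rw [ge_iff_le, div_le_iff₀ (by positivity)]
  nlinarith [h5, hd]
end

section
/- Let Ω be a convex subset of ℝⁿ and let u : Ω → [0,1] be a bounded nonnegative function. Let 0 < α ≤ β ≤ 1. If u is α-logconcave in Ω, then u is β-logconcave in Ω; that is, if there exists κ₀ > 0 such that for every κ ∈ (0, κ₀] and all x, y ∈ Ω, t ∈ [0,1] one has L_α(κu((1−t)x + ty)) ≥ (1−t)L_α(κu(x)) + tL_α(κu(y)), then the same holds with L_α replaced by L_β (for every sufficiently small κ > 0). -/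
open Real Set

/-- `L_α(s) := -(-log s)^α` for `s > 0`, with the convention `L_α(0) = -∞`
(values in the extended reals). -/
noncomputable def powLogConc (α : ℝ) (s : ℝ) : EReal :=
  if s ≤ 0 then ⊥ else ((-(-Real.log s) ^ α : ℝ) : EReal)

/-- **Monotonicity of α-logconcavity (Ishige–Salani–Takatsu).** Let `Ω ⊂ ℝⁿ` be convex and
`u : Ω → [0,1]` bounded nonnegative. If `0 < α ≤ β ≤ 1` and `u` is `α`-logconcave in `Ω`
(i.e. there is `κ₀ > 0` such that for every `κ ∈ (0, κ₀]` the function `L_α(κu)` is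
concave along segments of `Ω`), then `u` is `β`-logconcave in `Ω`. -/
theorem alpha_logconcave_mono {n : ℕ}
    (Ω : Set (EuclideanSpace ℝ (Fin n))) (hΩc : Convex ℝ Ω)
    (u : EuclideanSpace ℝ (Fin n) → ℝ) (hu : ∀ x ∈ Ω, u x ∈ Set.Icc (0 : ℝ) 1)
    (α β : ℝ) (hα : 0 < α) (hαβ : α ≤ β) (hβ : β ≤ 1)
    (hconc : ∃ κ₀ > 0, ∀ κ ∈ Set.Ioc (0 : ℝ) κ₀, ∀ x ∈ Ω, ∀ y ∈ Ω, ∀ t ∈ Set.Icc (0 : ℝ) 1,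
      ((1 - t : ℝ) : EReal) * powLogConc α (κ * u x) + ((t : ℝ) : EReal) * powLogConc α (κ * u y) ≤
        powLogConc α (κ * u ((1 - t) • x + t • y))) :
    ∃ κ₁ > 0, ∀ κ ∈ Set.Ioc (0 : ℝ) κ₁, ∀ x ∈ Ω, ∀ y ∈ Ω, ∀ t ∈ Set.Icc (0 : ℝ) 1,
      ((1 - t : ℝ) : EReal) * powLogConc β (κ * u x) + ((t : ℝ) : EReal) * powLogConc β (κ * u y) ≤
        powLogConc β (κ * u ((1 - t) • x + t • y)) := by
  obtain ⟨κ₀, hκ₀, H⟩ := hconc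
  refine ⟨min κ₀ 1, lt_min hκ₀ one_pos, ?_⟩
  rintro κ ⟨hκpos, hκle⟩ x hx y hy t ⟨ht0, ht1⟩
  have hκκ₀ : κ ≤ κ₀ := le_trans hκle (min_le_left _ _)
  have hκ1 : κ ≤ 1 := le_trans hκle (min_le_right _ _)
  have hz : (1 - t) • x + t • y ∈ Ω := hΩc hx hy (by linarith) ht0 (by ring)
  -- trivial endpoint cases
  rcases eq_or_lt_of_le ht0 with ht0' | ht0'
  · have : (1 - t) • x + t • y = x := by rw [← ht0']; simp
    rw [this, ← ht0']
    simp
  rcases eq_or_lt_of_le ht1 with ht1' | ht1'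
  · have : (1 - t) • x + t • y = y := by rw [ht1']; simp
    rw [this, ht1']
    simp
  -- degenerate cases: u x = 0 or u y = 0
  by_cases hax : κ * u x ≤ 0
  · rw [powLogConc, if_pos hax]
    rw [EReal.mul_bot_of_pos (by exact_mod_cast sub_pos.2 ht1'), EReal.bot_add]
    exact bot_le
  by_cases hay : κ * u y ≤ 0
  · rw [powLogConc, powLogConc, if_pos hay]
    rw [if_neg hax, EReal.mul_bot_of_pos (by exact_mod_cast ht0')]
    rw [EReal.add_bot]
    exact bot_le
  push_neg at hax hay
  -- main case
  have hxle : κ * u x ≤ 1 := by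
    have := (hu x hx).2; nlinarith [(hu x hx).1]
  have hyle : κ * u y ≤ 1 := by
    have := (hu y hy).2; nlinarith [(hu y hy).1]
  have hzmem := hu _ hz
  have hzle : κ * u ((1 - t) • x + t • y) ≤ 1 := by nlinarith [hzmem.1, hzmem.2]
  have hkey := H κ ⟨hκpos, hκκ₀⟩ x hx y hy t ⟨ht0, ht1⟩
  rw [powLogConc, powLogConc, if_neg (not_le.2 hax), if_neg (not_le.2 hay)] at hkey ⊢
  -- the center value must be positive
  by_cases haz : κ * u ((1 - t) • x + t • y) ≤ 0
  · exfalso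
    rw [powLogConc, if_pos haz, ← EReal.coe_mul, ← EReal.coe_mul, ← EReal.coe_add,
      le_bot_iff] at hkey
    exact EReal.coe_ne_bot _ hkey
  push_neg at haz
  rw [powLogConc, if_neg (not_le.2 haz)] at hkey ⊢
  rw [← EReal.coe_mul, ← EReal.coe_mul, ← EReal.coe_add, EReal.coe_le_coe_iff] at hkey ⊢
  -- now a purely real inequality
  set a := κ * u x
  set b := κ * u y
  set c := κ * u ((1 - t) • x + t • y)
  have hla : 0 ≤ -Real.log a := by
    have := Real.log_nonpos (le_of_lt hax) hxle; linarith
  have hlb : 0 ≤ -Real.log b := by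
    have := Real.log_nonpos (le_of_lt hay) hyle; linarith
  have hlc : 0 ≤ -Real.log c := by
    have := Real.log_nonpos (le_of_lt haz) hzle; linarith
  set A := (-Real.log a) ^ α with hA
  set B := (-Real.log b) ^ α with hB
  have hA0 : 0 ≤ A := Real.rpow_nonneg hla α
  have hB0 : 0 ≤ B := Real.rpow_nonneg hlb α
  have hCle : (-Real.log c) ^ α ≤ (1 - t) * A + t * B := by linarith
  set γ := β / α with hγdef
  have hγ : 1 ≤ γ := (one_le_div hα).2 hαβ
  have hαγ : α * γ = β := by rw [hγdef]; field_simp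
  have hpow : ∀ s : ℝ, 0 ≤ s → (s ^ α) ^ γ = s ^ β := by
    intro s hs
    rw [← Real.rpow_mul hs, hαγ]
  have step1 : ((-Real.log c) ^ α) ^ γ ≤ ((1 - t) * A + t * B) ^ γ :=
    Real.rpow_le_rpow (Real.rpow_nonneg hlc α) hCle (by linarith)
  have step2 : ((1 - t) * A + t * B) ^ γ ≤ (1 - t) * A ^ γ + t * B ^ γ := by
    have hc := (convexOn_rpow hγ).2 (Set.mem_Ici.2 hA0) (Set.mem_Ici.2 hB0)
      (by linarith : (0:ℝ) ≤ 1 - t) ht0 (by ring)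
    simpa [smul_eq_mul] using hc
  have e1 : (-Real.log c) ^ β = ((-Real.log c) ^ α) ^ γ := (hpow _ hlc).symm
  have e2 : (-Real.log a) ^ β = A ^ γ := (hpow _ hla).symm
  have e3 : (-Real.log b) ^ β = B ^ γ := (hpow _ hlb).symm
  rw [e1, e2, e3]
  nlinarith [step1, step2]
end
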